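/- arXiv:1310.2017 — 7 statements merged into one kernel-verified Lean document; each statement's English description precedes it below -/
import Mathlib

section
/- For every even natural number n, there exists a bijection ψ : {0,1}^n → {x ∈ {0,1}^{n+1} : |x| > n/2} such that for all distinct x, y ∈ {0,1}^n, (1/5)·distance(x,y) ≤ distance(ψ(x), ψ(y)) ≤ 4·distance(x,y). -/
/-- Hamming weight of a binary string. -/
def hWt {n : ℕ} (x : Fin n → Bool) : ℕ := (Finset.univ.filter fun i => x i = true).card

namespace CB

/-- step value of a bit -/
def stp (x : ℕ → Bool) (p : ℕ) : ℤ := if x p then 1 else -1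

/-- prefix-sum walk -/
def wS (x : ℕ → Bool) : ℕ → ℤ
  | 0 => 0
  | t+1 => wS x t + stp x t

/-- running minimum of the walk -/
def pm (x : ℕ → Bool) : ℕ → ℤ
  | 0 => 0
  | t+1 => min (pm x t) (wS x (t+1))

lemma stp_true {x p} (h : x p = true) : stp x p = 1 := by simp [stp, h]
lemma stp_false {x p} (h : x p = false) : stp x p = -1 := by simp [stp, h]

lemma wS_succ (x t) : wS x (t+1) = wS x t + stp x t := rfl
lemma pm_succ (x t) : pm x (t+1) = min (pm x t) (wS x (t+1)) := rfl

lemma stp_abs (x p) : stp x p = 1 ∨ stp x p = -1 := by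
  by_cases h : x p <;> simp [stp, h]

lemma pm_le_self (x t) : pm x t ≤ wS x t := by
  cases t with
  | zero => simp [pm, wS]
  | succ t => simp [pm_succ]

lemma pm_antitone (x) {s t : ℕ} (h : s ≤ t) : pm x t ≤ pm x s := by
  induction t with
  | zero => simp_all
  | succ t ih =>
    rcases Nat.lt_or_ge s (t+1) with h'|h'
    · exact le_trans (by simp [pm_succ]) (ih (Nat.lt_succ_iff.mp h'))
    · have : s = t+1 := le_antisymm h h'
      simp [this]

lemma pm_le_wS (x) {s t : ℕ} (h : s ≤ t) : pm x t ≤ wS x s :=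
  le_trans (pm_antitone x h) (pm_le_self x s)

lemma pm_nonpos (x t) : pm x t ≤ 0 := by
  have := pm_antitone x (Nat.zero_le t); simpa [pm] using this

/-- the running min is attained -/
lemma pm_attained (x t) : ∃ s ≤ t, wS x s = pm x t := by
  induction t with
  | zero => exact ⟨0, le_refl _, rfl⟩
  | succ t ih =>
    rcases ih with ⟨s, hs, hws⟩
    rcases le_or_gt (pm x t) (wS x (t+1)) with h|h
    · exact ⟨s, le_trans hs (Nat.le_succ t), by rw [hws, pm_succ, min_eq_left h]⟩
    · exact ⟨t+1, le_refl _, by rw [pm_succ, min_eq_right h.le]⟩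

/-- record position: the walk reaches a new strict minimum after step `p` -/
def Rec (x : ℕ → Bool) (p : ℕ) : Prop := wS x (p+1) < pm x p

instance (x p) : Decidable (Rec x p) := by unfold Rec; infer_instance

lemma Rec.bit_false {x p} (h : Rec x p) : x p = false := by
  by_contra hb
  have hb' : x p = true := by simpa using hb
  have : wS x (p+1) = wS x p + 1 := by rw [wS_succ, stp_true hb']
  have := pm_le_self x p
  unfold Rec at h; omega

lemma Rec.wS_eq {x p} (h : Rec x p) : wS x (p+1) = pm x p - 1 := by
  have hb := h.bit_false
  have : wS x (p+1) = wS x p - 1 := by rw [wS_succ, stp_false hb]; ring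
  have h2 := pm_le_self x p
  unfold Rec at h; omega

lemma Rec.pm_eq {x p} (h : Rec x p) : pm x (p+1) = pm x p - 1 := by
  have := h.wS_eq; have := h; unfold Rec at this
  rw [pm_succ]; omega

lemma pm_eq_of_not_rec {x p} (h : ¬ Rec x p) : pm x (p+1) = pm x p := by
  unfold Rec at h; rw [pm_succ]; omega

/-- records attain the new min -/
lemma Rec.pm_succ_eq_wS {x p} (h : Rec x p) : pm x (p+1) = wS x (p+1) := by
  rw [h.pm_eq, h.wS_eq]

/-- strictly decreasing levels of records -/
lemma rec_level_lt {x p q} (hp : Rec x p) (hq : Rec x q) (hpq : p < q) :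
    wS x (q+1) < wS x (p+1) := by
  have h1 : pm x q ≤ pm x (p+1) := pm_antitone x hpq
  have h2 := hp.pm_succ_eq_wS
  unfold Rec at hq; omega

lemma rec_level_injOn {x : ℕ → Bool} {p q : ℕ} (hp : Rec x p) (hq : Rec x q)
    (h : wS x (p+1) = wS x (q+1)) : p = q := by
  rcases lt_trichotomy p q with hlt|he|hgt
  · exact absurd h (ne_of_gt (rec_level_lt hp hq hlt))
  · exact he
  · exact absurd h (ne_of_lt (rec_level_lt hq hp hgt))

/-- every level between the final min and -1 is a record level -/
lemma rec_exists (x : ℕ → Bool) (N : ℕ) (v : ℤ) (h1 : pm x N ≤ v) (h2 : v < 0) :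
    ∃ p < N, Rec x p ∧ wS x (p+1) = v := by
  have hex : ∃ t, pm x t ≤ v := ⟨N, h1⟩
  classical
  have htle : pm x (Nat.find hex) ≤ v := Nat.find_spec hex
  have htpos : Nat.find hex ≠ 0 := by
    intro h0; rw [h0] at htle; simp [pm] at htle; omega
  obtain ⟨p, hp⟩ := Nat.exists_eq_succ_of_ne_zero htpos
  rw [hp] at htle
  have hplt : ¬ pm x p ≤ v := by
    have := Nat.find_min hex (m := p) (by omega)
    exact this
  push_neg at hplt
  have hrec : Rec x p := by
    unfold Rec
    by_contra hnr
    push_neg at hnr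
    rw [pm_succ] at htle; omega
  have hNp : p + 1 ≤ N := by
    by_contra hc
    push_neg at hc
    have := pm_antitone x (Nat.lt_succ_iff.mp hc : N ≤ p)
    omega
  refine ⟨p, by omega, hrec, ?_⟩
  have := hrec.pm_eq
  have := hrec.pm_succ_eq_wS
  rw [pm_succ] at htle
  omega

/-- parity: wS t ≡ t (mod 2) -/
lemma wS_parity (x t) : (2 : ℤ) ∣ (wS x t + t) := by
  induction t with
  | zero => simp [wS]
  | succ t ih =>
    rcases stp_abs x t with h|h <;>
    · rw [wS_succ, h]; push_cast; omega

/-- weight formula: 2 * #ones = t + wS t -/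
lemma weight_formula (x t) :
    2 * (((Finset.range t).filter (fun p => x p = true)).card : ℤ) = t + wS x t := by
  induction t with
  | zero => simp [wS]
  | succ t ih =>
    rw [Finset.range_add_one, Finset.filter_insert]
    by_cases h : x t = true
    · rw [if_pos h, Finset.card_insert_of_notMem (by simp)]
      rw [wS_succ, stp_true h]; push_cast; omega
    · rw [if_neg h, wS_succ, stp_false (by simpa using h)]; push_cast; omega

/-! ### Section 2: the lifting map -/

def u0 (x : ℕ → Bool) (N : ℕ) : ℤ := -(pm x N)
def u1 (x : ℕ → Bool) (N : ℕ) : ℤ := wS x N - pm x N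

lemma u0_nonneg (x N) : 0 ≤ u0 x N := by
  have := pm_nonpos x N; unfold u0; omega

lemma wS_ge_pm {x : ℕ → Bool} {N t : ℕ} (h : t ≤ N) : pm x N ≤ wS x t := pm_le_wS x h

/-- unmatched-one: a `true` bit whose pre-step level is never weakly revisited up to N -/
def UOne (x : ℕ → Bool) (N p : ℕ) : Prop :=
  x p = true ∧ ∀ t, p < t → t ≤ N → wS x p < wS x t

instance (x N p) : Decidable (UOne x N p) := by
  unfold UOne
  have : (∀ t, p < t → t ≤ N → wS x p < wS x t) ↔
      (∀ t ∈ Finset.Icc (p+1) N, wS x p < wS x t) := by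
    constructor
    · intro h t ht; rw [Finset.mem_Icc] at ht; exact h t (by omega) (by omega)
    · intro h t h1 h2; exact h t (Finset.mem_Icc.mpr ⟨by omega, h2⟩)
  rw [this]; infer_instance

lemma uone_level_injOn {x : ℕ → Bool} {N p q : ℕ} (hp : UOne x N p) (hq : UOne x N q)
    (hpN : p ≤ N) (hqN : q ≤ N) (h : wS x p = wS x q) : p = q := by
  rcases lt_trichotomy p q with hlt|he|hgt
  · have := hp.2 q hlt hqN; omega
  · exact he
  · have := hq.2 p hgt hpN; omega

/-- UOne forces the running min to be already attained -/
lemma uone_pm_eq {x : ℕ → Bool} {N p : ℕ} (hp : UOne x N p) (hpN : p ≤ N) :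
    pm x p = pm x N := by
  obtain ⟨s, hs, hws⟩ := pm_attained x N
  rcases le_or_gt s p with h|h
  · have h1 : pm x p ≤ wS x s := pm_le_wS x h
    have h2 : pm x N ≤ pm x p := pm_antitone x hpN
    omega
  · have := hp.2 s h hs
    have h1 : pm x p ≤ wS x p := pm_le_self x p
    have h2 : pm x N ≤ pm x p := pm_antitone x hpN
    omega

/-- generic lifted map: flip all records strictly below level `-k` -/
def Flip (x : ℕ → Bool) (N : ℕ) (k : ℤ) (p : ℕ) : Prop :=
  p < N ∧ Rec x p ∧ wS x (p+1) < -k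

instance (x N k p) : Decidable (Flip x N k p) := by unfold Flip; infer_instance

def upK (x : ℕ → Bool) (N : ℕ) (k : ℤ) : ℕ → Bool :=
  fun p => x p || decide (Flip x N k p)

/-- the correction term -/
def cex (x : ℕ → Bool) (k : ℤ) (t : ℕ) : ℤ := max 0 (-(pm x t) - k)

lemma cex_zero (x k) : cex x k 0 = max 0 (-k) := by simp [cex, pm]

/-- walk formula for the lifted map -/
lemma upK_wS (x : ℕ → Bool) (N : ℕ) (k : ℤ) (hk : 0 ≤ k) :
    ∀ t, t ≤ N → wS (upK x N k) t = wS x t + 2 * cex x k t := by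
  intro t
  induction t with
  | zero => intro _; simp [wS, cex_zero, max_eq_left (by omega : -k ≤ (0:ℤ))]
  | succ t ih =>
    intro htN
    have ih' := ih (by omega)
    by_cases hf : Flip x N k t
    · -- flipped step
      have hb : x t = false := hf.2.1.bit_false
      have hyt : upK x N k t = true := by simp [upK, hf]
      have hrec := hf.2.1
      have hlvl := hf.2.2
      have h1 : wS x (t+1) = pm x t - 1 := hrec.wS_eq
      have h2 : pm x (t+1) = pm x t - 1 := hrec.pm_eq
      rw [wS_succ, stp_true hyt, ih', wS_succ (x := x), stp_false hb]
      unfold cex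
      omega
    · -- unflipped step
      have hyt : upK x N k t = x t := by simp [upK, hf]
      have hcex : cex x k (t+1) = cex x k t := by
        unfold cex
        by_cases hr : Rec x t
        · have h1 := hr.pm_eq
          have h2 := hr.wS_eq
          have hlvl : ¬ wS x (t+1) < -k := fun hc => hf ⟨by omega, hr, hc⟩
          omega
        · have := pm_eq_of_not_rec hr; rw [this]
      have hstp : stp (upK x N k) t = stp x t := by unfold stp; rw [hyt]
      rw [wS_succ, wS_succ (x := x), hstp, hcex, ih']
      ring

/-- lower bound: the lifted walk never goes below -k -/
lemma upK_wS_ge (x : ℕ → Bool) (N : ℕ) (k : ℤ) (hk : 0 ≤ k) {t : ℕ} (ht : t ≤ N) :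
    -k ≤ wS (upK x N k) t := by
  rw [upK_wS x N k hk t ht]
  have h1 : pm x t ≤ wS x t := pm_le_self x t
  unfold cex
  rcases le_or_gt (-(pm x t) - k) 0 with h|h <;> omega

/-- running min of lifted map -/
lemma upK_pm (x : ℕ → Bool) (N : ℕ) (k : ℤ) (hk : 0 ≤ k) {t : ℕ} (ht : t ≤ N) :
    pm (upK x N k) t = max (pm x t) (-k) := by
  set y := upK x N k with hy
  apply le_antisymm
  · -- attained: find point where y's walk equals max(pm x t, -k)
    rcases le_or_gt (-k) (pm x t) with h|h
    · -- pm x t ≥ -k : the old min point works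
      obtain ⟨s, hs, hws⟩ := pm_attained x t
      have hws' : wS y s = wS x s + 2 * cex x k s := upK_wS x N k hk s (by omega)
      have hpms : pm x t ≤ pm x s := pm_antitone x hs
      have : cex x k s = 0 := by unfold cex; omega
      have h2 : pm y t ≤ wS y s := pm_le_wS y hs
      rw [max_eq_left h]
      omega
    · -- pm x t < -k : use a record at level -k (or t=0 when k=0, impossible since pm x t ≥ ... )
      have hk' : -k < 0 ∨ k = 0 := by omega
      rcases hk' with hk'|hk'
      · obtain ⟨p, hpt, hrec, hlvl⟩ := rec_exists x t (-k) (by omega) (by omega)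
        have h1 : pm x (p+1) = wS x (p+1) := hrec.pm_succ_eq_wS
        have hws' : wS y (p+1) = wS x (p+1) + 2 * cex x k (p+1) :=
          upK_wS x N k hk (p+1) (by omega)
        have : cex x k (p+1) = 0 := by unfold cex; omega
        have h2 : pm y t ≤ wS y (p+1) := pm_le_wS y (by omega)
        rw [max_eq_right (by omega)]
        omega
      · -- k = 0 : the start point works
        have h2 : pm y t ≤ wS y 0 := pm_le_wS y (Nat.zero_le t)
        have h0 : wS y 0 = 0 := rfl
        rw [max_eq_right (by omega)]
        omega
  · -- lower bound
    obtain ⟨s, hs, hws⟩ := pm_attained y t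
    have h1 : -k ≤ wS y s := upK_wS_ge x N k hk (by omega)
    have h2 : wS y s = wS x s + 2 * cex x k s := upK_wS x N k hk s (by omega)
    have h3 : pm x t ≤ wS x s := pm_le_wS x hs
    have h4 : 0 ≤ cex x k s := le_max_left _ _
    rw [← hws]
    exact max_le (by omega) h1

/-! ### Section 3: structure of the lifted map -/

section Up
variable (x : ℕ → Bool) (N : ℕ) (k : ℤ)

/-- records of the lifted map are the shallow records -/
lemma upK_rec (hk : 0 ≤ k) (hku : k ≤ u0 x N) {p : ℕ} (hpN : p < N) :
    Rec (upK x N k) p ↔ (Rec x p ∧ -k ≤ wS x (p+1)) := by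
  set y := upK x N k with hy
  constructor
  · intro hr
    have hpm : pm y p = max (pm x p) (-k) := upK_pm x N k hk (by omega)
    have hge : -k ≤ wS y (p+1) := upK_wS_ge x N k hk (by omega)
    have hlvl : wS y (p+1) = pm y p - 1 := Rec.wS_eq hr
    have hpmk : -k + 1 ≤ pm y p := by omega
    have hpmx : pm x p = pm y p := by
      rcases max_cases (pm x p) (-k) with ⟨h1,h2⟩|⟨h1,h2⟩ <;> omega
    have hyb : y p = false := Rec.bit_false hr
    have hxb : x p = false := by
      by_contra hc
      simp only [hy, upK, Bool.or_eq_false_iff] at hyb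
      rw [hyb.1] at hc; exact hc rfl
    have hws1 : wS y (p+1) = wS x (p+1) + 2 * cex x k (p+1) :=
      upK_wS x N k hk (p+1) (by omega)
    have hrx : Rec x p := by
      by_contra hnr
      have hpmeq := pm_eq_of_not_rec hnr
      have hc1 : cex x k (p+1) = 0 := by
        unfold cex; rw [hpmeq]; omega
      unfold Rec at hnr
      omega
    refine ⟨hrx, ?_⟩
    have hc1 : cex x k (p+1) = 0 := by
      unfold cex
      have h1 := Rec.pm_succ_eq_wS hrx
      have h2 := Rec.pm_eq hrx
      omega
    omega
  · rintro ⟨hr, hlvl⟩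
    have hsh : pm x (p+1) = wS x (p+1) := Rec.pm_succ_eq_wS hr
    have hpmstep : pm x (p+1) = pm x p - 1 := Rec.pm_eq hr
    have hc1 : cex x k (p+1) = 0 := by unfold cex; omega
    have hc0 : cex x k p = 0 := by unfold cex; omega
    have hws1 : wS y (p+1) = wS x (p+1) := by
      rw [upK_wS x N k hk (p+1) (by omega)]; omega
    have hpm : pm y p = max (pm x p) (-k) := upK_pm x N k hk (by omega)
    unfold Rec at hr ⊢
    rw [hws1, hpm]
    have : pm x p = max (pm x p) (-k) := by
      rcases max_cases (pm x p) (-k) with ⟨h1,h2⟩|⟨h1,h2⟩ <;> omega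
    omega

/-- level of a flipped position in the lifted walk -/
lemma upK_wS_flip (hk : 0 ≤ k) {p : ℕ} (hf : Flip x N k p) :
    wS (upK x N k) p = -(wS x (p+1)) - 2*k - 1 := by
  have hpN : p < N := hf.1
  have hr := hf.2.1
  have h1 : wS x (p+1) = pm x p - 1 := Rec.wS_eq hr
  have hb : x p = false := Rec.bit_false hr
  have hxs : wS x (p+1) = wS x p - 1 := by rw [wS_succ, stp_false hb]; ring
  rw [upK_wS x N k hk p (by omega : p ≤ N)]
  unfold cex
  have h2 : wS x (p+1) < -k := hf.2.2
  omega

/-- level of an old unmatched-one in the lifted walk -/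
lemma upK_wS_uone (hk : 0 ≤ k) (hku : k ≤ u0 x N) {p : ℕ} (hu : UOne x N p) (hpN : p ≤ N) :
    wS (upK x N k) p = wS x p + 2 * (u0 x N - k) := by
  rw [upK_wS x N k hk p hpN]
  have h1 : pm x p = pm x N := uone_pm_eq hu hpN
  unfold cex u0 at *
  omega

lemma wS_step_ge (x : ℕ → Bool) (t : ℕ) : wS x t - 1 ≤ wS x (t+1) := by
  rcases stp_abs x t with h|h <;> (rw [wS_succ, h]; omega)

/-- unmatched ones of the lifted map -/
lemma upK_uone (hk : 0 ≤ k) (hku : k ≤ u0 x N) {p : ℕ} (hpN : p < N) :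
    UOne (upK x N k) N p ↔ (UOne x N p ∨ Flip x N k p) := by
  classical
  set y := upK x N k with hy
  constructor
  · rintro ⟨hb, hmin⟩
    by_cases hf : Flip x N k p
    · exact Or.inr hf
    · left
      have hxb : x p = true := by
        simp only [hy, upK, Bool.or_eq_true] at hb
        rcases hb with h|h
        · exact h
        · exact absurd (of_decide_eq_true h) hf
      refine ⟨hxb, ?_⟩
      intro t hpt htN
      by_contra hle0
      push_neg at hle0
      have hex : ∃ s, p < s ∧ s ≤ N ∧ wS x s ≤ wS x p := ⟨t, hpt, htN, hle0⟩
      obtain ⟨hpt', htN', hle'⟩ : p < Nat.find hex ∧ Nat.find hex ≤ N ∧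
          wS x (Nat.find hex) ≤ wS x p := Nat.find_spec hex
      set t' := Nat.find hex with ht'def
      have habove : ∀ s, p < s → s < t' → wS x p < wS x s := by
        intro s h1 h2
        by_contra hc2
        push_neg at hc2
        have : t' ≤ s := Nat.find_le ⟨h1, by omega, hc2⟩
        omega
      -- t' ≥ p+2 since step at p goes up
      have hstep : wS x (p+1) = wS x p + 1 := by rw [wS_succ, stp_true hxb]
      have ht'p2 : p + 2 ≤ t' := by
        rcases Nat.lt_or_ge (p+1) t' with h|h
        · omega
        · have : t' = p + 1 := by omega
          rw [this] at hle'; omega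
      -- wS x t' = wS x p
      have hweq : wS x t' = wS x p := by
        have h1 : wS x p < wS x (t'-1) := habove (t'-1) (by omega) (by omega)
        have h2 := wS_step_ge x (t'-1)
        have h3 : t' - 1 + 1 = t' := by omega
        rw [h3] at h2
        omega
      -- pm x t' = pm x p
      have hpmeq : pm x t' = pm x p := by
        apply le_antisymm (pm_antitone x (by omega))
        obtain ⟨s, hs, hws⟩ := pm_attained x t'
        rcases le_or_gt s p with hsp|hsp
        · have := pm_le_wS x hsp (t := p); omega
        · have hwsge : wS x p ≤ wS x s := by
            rcases Nat.lt_or_ge s t' with h|h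
            · exact (habove s hsp h).le
            · have : s = t' := by omega
              rw [this, hweq]
          have := pm_le_self x p
          omega
      have hy1 : wS y t' = wS x t' + 2 * cex x k t' := upK_wS x N k hk t' htN'
      have hy2 : wS y p = wS x p + 2 * cex x k p := upK_wS x N k hk p (by omega)
      have hcc : cex x k t' = cex x k p := by unfold cex; rw [hpmeq]
      have := hmin t' hpt' htN'
      omega
  · intro h
    rcases h with hu|hf
    · refine ⟨by simp [hy, upK, hu.1], ?_⟩
      intro t hpt htN
      have h1 : wS y p = wS x p + 2 * (u0 x N - k) := upK_wS_uone x N k hk hku hu (by omega)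
      have h2 : wS y t = wS x t + 2 * cex x k t := upK_wS x N k hk t htN
      have h3 := hu.2 t hpt htN
      have h4 : pm x t ≤ pm x p := pm_antitone x (by omega)
      have h5 : pm x p = pm x N := uone_pm_eq hu (by omega)
      have h6 : pm x N ≤ pm x t := pm_antitone x htN
      have : cex x k t = u0 x N - k := by unfold cex u0 at *; omega
      omega
    · refine ⟨by simp [hy, upK, hf], ?_⟩
      intro t hpt htN
      have h1 : wS y p = -(wS x (p+1)) - 2*k - 1 := upK_wS_flip x N k hk hf
      have h2 : wS y t = wS x t + 2 * cex x k t := upK_wS x N k hk t htN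
      have h3 : pm x t ≤ pm x (p+1) := pm_antitone x (by omega)
      have h4 : pm x (p+1) = wS x (p+1) := Rec.pm_succ_eq_wS hf.2.1
      have h5 : wS x (p+1) < -k := hf.2.2
      have h6 : pm x t ≤ wS x t := pm_le_self x t
      have : cex x k t = -(pm x t) - k := by unfold cex; omega
      omega
end Up

/-! ### Section 4: the map ψ, recovery, weight -/

def kk (x : ℕ → Bool) (N : ℕ) : ℤ := u0 x N / 2

def psiF (x : ℕ → Bool) (N : ℕ) : ℕ → Bool := upK x N (kk x N)

def bitP (x : ℕ → Bool) (N : ℕ) : Bool := decide (u1 x N % 2 = 0)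

lemma kk_nonneg (x N) : 0 ≤ kk x N := by
  have := u0_nonneg x N; unfold kk; omega

lemma kk_le (x N) : kk x N ≤ u0 x N := by
  have := u0_nonneg x N; unfold kk; omega

/-- selector for the inverse: how many unmatched ones to flip down -/
def rSel (y : ℕ → Bool) (N : ℕ) (b : Bool) : ℤ :=
  if (decide ((u1 y N - u0 y N) % 2 = 0)) = b then u0 y N else u0 y N + 1

/-- the inverse flip predicate -/
def GF (y : ℕ → Bool) (N : ℕ) (b : Bool) (p : ℕ) : Prop :=
  p < N ∧ UOne y N p ∧ wS y p < -(u0 y N) + rSel y N b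

instance (y N b p) : Decidable (GF y N b p) := by unfold GF; infer_instance

def recover (y : ℕ → Bool) (N : ℕ) (b : Bool) : ℕ → Bool :=
  fun p => y p && !(decide (GF y N b p))

lemma psiF_u0 (x N) : u0 (psiF x N) N = kk x N := by
  unfold u0 psiF
  rw [upK_pm x N _ (kk_nonneg x N) (le_refl N)]
  have h1 := kk_le x N
  have h2 := kk_nonneg x N
  unfold u0 at h1
  rcases max_cases (pm x N) (-(kk x N)) with ⟨h3,h4⟩|⟨h3,h4⟩ <;> omega

lemma psiF_wS (x N) : wS (psiF x N) N = wS x N + 2 * (u0 x N - kk x N) := by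
  unfold psiF
  rw [upK_wS x N _ (kk_nonneg x N) N (le_refl N)]
  have h1 := kk_le x N
  unfold cex u0 at *
  omega

lemma psiF_u1 (x N) : u1 (psiF x N) N = u1 x N + (u0 x N - kk x N) := by
  unfold u1
  rw [psiF_wS]
  have h1 : pm (psiF x N) N = -(kk x N) := by
    have := psiF_u0 x N; unfold u0 at this; omega
  rw [h1]
  unfold u1 u0 at *
  omega

lemma rSel_psiF (x N) : rSel (psiF x N) N (bitP x N) = u0 x N - kk x N := by
  unfold rSel bitP
  rw [psiF_u0, psiF_u1]
  have h0 := u0_nonneg x N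
  rcases Int.even_or_odd (u0 x N) with he|ho
  · obtain ⟨m, hm⟩ := he
    have hk : kk x N = m := by unfold kk; omega
    have hmod : (u1 x N + (u0 x N - kk x N) - kk x N) % 2 = u1 x N % 2 := by
      rw [hk, hm]; omega
    rw [hmod, if_pos rfl, hk, hm]; omega
  · obtain ⟨m, hm⟩ := ho
    have hk : kk x N = m := by unfold kk; omega
    have hmod : (u1 x N + (u0 x N - kk x N) - kk x N) % 2 = (u1 x N + 1) % 2 := by
      rw [hk, hm]; omega
    rw [hmod]
    have hne : (decide ((u1 x N + 1) % 2 = 0)) ≠ (decide (u1 x N % 2 = 0)) := by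
      rcases Int.even_or_odd (u1 x N) with h|h
      · obtain ⟨l, hl⟩ := h
        have e1 : (u1 x N + 1) % 2 = 1 := by omega
        have e2 : u1 x N % 2 = 0 := by omega
        simp [e1, e2]
      · obtain ⟨l, hl⟩ := h
        have e1 : (u1 x N + 1) % 2 = 0 := by omega
        have e2 : u1 x N % 2 = 1 := by omega
        simp [e1, e2]
    rw [if_neg hne, hk, hm]; omega

/-- The inverse flip predicate of the image equals the forward flip predicate. -/
lemma GF_psiF (x N p) : GF (psiF x N) N (bitP x N) p ↔ Flip x N (kk x N) p := by
  set k := kk x N with hkdef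
  have hk0 := kk_nonneg x N
  have hku := kk_le x N
  constructor
  · rintro ⟨hpN, hu, hlvl⟩
    rw [psiF_u0, rSel_psiF] at hlvl
    rcases (upK_uone x N k hk0 hku hpN).mp hu with hux|hf
    · exfalso
      have h1 : wS (psiF x N) p = wS x p + 2 * (u0 x N - k) :=
        upK_wS_uone x N k hk0 hku hux (by omega)
      have h2 : pm x N ≤ wS x p := wS_ge_pm (by omega)
      unfold u0 at *
      omega
    · exact hf
  · intro hf
    have hpN : p < N := hf.1
    refine ⟨hpN, (upK_uone x N k hk0 hku hpN).mpr (Or.inr hf), ?_⟩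
    rw [psiF_u0, rSel_psiF]
    have h1 : wS (psiF x N) p = -(wS x (p+1)) - 2*k - 1 := upK_wS_flip x N k hk0 hf
    have h2 : pm x N ≤ wS x (p+1) := wS_ge_pm (by omega)
    unfold u0 at *
    omega

/-- recovery: the map is injective -/
lemma recover_psiF (x N p) : recover (psiF x N) N (bitP x N) p = x p := by
  unfold recover
  by_cases hf : Flip x N (kk x N) p
  · have hb : x p = false := Rec.bit_false hf.2.1
    have : psiF x N p = true := by simp [psiF, upK, hf]
    rw [this, hb]
    simp [(GF_psiF x N p).mpr hf]
  · have : psiF x N p = x p := by simp [psiF, upK, hf]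
    rw [this]
    have : ¬ GF (psiF x N) N (bitP x N) p := fun h => hf ((GF_psiF x N p).mp h)
    simp [this]

/-! ### Section 5: weight of the image (ball membership) -/

lemma flip_count_ge (x : ℕ → Bool) (N : ℕ) (k : ℤ) (hk : 0 ≤ k) (hku : k ≤ u0 x N) :
    (u0 x N - k) ≤ (((Finset.range N).filter (fun p => Flip x N k p)).card : ℤ) := by
  classical
  rcases le_or_gt (u0 x N - k) 0 with h|h
  · exact le_trans h (by positivity)
  set T : Finset ℤ := Finset.Icc (pm x N) (-k-1) with hT
  have hcard : (T.card : ℤ) = u0 x N - k := by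
    rw [hT, Int.card_Icc]
    unfold u0 at *
    omega
  have hrec : ∀ v ∈ T, ∃ p, p < N ∧ Rec x p ∧ wS x (p+1) = v := by
    intro v hv
    rw [hT, Finset.mem_Icc] at hv
    exact rec_exists x N v hv.1 (by omega)
  choose f hf1 hf2 hf3 using hrec
  let g : ℤ → ℕ := fun v => if h : v ∈ T then f v h else 0
  have hsub : T.image g ⊆ (Finset.range N).filter (fun p => Flip x N k p) := by
    intro p hp
    rw [Finset.mem_image] at hp
    obtain ⟨v, hv, rfl⟩ := hp
    have hg : g v = f v hv := dif_pos hv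
    rw [Finset.mem_filter, Finset.mem_range, hg]
    have h3 := hf3 v hv
    have hvT := hv
    rw [hT, Finset.mem_Icc] at hvT
    exact ⟨hf1 v hv, ⟨hf1 v hv, hf2 v hv, by omega⟩⟩
  have hinj : Set.InjOn g T := by
    intro v hv w hw he
    have hgv : g v = f v hv := dif_pos hv
    have hgw : g w = f w hw := dif_pos hw
    rw [hgv, hgw] at he
    rw [← hf3 v hv, ← hf3 w hw, he]
  have hcard2 : (T.image g).card = T.card := Finset.card_image_of_injOn hinj
  have := Finset.card_le_card hsub
  omega

/-- ones of the lifted map = ones of x plus flips -/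
lemma upK_ones_card (x : ℕ → Bool) (N : ℕ) (k : ℤ) :
    ((Finset.range N).filter (fun p => upK x N k p = true)).card
      = ((Finset.range N).filter (fun p => x p = true)).card
        + ((Finset.range N).filter (fun p => Flip x N k p)).card := by
  classical
  rw [← Finset.card_union_of_disjoint]
  · congr 1
    ext p
    simp only [Finset.mem_union, Finset.mem_filter, Finset.mem_range]
    constructor
    · rintro ⟨hpN, hy⟩
      simp only [upK, Bool.or_eq_true] at hy
      rcases hy with h|h
      · exact Or.inl ⟨hpN, h⟩
      · exact Or.inr ⟨hpN, of_decide_eq_true h⟩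
    · rintro (⟨hpN, h⟩|⟨hpN, h⟩)
      · exact ⟨hpN, by simp [upK, h]⟩
      · exact ⟨hpN, by simp [upK, h]⟩
  · rw [Finset.disjoint_filter]
    intro p _ hx hf
    rw [Rec.bit_false hf.2.1] at hx
    exact absurd hx (by simp)

/-- ball membership (for even N) -/
lemma psiF_weight (x : ℕ → Bool) (N : ℕ) (hN : (2:ℤ) ∣ (N:ℤ)) :
    (N:ℤ) + 2 ≤ 2 * (((Finset.range N).filter (fun p => psiF x N p = true)).card : ℤ)
      + 2 * (if bitP x N then 1 else 0) := by
  have hw := weight_formula x N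
  have hones := upK_ones_card x N (kk x N)
  have hflip := flip_count_ge x N (kk x N) (kk_nonneg x N) (kk_le x N)
  have hpar := wS_parity x N
  have h0 := u0_nonneg x N
  have hkk : kk x N = u0 x N / 2 := rfl
  have hu1 : u1 x N = wS x N - pm x N := rfl
  have hu0 : u0 x N = -(pm x N) := rfl
  unfold psiF
  rw [hones]
  push_cast
  have hps := pm_le_self x N
  rcases Int.even_or_odd (u1 x N) with he|ho
  · obtain ⟨l, hl⟩ := he
    have hb : bitP x N = true := by
      unfold bitP; rw [hl]; simp; omega
    rw [hb]
    simp only [if_true]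
    omega
  · obtain ⟨l, hl⟩ := ho
    have hb : bitP x N = false := by
      unfold bitP; rw [hl]; simp
    rw [hb]
    simp only [Bool.false_eq_true, if_false]
    omega

/-! ### Section 6: effect of flipping one bit 0 → 1 -/

lemma rec_iff_forall (x : ℕ → Bool) (p : ℕ) :
    Rec x p ↔ ∀ s ≤ p, wS x (p+1) < wS x s := by
  constructor
  · intro h s hs
    exact lt_of_lt_of_le h (pm_le_wS x hs)
  · intro h
    obtain ⟨s, hs, hws⟩ := pm_attained x p
    unfold Rec
    rw [← hws]
    exact h s hs

lemma rec_level_card (x : ℕ → Bool) (N : ℕ) (v : ℤ) :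
    ((Finset.range N).filter (fun p => Rec x p ∧ wS x (p+1) = v)).card ≤ 1 := by
  classical
  apply Finset.card_le_one.mpr
  intro p hp q hq
  rw [Finset.mem_filter] at hp hq
  exact rec_level_injOn hp.2.1 hq.2.1 (by rw [hp.2.2, hq.2.2])

lemma uone_level_card (x : ℕ → Bool) (N : ℕ) (v : ℤ) :
    ((Finset.range N).filter (fun p => UOne x N p ∧ wS x p = v)).card ≤ 1 := by
  classical
  apply Finset.card_le_one.mpr
  intro p hp q hq
  rw [Finset.mem_filter, Finset.mem_range] at hp hq
  exact uone_level_injOn hp.2.1 hq.2.1 (by omega) (by omega) (by rw [hp.2.2, hq.2.2])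

section FlipBit
variable (x : ℕ → Bool) (f : ℕ)

/-- walk after flipping bit f from 0 to 1 -/
lemma flip_wS (hxf : x f = false) :
    ∀ t, (t ≤ f → wS (Function.update x f true) t = wS x t)
        ∧ (f < t → wS (Function.update x f true) t = wS x t + 2) := by
  set x' := Function.update x f true with hx'
  intro t
  induction t with
  | zero => exact ⟨fun _ => rfl, fun h => absurd h (by omega)⟩
  | succ t ih =>
    constructor
    · intro ht
      have h1 := ih.1 (by omega)
      have hne : t ≠ f := by omega
      have hstp : stp x' t = stp x t := by
        unfold stp; rw [hx', Function.update_of_ne hne]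
      rw [wS_succ, wS_succ, h1, hstp]
    · intro ht
      rcases Nat.lt_or_ge f t with h|h
      · have h1 := ih.2 h
        have hne : t ≠ f := by omega
        have hstp : stp x' t = stp x t := by
          unfold stp; rw [hx', Function.update_of_ne hne]
        rw [wS_succ, wS_succ, h1, hstp]; ring
      · have hft : t = f := by omega
        subst hft
        have h1 := ih.1 (le_refl t)
        have hstp : stp x' t = 1 := by
          unfold stp; rw [hx', Function.update_self]; simp
        rw [wS_succ, wS_succ, h1, hstp, stp_false hxf]; ring

lemma flip_pm_le (hxf : x f = false) {t : ℕ} (ht : t ≤ f) :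
    pm (Function.update x f true) t = pm x t := by
  induction t with
  | zero => rfl
  | succ t ih =>
    rw [pm_succ, pm_succ, ih (by omega), ((flip_wS x f hxf) (t+1)).1 ht]

/-- records strictly before f unchanged -/
lemma flip_rec_lt (hxf : x f = false) {p : ℕ} (hp : p < f) :
    Rec (Function.update x f true) p ↔ Rec x p := by
  unfold Rec
  rw [flip_pm_le x f hxf (by omega : p ≤ f), ((flip_wS x f hxf) (p+1)).1 (by omega)]

/-- f itself is not a record of the flipped string -/
lemma flip_rec_self (hxf : x f = false) : ¬ Rec (Function.update x f true) f := by
  intro h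
  have := Rec.bit_false h
  rw [Function.update_self] at this
  exact absurd this (by simp)

/-- records after f -/
lemma flip_rec_gt (hxf : x f = false) {p : ℕ} (hp : f < p) :
    Rec (Function.update x f true) p ↔ (Rec x p ∧ wS x (p+1) < pm x f - 2) := by
  set x' := Function.update x f true with hx'
  have hws : ∀ t, f < t → wS x' t = wS x t + 2 := fun t ht => ((flip_wS x f hxf) t).2 ht
  have hws' : ∀ t, t ≤ f → wS x' t = wS x t := fun t ht => ((flip_wS x f hxf) t).1 ht
  rw [rec_iff_forall, rec_iff_forall]
  constructor
  · intro h
    constructor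
    · intro s hs
      rcases Nat.lt_or_ge f s with h1|h1
      · have := h s hs
        rw [hws (p+1) (by omega), hws s h1] at this
        omega
      · have := h s hs
        rw [hws (p+1) (by omega), hws' s h1] at this
        have h2 : pm x f ≤ wS x s := pm_le_wS x h1
        omega
    · obtain ⟨s, hs, hwss⟩ := pm_attained x f
      have := h s (by omega)
      rw [hws (p+1) (by omega), hws' s hs] at this
      omega
  · rintro ⟨h1, h2⟩ s hs
    rcases Nat.lt_or_ge f s with h3|h3
    · rw [hws (p+1) (by omega), hws s h3]
      have := h1 s hs
      omega
    · rw [hws (p+1) (by omega), hws' s h3]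
      have h4 : pm x f ≤ wS x s := pm_le_wS x h3
      omega

/-- global min after the flip -/
lemma flip_pm_N (hxf : x f = false) {N : ℕ} (hfN : f < N) :
    pm (Function.update x f true) N = min (pm x f) (pm x N + 2) := by
  set x' := Function.update x f true with hx'
  have hws : ∀ t, f < t → wS x' t = wS x t + 2 := fun t ht => ((flip_wS x f hxf) t).2 ht
  have hws' : ∀ t, t ≤ f → wS x' t = wS x t := fun t ht => ((flip_wS x f hxf) t).1 ht
  apply le_antisymm
  · apply le_min
    · rw [← flip_pm_le x f hxf (le_refl f)]
      exact pm_antitone x' (by omega)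
    · obtain ⟨s, hs, hwss⟩ := pm_attained x N
      rcases Nat.lt_or_ge f s with h1|h1
      · have := hws s h1
        have h2 : pm x' N ≤ wS x' s := pm_le_wS x' hs
        omega
      · have := hws' s h1
        have h2 : pm x' N ≤ wS x' s := pm_le_wS x' hs
        have h3 : pm x N ≤ pm x f := pm_antitone x (by omega)
        have h4 : pm x f ≤ wS x s := pm_le_wS x h1
        omega
  · obtain ⟨s, hs, hwss⟩ := pm_attained x' N
    rcases Nat.lt_or_ge f s with h1|h1
    · have := hws s h1
      have h2 : pm x N ≤ wS x s := pm_le_wS x hs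
      rw [← hwss] at *
      omega
    · have := hws' s h1
      have h2 : pm x f ≤ wS x s := pm_le_wS x h1
      rw [← hwss] at *
      omega

/-- unmatched-ones after f unchanged -/
lemma flip_uone_gt (hxf : x f = false) {N p : ℕ} (hp : f < p) :
    UOne (Function.update x f true) N p ↔ UOne x N p := by
  set x' := Function.update x f true with hx'
  have hws : ∀ t, f < t → wS x' t = wS x t + 2 := fun t ht => ((flip_wS x f hxf) t).2 ht
  unfold UOne
  have hb : x' p = x p := Function.update_of_ne (by omega) _ x
  rw [hb]
  constructor
  · rintro ⟨h1, h2⟩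
    refine ⟨h1, fun t hpt htN => ?_⟩
    have := h2 t hpt htN
    rw [hws p hp, hws t (by omega)] at this
    omega
  · rintro ⟨h1, h2⟩
    refine ⟨h1, fun t hpt htN => ?_⟩
    have := h2 t hpt htN
    rw [hws p hp, hws t (by omega)]
    omega

/-- old unmatched-ones before f survive -/
lemma flip_uone_lt_of (hxf : x f = false) {N p : ℕ} (hp : p < f) (hfN : f ≤ N)
    (hu : UOne x N p) : UOne (Function.update x f true) N p := by
  set x' := Function.update x f true with hx'
  have hws : ∀ t, f < t → wS x' t = wS x t + 2 := fun t ht => ((flip_wS x f hxf) t).2 ht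
  have hws' : ∀ t, t ≤ f → wS x' t = wS x t := fun t ht => ((flip_wS x f hxf) t).1 ht
  refine ⟨by rw [hx', Function.update_of_ne (by omega : p ≠ f)]; exact hu.1,
    fun t hpt htN => ?_⟩
  have := hu.2 t hpt htN
  rcases Nat.lt_or_ge f t with h1|h1
  · rw [hws t h1, hws' p (by omega)]; omega
  · rw [hws' t h1, hws' p (by omega)]; omega

/-- new unmatched-ones: at most the levels μ₊, μ₊+1 (μ₊ = suffix min after f) -/
lemma flip_uone_new (hxf : x f = false) {N p : ℕ} (hfN : f < N) (hp : p ≤ f)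
    (hu' : UOne (Function.update x f true) N p) (hu : ¬ UOne x N p) :
    (∀ s, p < s → s ≤ f → wS x p < wS x s) ∧
    ∃ t, f < t ∧ t ≤ N ∧ wS x t ≤ wS x p ∧ wS x p ≤ wS x t + 1 := by
  set x' := Function.update x f true with hx'
  have hws : ∀ t, f < t → wS x' t = wS x t + 2 := fun t ht => ((flip_wS x f hxf) t).2 ht
  have hws' : ∀ t, t ≤ f → wS x' t = wS x t := fun t ht => ((flip_wS x f hxf) t).1 ht
  have hwp : wS x' p = wS x p := hws' p (by omega)
  have habove : ∀ s, p < s → s ≤ f → wS x p < wS x s := by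
    intro s h1 h2
    have := hu'.2 s h1 (by omega)
    rw [hwp, hws' s h2] at this
    exact this
  refine ⟨habove, ?_⟩
  rcases Nat.lt_or_ge p f with hpf|hpf
  · have hxp : x p = true := by
      have h1 := hu'.1
      rw [hx', Function.update_of_ne (by omega : p ≠ f)] at h1
      exact h1
    have hviol : ∃ t, p < t ∧ t ≤ N ∧ wS x t ≤ wS x p := by
      by_contra hc; push_neg at hc; exact hu ⟨hxp, hc⟩
    obtain ⟨t, h1, h2, h3⟩ := hviol
    have htf : f < t := by
      by_contra hft
      push_neg at hft
      rcases Nat.lt_or_ge p t with h4|h4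
      · exact absurd h3 (not_le.mpr (habove t h4 hft))
      · omega
    refine ⟨t, htf, h2, h3, ?_⟩
    have := hu'.2 t (by omega) h2
    rw [hwp, hws t htf] at this
    omega
  · have hpf' : p = f := by omega
    subst hpf'
    refine ⟨p+1, by omega, by omega, ?_, ?_⟩
    · rw [wS_succ, stp_false hxf]; omega
    · have := hu'.2 (p+1) (by omega) (by omega)
      rw [hwp, hws (p+1) (by omega)] at this
      rw [wS_succ, stp_false hxf]
      omega
end FlipBit

/-! ### Section 7: edge lemma A -/

lemma edgeA (x : ℕ → Bool) (N f : ℕ) (hfN : f < N) (hxf : x f = false) :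
    (((Finset.range N).filter
        (fun p => psiF x N p ≠ psiF (Function.update x f true) N p)).card : ℤ)
      + (if bitP x N = bitP (Function.update x f true) N then 0 else 1) ≤ 4 := by
  classical
  set x' := Function.update x f true with hx'
  have hwsN : wS x' N = wS x N + 2 := ((flip_wS x f hxf) N).2 hfN
  have hpmN : pm x' N = min (pm x f) (pm x N + 2) := flip_pm_N x f hxf hfN
  have hpm_le : pm x N ≤ pm x f := pm_antitone x (by omega)
  have hxp : ∀ p : ℕ, p ≠ f → x' p = x p := by
    intro p hp; rw [hx']; exact Function.update_of_ne hp _ x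
  have hdd : ∀ p, p ≠ f → psiF x N p ≠ psiF x' N p →
      x p = false ∧ ¬ (Flip x N (kk x N) p ↔ Flip x' N (kk x' N) p) := by
    intro p hp hne
    by_cases hb : x p = true
    · exfalso
      apply hne
      unfold psiF upK
      rw [hxp p hp, hb]
      simp
    · have hb' : x p = false := by simpa using hb
      refine ⟨hb', fun hiff => hne ?_⟩
      unfold psiF upK
      rw [hxp p hp, hb']
      simp only [Bool.false_or]
      exact decide_eq_decide.mpr hiff
  have htl : ∀ p, p < f → (Flip x' N (kk x' N) p ↔
      (p < N ∧ Rec x p ∧ wS x (p+1) < -(kk x' N))) := by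
    intro p hp
    unfold Flip
    rw [flip_rec_lt x f hxf hp, ((flip_wS x f hxf) (p+1)).1 (by omega)]
  have htg : ∀ p, f < p → (Flip x' N (kk x' N) p ↔
      (p < N ∧ (Rec x p ∧ wS x (p+1) < pm x f - 2) ∧ wS x (p+1) + 2 < -(kk x' N))) := by
    intro p hp
    unfold Flip
    rw [flip_rec_gt x f hxf hp, ((flip_wS x f hxf) (p+1)).2 (by omega)]
  have hrec_gt : ∀ p, f < p → p < N → Rec x p →
      pm x N ≤ wS x (p+1) ∧ wS x (p+1) < pm x f := by
    intro p hp hpN hr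
    exact ⟨pm_le_wS x (by omega),
      lt_of_lt_of_le hr (pm_antitone x (by omega))⟩
  have hrec_lt : ∀ p, p < f → Rec x p → pm x f ≤ wS x (p+1) := by
    intro p hp hr
    have h1 := Rec.pm_succ_eq_wS hr
    have h2 := pm_antitone x (show p+1 ≤ f by omega)
    omega
  have hk0 := kk_nonneg x N
  have e1 : kk x N = (-(pm x N)) / 2 := rfl
  have e2 : kk x' N = (-(pm x' N)) / 2 := rfl
  have hbit_eq : pm x' N = pm x N ∨ pm x' N = pm x N + 2 → bitP x N = bitP x' N := by
    intro h
    unfold bitP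
    apply decide_eq_decide.mpr
    have g1 : u1 x N = wS x N - pm x N := rfl
    have g2 : u1 x' N = wS x' N - pm x' N := rfl
    rcases h with h|h <;> (rw [g1, g2, hwsN, h]; omega)
  -- counting templates
  have hcnt2 : ∀ v1 v2 : ℤ,
      (∀ p, p < N → psiF x N p ≠ psiF x' N p → p ≠ f →
        Rec x p ∧ (wS x (p+1) = v1 ∨ wS x (p+1) = v2)) →
      (((Finset.range N).filter (fun p => psiF x N p ≠ psiF x' N p)).card : ℤ) ≤ 3 := by
    intro v1 v2 hcov
    have hsub : (Finset.range N).filter (fun p => psiF x N p ≠ psiF x' N p) ⊆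
        insert f (((Finset.range N).filter (fun p => Rec x p ∧ wS x (p+1) = v1))
          ∪ ((Finset.range N).filter (fun p => Rec x p ∧ wS x (p+1) = v2))) := by
      intro p hp
      rw [Finset.mem_filter, Finset.mem_range] at hp
      by_cases hpf : p = f
      · exact Finset.mem_insert.mpr (Or.inl hpf)
      · obtain ⟨hr, hv⟩ := hcov p hp.1 hp.2 hpf
        refine Finset.mem_insert.mpr (Or.inr (Finset.mem_union.mpr ?_))
        rcases hv with h|h
        · exact Or.inl (Finset.mem_filter.mpr ⟨Finset.mem_range.mpr hp.1, hr, h⟩)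
        · exact Or.inr (Finset.mem_filter.mpr ⟨Finset.mem_range.mpr hp.1, hr, h⟩)
    have h1 := Finset.card_le_card hsub
    have h2 := Finset.card_insert_le f
      (((Finset.range N).filter (fun p => Rec x p ∧ wS x (p+1) = v1))
          ∪ ((Finset.range N).filter (fun p => Rec x p ∧ wS x (p+1) = v2)))
    have h4 := Finset.card_union_le
      ((Finset.range N).filter (fun p => Rec x p ∧ wS x (p+1) = v1))
      ((Finset.range N).filter (fun p => Rec x p ∧ wS x (p+1) = v2))
    have h5 := rec_level_card x N v1
    have h6 := rec_level_card x N v2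
    push_cast
    omega
  have hcnt3 : ∀ v1 v2 v3 : ℤ,
      (∀ p, p < N → psiF x N p ≠ psiF x' N p → p ≠ f →
        Rec x p ∧ (wS x (p+1) = v1 ∨ wS x (p+1) = v2 ∨ wS x (p+1) = v3)) →
      (((Finset.range N).filter (fun p => psiF x N p ≠ psiF x' N p)).card : ℤ) ≤ 4 := by
    intro v1 v2 v3 hcov
    have hsub : (Finset.range N).filter (fun p => psiF x N p ≠ psiF x' N p) ⊆
        insert f ((((Finset.range N).filter (fun p => Rec x p ∧ wS x (p+1) = v1))
          ∪ ((Finset.range N).filter (fun p => Rec x p ∧ wS x (p+1) = v2)))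
          ∪ ((Finset.range N).filter (fun p => Rec x p ∧ wS x (p+1) = v3))) := by
      intro p hp
      rw [Finset.mem_filter, Finset.mem_range] at hp
      by_cases hpf : p = f
      · exact Finset.mem_insert.mpr (Or.inl hpf)
      · obtain ⟨hr, hv⟩ := hcov p hp.1 hp.2 hpf
        refine Finset.mem_insert.mpr (Or.inr ?_)
        rcases hv with h|h|h
        · exact Finset.mem_union.mpr (Or.inl (Finset.mem_union.mpr (Or.inl
            (Finset.mem_filter.mpr ⟨Finset.mem_range.mpr hp.1, hr, h⟩))))
        · exact Finset.mem_union.mpr (Or.inl (Finset.mem_union.mpr (Or.inr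
            (Finset.mem_filter.mpr ⟨Finset.mem_range.mpr hp.1, hr, h⟩))))
        · exact Finset.mem_union.mpr (Or.inr
            (Finset.mem_filter.mpr ⟨Finset.mem_range.mpr hp.1, hr, h⟩))
    have h1 := Finset.card_le_card hsub
    have h2 := Finset.card_insert_le f ((((Finset.range N).filter (fun p => Rec x p ∧ wS x (p+1) = v1))
          ∪ ((Finset.range N).filter (fun p => Rec x p ∧ wS x (p+1) = v2)))
          ∪ ((Finset.range N).filter (fun p => Rec x p ∧ wS x (p+1) = v3)))
    have h3 := Finset.card_union_le ((((Finset.range N).filter (fun p => Rec x p ∧ wS x (p+1) = v1))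
          ∪ ((Finset.range N).filter (fun p => Rec x p ∧ wS x (p+1) = v2))))
          (((Finset.range N).filter (fun p => Rec x p ∧ wS x (p+1) = v3)))
    have h4 := Finset.card_union_le (((Finset.range N).filter (fun p => Rec x p ∧ wS x (p+1) = v1)))
          (((Finset.range N).filter (fun p => Rec x p ∧ wS x (p+1) = v2)))
    have h5 := rec_level_card x N v1
    have h6 := rec_level_card x N v2
    have h7 := rec_level_card x N v3
    push_cast
    omega
  -- main case split
  rcases lt_trichotomy (pm x f - 1) (pm x N) with hc|hc|hc
  · -- Case 1: pm x N = pm x f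
    have hc1 : pm x N = pm x f := by omega
    have hpm' : pm x' N = pm x N := by rw [hpmN]; omega
    have hb := hbit_eq (Or.inl hpm')
    rw [if_pos hb]
    have hkeq : kk x' N = kk x N := by rw [e1, e2, hpm']
    have hcov : ∀ p, p < N → psiF x N p ≠ psiF x' N p → p ≠ f →
        Rec x p ∧ (wS x (p+1) = 0 ∨ wS x (p+1) = 0) := by
      intro p hpN hne hpf
      obtain ⟨hb', hxor⟩ := hdd p hpf hne
      exfalso
      rcases Nat.lt_or_ge p f with hplt|hpge
      · rw [htl p hplt, hkeq] at hxor
        exact hxor (by unfold Flip; tauto)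
      · have hpgt : f < p := by omega
        rw [htg p hpgt, hkeq] at hxor
        apply hxor
        constructor
        · rintro ⟨_, hr, _⟩
          obtain ⟨hge, hlt⟩ := hrec_gt p hpgt hpN hr
          omega
        · rintro ⟨_, ⟨hr, hlt⟩, _⟩
          obtain ⟨hge, _⟩ := hrec_gt p hpgt hpN hr
          omega
    have := hcnt2 0 0 hcov
    omega
  · -- Case 2: pm x N = pm x f - 1
    have hpm' : pm x' N = pm x N + 1 := by rw [hpmN]; omega
    have hifle : (if bitP x N = bitP x' N then (0:ℤ) else 1) ≤ 1 := by
      split <;> omega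
    have hcov : ∀ p, p < N → psiF x N p ≠ psiF x' N p → p ≠ f →
        Rec x p ∧ (wS x (p+1) = -(kk x N) ∨ wS x (p+1) = pm x N) := by
      intro p hpN hne hpf
      obtain ⟨hb', hxor⟩ := hdd p hpf hne
      rcases Nat.lt_or_ge p f with hplt|hpge
      · rw [htl p hplt] at hxor
        have hr : Rec x p := by
          by_contra hnr
          exact hxor (by unfold Flip; tauto)
        refine ⟨hr, Or.inl ?_⟩
        have hge := hrec_lt p hplt hr
        have hxor' : ¬ (wS x (p+1) < -(kk x N) ↔ wS x (p+1) < -(kk x' N)) := by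
          intro hiff
          apply hxor
          constructor
          · rintro ⟨h1, h2, h3⟩; exact ⟨h1, h2, hiff.mp h3⟩
          · rintro ⟨h1, h2, h3⟩; exact ⟨h1, h2, hiff.mpr h3⟩
        rw [e1, e2, hpm'] at hxor'
        rw [e1]
        omega
      · have hpgt : f < p := by omega
        rw [htg p hpgt] at hxor
        have hr : Rec x p := by
          by_contra hnr
          exact hxor (by unfold Flip; tauto)
        obtain ⟨hge, hlt⟩ := hrec_gt p hpgt hpN hr
        exact ⟨hr, Or.inr (by omega)⟩
    have := hcnt2 (-(kk x N)) (pm x N) hcov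
    omega
  · -- Case 3: pm x N ≤ pm x f - 2
    have hpm' : pm x' N = pm x N + 2 := by rw [hpmN]; omega
    have hb := hbit_eq (Or.inr hpm')
    rw [if_pos hb]
    have hk' : kk x' N = kk x N - 1 := by rw [e1, e2, hpm']; omega
    have hmain : ∀ p, p < N → psiF x N p ≠ psiF x' N p → p ≠ f →
        Rec x p ∧ ((p < f ∧ wS x (p+1) = -(kk x N)) ∨
          (f < p ∧ pm x N ≤ wS x (p+1) ∧ wS x (p+1) < pm x f ∧
            ¬ (wS x (p+1) < -(kk x N) ↔
               (wS x (p+1) < pm x f - 2 ∧ wS x (p+1) + 2 < -(kk x N) + 1)))) := by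
      intro p hpN hne hpf
      obtain ⟨hb', hxor⟩ := hdd p hpf hne
      rcases Nat.lt_or_ge p f with hplt|hpge
      · rw [htl p hplt] at hxor
        have hr : Rec x p := by
          by_contra hnr
          exact hxor (by unfold Flip; tauto)
        refine ⟨hr, Or.inl ⟨hplt, ?_⟩⟩
        have hge := hrec_lt p hplt hr
        have hxor' : ¬ (wS x (p+1) < -(kk x N) ↔ wS x (p+1) < -(kk x' N)) := by
          intro hiff
          apply hxor
          constructor
          · rintro ⟨h1, h2, h3⟩; exact ⟨h1, h2, hiff.mp h3⟩
          · rintro ⟨h1, h2, h3⟩; exact ⟨h1, h2, hiff.mpr h3⟩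
        rw [hk'] at hxor'
        omega
      · have hpgt : f < p := by omega
        rw [htg p hpgt] at hxor
        have hr : Rec x p := by
          by_contra hnr
          exact hxor (by unfold Flip; tauto)
        obtain ⟨hge, hlt⟩ := hrec_gt p hpgt hpN hr
        refine ⟨hr, Or.inr ⟨hpgt, hge, hlt, ?_⟩⟩
        intro hiff
        apply hxor
        rw [hk']
        constructor
        · rintro ⟨h1, h2, h3⟩
          refine ⟨h1, ⟨h2, (hiff.mp h3).1⟩, by have := (hiff.mp h3).2; omega⟩
        · rintro ⟨h1, ⟨h2, h4⟩, h3⟩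
          exact ⟨h1, h2, hiff.mpr ⟨h4, by omega⟩⟩
    rcases le_or_gt (kk x N) (-(pm x f)) with hab|hab
    · -- a1 ≥ k
      have hcov : ∀ p, p < N → psiF x N p ≠ psiF x' N p → p ≠ f →
          Rec x p ∧ (wS x (p+1) = -(kk x N) ∨ wS x (p+1) = pm x f - 1 ∨
            wS x (p+1) = pm x f - 2) := by
        intro p hpN hne hpf
        obtain ⟨hr, hv⟩ := hmain p hpN hne hpf
        refine ⟨hr, ?_⟩
        rcases hv with ⟨_, h⟩|⟨_, h1, h2, h3⟩
        · exact Or.inl h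
        · right
          omega
      have := hcnt3 (-(kk x N)) (pm x f - 1) (pm x f - 2) hcov
      omega
    · -- a1 < k
      have hcov : ∀ p, p < N → psiF x N p ≠ psiF x' N p → p ≠ f →
          Rec x p ∧ (wS x (p+1) = -(kk x N) - 1 ∨ wS x (p+1) = -(kk x N) - 1) := by
        intro p hpN hne hpf
        obtain ⟨hr, hv⟩ := hmain p hpN hne hpf
        refine ⟨hr, Or.inl ?_⟩
        rcases hv with ⟨hplt, h⟩|⟨_, h1, h2, h3⟩
        · -- p < f impossible here: records before f are at levels ≥ pm x f > -kk
          exfalso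
          have hge := hrec_lt p hplt hr
          omega
        · omega
      have := hcnt2 (-(kk x N) - 1) (-(kk x N) - 1) hcov
      omega

/-! ### Section 8: edge lemma B -/

def eps (y : ℕ → Bool) (N : ℕ) (b : Bool) : ℤ :=
  if (decide (wS y N % 2 = 0)) = b then 0 else 1

lemma GF_iff (y : ℕ → Bool) (N : ℕ) (b : Bool) (p : ℕ) :
    GF y N b p ↔ (p < N ∧ UOne y N p ∧ wS y p < eps y N b) := by
  unfold GF rSel eps
  have h1 : u1 y N - u0 y N = wS y N := by unfold u1 u0; ring
  rw [h1]
  split <;> (unfold u0; constructor <;> (rintro ⟨a1, a2, a3⟩; exact ⟨a1, a2, by omega⟩))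

lemma eps_bound (y N b) : 0 ≤ eps y N b ∧ eps y N b ≤ 1 := by
  unfold eps; split <;> omega

/-- appended-bit edge: preimages differ in at most one position -/
lemma edgeB0 (y : ℕ → Bool) (N : ℕ) (b b' : Bool) :
    (((Finset.range N).filter (fun p => recover y N b p ≠ recover y N b' p)).card : ℤ) ≤ 1 := by
  classical
  have hsub : (Finset.range N).filter (fun p => recover y N b p ≠ recover y N b' p) ⊆
      (Finset.range N).filter (fun p => UOne y N p ∧ wS y p = 0) := by
    intro p hp
    rw [Finset.mem_filter] at hp ⊢
    refine ⟨hp.1, ?_⟩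
    have hne := hp.2
    unfold recover at hne
    by_cases hyp : y p = true
    · rw [hyp] at hne
      simp only [Bool.true_and] at hne
      have : ¬ (GF y N b p ↔ GF y N b' p) := by
        intro hiff
        exact hne (by rw [decide_eq_decide.mpr hiff])
      rw [GF_iff, GF_iff] at this
      have e1 := eps_bound y N b
      have e2 := eps_bound y N b'
      have hpN : p < N := Finset.mem_range.mp hp.1
      have hu : UOne y N p := by
        by_contra hu
        exact this (by tauto)
      have harith : ¬ (wS y p < eps y N b ↔ wS y p < eps y N b') := by
        intro hiff
        apply this
        constructor
        · rintro ⟨h1,h2,h3⟩; exact ⟨h1,h2,hiff.mp h3⟩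
        · rintro ⟨h1,h2,h3⟩; exact ⟨h1,h2,hiff.mpr h3⟩
      exact ⟨hu, by omega⟩
    · have hyp' : y p = false := by simpa using hyp
      rw [hyp'] at hne
      simp at hne
  have h1 := Finset.card_le_card hsub
  have h2 := uone_level_card y N 0
  push_cast
  omega

/-- front-bit edge on ball: preimages differ in at most five positions -/
lemma edgeB (y : ℕ → Bool) (N g : ℕ) (hgN : g < N) (hyg : y g = false) (b : Bool) :
    (((Finset.range N).filter
        (fun p => recover y N b p ≠ recover (Function.update y g true) N b p)).card : ℤ) ≤ 5 := by
  classical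
  set y' := Function.update y g true with hy'
  have hwsN : wS y' N = wS y N + 2 := ((flip_wS y g hyg) N).2 hgN
  have heps : eps y' N b = eps y N b := by
    unfold eps
    rw [hwsN]
    have : (wS y N + 2) % 2 = wS y N % 2 := by omega
    rw [this]
  set ε := eps y N b with hε
  have hε01 := eps_bound y N b
  -- suffix min after g
  have hne : (Finset.Icc (g+1) N).Nonempty := ⟨N, Finset.mem_Icc.mpr ⟨by omega, le_refl N⟩⟩
  set μ := (Finset.Icc (g+1) N).inf' hne (wS y) with hμ
  have hμ_le : ∀ t, g < t → t ≤ N → μ ≤ wS y t := by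
    intro t h1 h2
    exact Finset.inf'_le _ (Finset.mem_Icc.mpr ⟨by omega, h2⟩)
  have hμ_mem : ∃ t, g < t ∧ t ≤ N ∧ wS y t = μ := by
    obtain ⟨t, ht, hwt⟩ := Finset.exists_mem_eq_inf' hne (wS y)
    rw [Finset.mem_Icc] at ht
    exact ⟨t, by omega, ht.2, hwt.symm⟩
  have hyp' : ∀ p : ℕ, p ≠ g → y' p = y p := by
    intro p hp; rw [hy']; exact Function.update_of_ne hp _ y
  -- cover
  have hsub : (Finset.range N).filter
      (fun p => recover y N b p ≠ recover y' N b p) ⊆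
      insert g (((Finset.range N).filter (fun p => UOne y N p ∧ wS y p = ε - 2)
        ∪ (Finset.range N).filter (fun p => UOne y N p ∧ wS y p = ε - 1))
        ∪ ((Finset.range N).filter
            (fun p => p ≤ g ∧ (∀ s, p < s → s ≤ g → wS y p < wS y s) ∧ wS y p = μ)
          ∪ (Finset.range N).filter
            (fun p => p ≤ g ∧ (∀ s, p < s → s ≤ g → wS y p < wS y s) ∧ wS y p = μ + 1))) := by
    intro p hp
    rw [Finset.mem_filter, Finset.mem_range] at hp
    obtain ⟨hpN, hne2⟩ := hp
    by_cases hpg : p = g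
    · exact Finset.mem_insert.mpr (Or.inl hpg)
    · refine Finset.mem_insert.mpr (Or.inr ?_)
      -- p ≠ g : y' p = y p, so disagreement means GF-xor and y p = true
      have hyeq := hyp' p hpg
      have hyt : y p = true ∧ ¬ (GF y N b p ↔ GF y' N b p) := by
        unfold recover at hne2
        rw [hyeq] at hne2
        by_cases hb : y p = true
        · rw [hb] at hne2
          simp only [Bool.true_and] at hne2
          refine ⟨hb, fun hiff => hne2 ?_⟩
          rw [decide_eq_decide.mpr hiff]
        · exfalso
          have hb' : y p = false := by simpa using hb
          rw [hb'] at hne2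
          simp at hne2
      obtain ⟨hyt1, hxor⟩ := hyt
      rw [GF_iff, GF_iff, heps, ← hε] at hxor
      rcases Nat.lt_or_ge g p with hgp|hgp
      · -- p > g : UOne same, level shifts
        have hiff := flip_uone_gt y g hyg (N := N) hgp
        have hws : wS y' p = wS y p + 2 := ((flip_wS y g hyg) p).2 hgp
        have hu : UOne y N p := by
          by_contra hu
          apply hxor
          constructor
          · rintro ⟨_, h2, _⟩; exact absurd h2 hu
          · rintro ⟨_, h2, _⟩; exact absurd (hiff.mp h2) hu
        have hv : wS y p = ε - 2 ∨ wS y p = ε - 1 := by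
          by_contra hv
          push_neg at hv
          apply hxor
          rw [hws]
          constructor
          · rintro ⟨h1, _, h3⟩
            refine ⟨h1, hiff.mpr hu, ?_⟩
            omega
          · rintro ⟨h1, _, h3⟩
            exact ⟨h1, hu, by omega⟩
        rcases hv with h|h
        · exact Finset.mem_union.mpr (Or.inl (Finset.mem_union.mpr (Or.inl (Finset.mem_filter.mpr
            ⟨Finset.mem_range.mpr hpN, hu, h⟩))))
        · exact Finset.mem_union.mpr (Or.inl (Finset.mem_union.mpr (Or.inr (Finset.mem_filter.mpr
            ⟨Finset.mem_range.mpr hpN, hu, h⟩))))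
      · -- p < g : must be a new unmatched-one
        have hplt : p < g := by omega
        have hws : wS y' p = wS y p := ((flip_wS y g hyg) p).1 (by omega)
        -- old UOnes agree
        have hu' : UOne y' N p ∧ ¬ UOne y N p := by
          by_cases hu : UOne y N p
          · exfalso
            apply hxor
            have := flip_uone_lt_of y g hyg hplt (by omega) hu
            rw [hws]
            constructor
            · rintro ⟨h1, _, h3⟩; exact ⟨h1, this, h3⟩
            · rintro ⟨h1, _, h3⟩; exact ⟨h1, hu, h3⟩
          · constructor
            · by_contra hu2
              apply hxor
              constructor
              · rintro ⟨_, h2, _⟩; exact absurd h2 hu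
              · rintro ⟨_, h2, _⟩; exact absurd h2 hu2
            · exact hu
        obtain ⟨hnew, hold⟩ := hu'
        obtain ⟨habove, t, ht1, ht2, ht3, ht4⟩ :=
          flip_uone_new y g hyg (N := N) hgN (by omega) hnew hold
        have hμ1 : μ ≤ wS y p := le_trans (hμ_le t ht1 ht2) ht3
        have hμ2 : wS y p ≤ μ + 1 := by
          obtain ⟨t', ht1', ht2', ht3'⟩ := hμ_mem
          have := hnew.2 t' (by omega) ht2'
          have hws2 : wS y' t' = wS y t' + 2 := ((flip_wS y g hyg) t').2 ht1'
          rw [hws, hws2, ht3'] at this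
          omega
        have hv : wS y p = μ ∨ wS y p = μ + 1 := by omega
        rcases hv with h|h
        · exact Finset.mem_union.mpr (Or.inr (Finset.mem_union.mpr (Or.inl (Finset.mem_filter.mpr
            ⟨Finset.mem_range.mpr hpN, by omega, habove, h⟩))))
        · exact Finset.mem_union.mpr (Or.inr (Finset.mem_union.mpr (Or.inr (Finset.mem_filter.mpr
            ⟨Finset.mem_range.mpr hpN, by omega, habove, h⟩))))
  -- count
  have hB : ∀ v : ℤ, (((Finset.range N).filter
      (fun p => p ≤ g ∧ (∀ s, p < s → s ≤ g → wS y p < wS y s) ∧ wS y p = v)).card) ≤ 1 := by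
    intro v
    apply Finset.card_le_one.mpr
    intro p hp q hq
    rw [Finset.mem_filter] at hp hq
    obtain ⟨_, hpg, hpab, hpv⟩ := hp
    obtain ⟨_, hqg, hqab, hqv⟩ := hq
    by_contra hne3
    rcases Nat.lt_or_ge p q with h|h
    · have := hpab q h hqg; omega
    · have hqp : q < p := by omega
      have := hqab p hqp hpg; omega
  have h1 := Finset.card_le_card hsub
  have h2 := Finset.card_insert_le g (((Finset.range N).filter (fun p => UOne y N p ∧ wS y p = ε - 2)
        ∪ (Finset.range N).filter (fun p => UOne y N p ∧ wS y p = ε - 1))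
        ∪ ((Finset.range N).filter
            (fun p => p ≤ g ∧ (∀ s, p < s → s ≤ g → wS y p < wS y s) ∧ wS y p = μ)
          ∪ (Finset.range N).filter
            (fun p => p ≤ g ∧ (∀ s, p < s → s ≤ g → wS y p < wS y s) ∧ wS y p = μ + 1)))
  have h3 := Finset.card_union_le ((Finset.range N).filter (fun p => UOne y N p ∧ wS y p = ε - 2)
        ∪ (Finset.range N).filter (fun p => UOne y N p ∧ wS y p = ε - 1))
        ((Finset.range N).filter
            (fun p => p ≤ g ∧ (∀ s, p < s → s ≤ g → wS y p < wS y s) ∧ wS y p = μ)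
          ∪ (Finset.range N).filter
            (fun p => p ≤ g ∧ (∀ s, p < s → s ≤ g → wS y p < wS y s) ∧ wS y p = μ + 1))
  have h4 := Finset.card_union_le ((Finset.range N).filter (fun p => UOne y N p ∧ wS y p = ε - 2))
        ((Finset.range N).filter (fun p => UOne y N p ∧ wS y p = ε - 1))
  have h5 := Finset.card_union_le ((Finset.range N).filter
            (fun p => p ≤ g ∧ (∀ s, p < s → s ≤ g → wS y p < wS y s) ∧ wS y p = μ))
          ((Finset.range N).filter
            (fun p => p ≤ g ∧ (∀ s, p < s → s ≤ g → wS y p < wS y s) ∧ wS y p = μ + 1))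
  have h6 := uone_level_card y N (ε - 2)
  have h7 := uone_level_card y N (ε - 1)
  have h8 := hB μ
  have h9 := hB (μ + 1)
  push_cast
  omega

/-! ### Section 9: Fin-level wrappers -/

section Wrap
variable {n : ℕ}

def ext (x : Fin n → Bool) : ℕ → Bool := fun p => if h : p < n then x ⟨p, h⟩ else false

def Psi (x : Fin n → Bool) : Fin (n+1) → Bool :=
  fun i => if h : (i : ℕ) < n then psiF (ext x) n i else bitP (ext x) n

lemma ext_lt (x : Fin n → Bool) {p : ℕ} (h : p < n) : ext x p = x ⟨p, h⟩ := dif_pos h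

lemma ext_ge (x : Fin n → Bool) {p : ℕ} (h : ¬ p < n) : ext x p = false := dif_neg h

lemma ext_update (x : Fin n → Bool) (i : Fin n) (v : Bool) :
    ext (Function.update x i v) = Function.update (ext x) (i : ℕ) v := by
  funext p
  by_cases h : p < n
  · rw [ext_lt _ h]
    by_cases hpi : p = (i : ℕ)
    · have : (⟨p, h⟩ : Fin n) = i := by exact Fin.ext hpi
      rw [this, Function.update_self, hpi, Function.update_self]
    · have : (⟨p, h⟩ : Fin n) ≠ i := by
        intro hc; exact hpi (congrArg Fin.val hc)
      rw [Function.update_of_ne this, Function.update_of_ne hpi, ext_lt _ h]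
  · rw [ext_ge _ h, Function.update_of_ne (by omega : p ≠ (i:ℕ)), ext_ge _ h]

lemma card_filter_fin_eq (m : ℕ) (P : Fin m → Prop) [DecidablePred P]
    (Q : ℕ → Prop) [DecidablePred Q] (h : ∀ p (hp : p < m), (P ⟨p, hp⟩ ↔ Q p)) :
    (Finset.univ.filter P).card = ((Finset.range m).filter Q).card := by
  classical
  apply Finset.card_bij (fun (i : Fin m) (_ : i ∈ Finset.univ.filter P) => (i : ℕ))
  · intro i hi
    rw [Finset.mem_filter] at hi
    rw [Finset.mem_filter, Finset.mem_range]
    exact ⟨i.isLt, (h i i.isLt).mp (by simpa using hi.2)⟩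
  · intro i _ j _ hij
    exact Fin.ext hij
  · intro p hp
    rw [Finset.mem_filter, Finset.mem_range] at hp
    exact ⟨⟨p, hp.1⟩, Finset.mem_filter.mpr ⟨Finset.mem_univ _, (h p hp.1).mpr hp.2⟩, rfl⟩

lemma hammingDist_eq_core (x y : Fin n → Bool) :
    hammingDist x y = ((Finset.range n).filter (fun p => ext x p ≠ ext y p)).card := by
  classical
  have : hammingDist x y = (Finset.univ.filter (fun i => x i ≠ y i)).card := rfl
  rw [this]
  apply card_filter_fin_eq
  intro p hp
  rw [ext_lt _ hp, ext_lt _ hp]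

lemma psiF_ge (x : Fin n → Bool) {p : ℕ} (h : ¬ p < n) : psiF (ext x) n p = false := by
  unfold psiF upK
  rw [ext_ge _ h]
  simp only [Bool.false_or, decide_eq_false_iff_not]
  unfold Flip
  tauto

/-- distance of images splits into core part and bit part -/
lemma psi_dist (x y : Fin n → Bool) :
    (hammingDist (Psi x) (Psi y) : ℤ)
      = (((Finset.range n).filter (fun p => psiF (ext x) n p ≠ psiF (ext y) n p)).card : ℤ)
        + (if bitP (ext x) n = bitP (ext y) n then 0 else 1) := by
  classical
  have h1 : hammingDist (Psi x) (Psi y)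
      = (Finset.univ.filter (fun i => Psi x i ≠ Psi y i)).card := rfl
  have h2 : (Finset.univ.filter (fun i => Psi x i ≠ Psi y i)).card
      = ((Finset.range (n+1)).filter
          (fun p => (if p < n then psiF (ext x) n p ≠ psiF (ext y) n p
            else bitP (ext x) n ≠ bitP (ext y) n))).card := by
    apply card_filter_fin_eq
    intro p hp
    unfold Psi
    by_cases h : p < n
    · rw [if_pos h]
      simp only [dif_pos h]
    · rw [if_neg h]
      simp only [dif_neg h]
  rw [h1, h2, Finset.range_add_one, Finset.filter_insert]
  by_cases hb : bitP (ext x) n = bitP (ext y) n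
  · rw [if_neg (by simp [hb]), if_pos hb]
    have : ∀ p ∈ Finset.range n, ((if p < n then psiF (ext x) n p ≠ psiF (ext y) n p
            else bitP (ext x) n ≠ bitP (ext y) n) ↔ (psiF (ext x) n p ≠ psiF (ext y) n p)) := by
      intro p hp
      rw [Finset.mem_range] at hp
      rw [if_pos hp]
    rw [Finset.filter_congr this]
    omega
  · rw [if_pos (by simp [hb]), if_neg hb]
    rw [Finset.card_insert_of_notMem (by simp)]
    have : ∀ p ∈ Finset.range n, ((if p < n then psiF (ext x) n p ≠ psiF (ext y) n p
            else bitP (ext x) n ≠ bitP (ext y) n) ↔ (psiF (ext x) n p ≠ psiF (ext y) n p)) := by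
      intro p hp
      rw [Finset.mem_range] at hp
      rw [if_pos hp]
    rw [Finset.filter_congr this]
    push_cast
    omega

/-- weight of image -/
lemma psi_wt (x : Fin n → Bool) :
    (hWt (Psi x) : ℤ) = (((Finset.range n).filter (fun p => psiF (ext x) n p = true)).card : ℤ)
      + (if bitP (ext x) n then 1 else 0) := by
  classical
  have h2 : (Finset.univ.filter (fun i => Psi x i = true)).card
      = ((Finset.range (n+1)).filter
          (fun p => (if p < n then psiF (ext x) n p = true else bitP (ext x) n = true))).card := by
    apply card_filter_fin_eq
    intro p hp
    unfold Psi
    by_cases h : p < n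
    · rw [if_pos h]; simp only [dif_pos h]
    · rw [if_neg h]; simp only [dif_neg h]
  have h1 : hWt (Psi x) = (Finset.univ.filter (fun i => Psi x i = true)).card := rfl
  rw [h1, h2, Finset.range_add_one, Finset.filter_insert]
  have hcg : ∀ p ∈ Finset.range n, ((if p < n then psiF (ext x) n p = true
          else bitP (ext x) n = true) ↔ (psiF (ext x) n p = true)) := by
    intro p hp
    rw [Finset.mem_range] at hp
    rw [if_pos hp]
  by_cases hb : bitP (ext x) n = true
  · rw [if_pos (by simp [hb]), Finset.card_insert_of_notMem (by simp),
      Finset.filter_congr hcg, hb]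
    push_cast
    simp
  · rw [if_neg (by simp [hb]), Finset.filter_congr hcg]
    have : bitP (ext x) n = false := by simpa using hb
    rw [this]
    push_cast; ring

/-- ball membership -/
lemma psi_in_ball (hn : Even n) (x : Fin n → Bool) : n / 2 < hWt (Psi x) := by
  have hw := psiF_weight (ext x) n (by obtain ⟨m, hm⟩ := hn; exact ⟨m, by push_cast; omega⟩)
  have hd := psi_wt x
  obtain ⟨m, hm⟩ := hn
  have h2 : n / 2 = m := by omega
  have hb : (if bitP (ext x) n then (1:ℤ) else 0) = (if bitP (ext x) n then (1:ℤ) else 0) := rfl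
  by_cases hbb : bitP (ext x) n <;>
    (simp only [hbb, if_true, if_false] at hd hw ⊢; omega)
end Wrap

/-! ### Section 10: bijectivity and path lemmas -/

section Bij
variable {n : ℕ}

lemma psi_injective : Function.Injective (Psi (n := n)) := by
  intro x y h
  have hcore : psiF (ext x) n = psiF (ext y) n := by
    funext p
    by_cases hp : p < n
    · have := congrFun h ⟨p, by omega⟩
      unfold Psi at this
      simpa [dif_pos hp] using this
    · rw [psiF_ge x hp, psiF_ge y hp]
  have hbit : bitP (ext x) n = bitP (ext y) n := by
    have := congrFun h ⟨n, by omega⟩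
    unfold Psi at this
    simpa using this
  have hext : ∀ p, ext x p = ext y p := by
    intro p
    rw [← recover_psiF (ext x) n p, ← recover_psiF (ext y) n p, hcore, hbit]
  funext i
  have := hext i
  rwa [ext_lt x i.isLt, ext_lt y i.isLt] at this

def ballF (n : ℕ) : Finset (Fin (n+1) → Bool) :=
  Finset.univ.filter (fun z => n / 2 < hWt z)

lemma hWt_le (z : Fin (n+1) → Bool) : hWt z ≤ n + 1 := by
  unfold hWt
  calc (Finset.univ.filter (fun i => z i = true)).card ≤ Finset.univ.card :=
        Finset.card_le_card (Finset.filter_subset _ _)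
    _ = n + 1 := by simp

lemma hWt_compl (z : Fin (n+1) → Bool) : hWt (fun i => !(z i)) = n + 1 - hWt z := by
  classical
  unfold hWt
  have h1 : (Finset.univ.filter (fun i => (!(z i)) = true)) =
      (Finset.univ.filter (fun i => ¬ (z i = true))) := by
    ext i; simp
  rw [h1]
  have h2 := Finset.card_filter_add_card_filter_not
    (s := (Finset.univ : Finset (Fin (n+1)))) (p := fun i => z i = true)
  have h3 : (Finset.univ : Finset (Fin (n+1))).card = n + 1 := by simp
  omega

lemma card_ballF (hn : Even n) : (ballF n).card = 2 ^ n := by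
  classical
  obtain ⟨m, hm⟩ := hn
  have hcompl : (ballF n).card = (Finset.univ.filter
      (fun z : Fin (n+1) → Bool => ¬ (n / 2 < hWt z))).card := by
    apply Finset.card_nbij (fun z => fun i => !(z i))
    · intro z hz
      rw [ballF, Finset.mem_coe, Finset.mem_filter] at hz
      rw [Finset.mem_coe, Finset.mem_filter]
      refine ⟨Finset.mem_univ _, ?_⟩
      rw [hWt_compl]
      have := hWt_le z
      omega
    · intro z1 h1 z2 h2 he
      funext i
      have := congrFun he i
      simpa using this
    · intro z hz
      simp only [Finset.coe_filter, Set.mem_setOf_eq] at hz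
      have hwmem : (fun i => !(z i)) ∈ (ballF n : Finset (Fin (n+1) → Bool)) := by
        rw [ballF, Finset.mem_filter]
        refine ⟨Finset.mem_univ _, ?_⟩
        rw [hWt_compl]
        have := hWt_le z
        omega
      refine ⟨fun i => !(z i), Finset.mem_coe.mpr hwmem, ?_⟩
      funext i; simp
  have htot := Finset.card_filter_add_card_filter_not
    (s := (Finset.univ : Finset (Fin (n+1) → Bool)))
    (p := fun z => n / 2 < hWt z)
  have hcardu : (Finset.univ : Finset (Fin (n+1) → Bool)).card = 2 ^ (n+1) := by
    rw [Finset.card_univ]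
    rw [Fintype.card_fun]
    simp
  rw [ballF] at hcompl ⊢
  have hpow : 2 ^ (n+1) = 2 ^ n + 2 ^ n := by ring
  omega

lemma psi_image (hn : Even n) :
    Finset.univ.image (Psi (n := n)) = ballF n := by
  classical
  apply Finset.eq_of_subset_of_card_le
  · intro z hz
    rw [Finset.mem_image] at hz
    obtain ⟨x, _, rfl⟩ := hz
    rw [ballF, Finset.mem_filter]
    exact ⟨Finset.mem_univ _, psi_in_ball hn x⟩
  · rw [card_ballF hn, Finset.card_image_of_injective _ psi_injective]
    rw [Finset.card_univ, Fintype.card_fun]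
    simp

lemma psi_surj (hn : Even n) (z : Fin (n+1) → Bool) (hz : n / 2 < hWt z) :
    ∃ x : Fin n → Bool, Psi x = z := by
  classical
  have hmem : z ∈ ballF n := by rw [ballF, Finset.mem_filter]; exact ⟨Finset.mem_univ _, hz⟩
  rw [← psi_image hn, Finset.mem_image] at hmem
  obtain ⟨x, _, hx⟩ := hmem
  exact ⟨x, hx⟩

/-! edge wrappers -/

lemma edgeA_fin (x : Fin n → Bool) (i : Fin n) (hxi : x i = false) :
    hammingDist (Psi x) (Psi (Function.update x i true)) ≤ 4 := by
  have hcore := edgeA (ext x) n i (i.isLt) (by rw [ext_lt x i.isLt, Fin.eta]; exact hxi)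
  rw [← ext_update x i true] at hcore
  have hd := psi_dist x (Function.update x i true)
  have hnn : (0:ℤ) ≤ (if bitP (ext x) n = bitP (ext (Function.update x i true)) n
      then (0:ℤ) else 1) := by split <;> omega
  omega

lemma update_update (x : Fin n → Bool) (i : Fin n) (v : Bool) :
    Function.update (Function.update x i v) i (x i) = x := by
  funext j
  by_cases hj : j = i
  · subst hj; rw [Function.update_self]
  · rw [Function.update_of_ne hj, Function.update_of_ne hj]

lemma edgeA_fin' (x : Fin n → Bool) (i : Fin n) (v : Bool) :
    hammingDist (Psi x) (Psi (Function.update x i v)) ≤ 4 := by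
  by_cases hv : v = x i
  · subst hv
    rw [Function.update_eq_self]
    simp
  · rcases Bool.eq_false_or_eq_true (x i) with hxi|hxi
    · have hv' : v = false := by
        rcases Bool.eq_false_or_eq_true v with h|h
        · exact absurd (h.trans hxi.symm) hv
        · exact h
      subst hv'
      have h1 : x = Function.update (Function.update x i false) i true := by
        conv_lhs => rw [← update_update x i false]
        rw [hxi]
      rw [hammingDist_comm]
      calc hammingDist (Psi (Function.update x i false)) (Psi x)
          = hammingDist (Psi (Function.update x i false))
              (Psi (Function.update (Function.update x i false) i true)) := by rw [← h1]
        _ ≤ 4 := edgeA_fin (Function.update x i false) i (Function.update_self i false x)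
    · have hv' : v = true := by
        rcases Bool.eq_false_or_eq_true v with h|h
        · exact h
        · exact absurd (h.trans hxi.symm) hv
      subst hv'
      exact edgeA_fin x i hxi

lemma edgeB_fin (x y : Fin n → Bool) (h : hammingDist (Psi x) (Psi y) = 1) :
    hammingDist x y ≤ 5 := by
  classical
  have hd := psi_dist x y
  rw [h] at hd
  have hx_rec : ∀ p, ext x p = recover (psiF (ext x) n) n (bitP (ext x) n) p :=
    fun p => (recover_psiF (ext x) n p).symm
  have hy_rec : ∀ p, ext y p = recover (psiF (ext y) n) n (bitP (ext y) n) p :=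
    fun p => (recover_psiF (ext y) n p).symm
  have hdist : hammingDist x y
      = ((Finset.range n).filter (fun p => ext x p ≠ ext y p)).card := hammingDist_eq_core x y
  by_cases hb : bitP (ext x) n = bitP (ext y) n
  · -- bits equal, exactly one core difference
    rw [if_pos hb] at hd
    have hcore : (((Finset.range n).filter
        (fun p => psiF (ext x) n p ≠ psiF (ext y) n p)).card) = 1 := by omega
    obtain ⟨g, hg⟩ := Finset.card_eq_one.mp hcore
    have hgmem : g ∈ (Finset.range n).filter
        (fun p => psiF (ext x) n p ≠ psiF (ext y) n p) := by rw [hg]; exact Finset.mem_singleton_self g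
    rw [Finset.mem_filter, Finset.mem_range] at hgmem
    obtain ⟨hgn, hgne⟩ := hgmem
    have hagree : ∀ p, p ≠ g → psiF (ext x) n p = psiF (ext y) n p := by
      intro p hp
      by_cases hpn : p < n
      · by_contra hc
        have : p ∈ (Finset.range n).filter
            (fun p => psiF (ext x) n p ≠ psiF (ext y) n p) := by
          rw [Finset.mem_filter, Finset.mem_range]; exact ⟨hpn, hc⟩
        rw [hg, Finset.mem_singleton] at this
        exact hp this
      · rw [psiF_ge x hpn, psiF_ge y hpn]
    have hupd : psiF (ext y) n = Function.update (psiF (ext x) n) g (psiF (ext y) n g) := by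
      funext p
      by_cases hp : p = g
      · subst hp; rw [Function.update_self]
      · rw [Function.update_of_ne hp, hagree p hp]
    rcases Bool.eq_false_or_eq_true (psiF (ext x) n g) with hxg|hxg
    · -- x-side true at g : y-side false, symmetric case first
      have hyg : psiF (ext y) n g = false := by
        rcases Bool.eq_false_or_eq_true (psiF (ext y) n g) with h2|h2
        · exact absurd (hxg.trans h2.symm) hgne
        · exact h2
      have hupd' : psiF (ext x) n = Function.update (psiF (ext y) n) g (psiF (ext x) n g) := by
        funext p
        by_cases hp : p = g
        · subst hp; rw [Function.update_self]
        · rw [Function.update_of_ne hp, hagree p hp]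
      have hcB := edgeB (psiF (ext y) n) n g hgn hyg (bitP (ext y) n)
      rw [← hxg, ← hupd'] at hcB
      have : ((Finset.range n).filter (fun p => ext x p ≠ ext y p)).card
          = ((Finset.range n).filter (fun p => recover (psiF (ext y) n) n (bitP (ext y) n) p
              ≠ recover (psiF (ext x) n) n (bitP (ext y) n) p)).card := by
        congr 1
        apply Finset.filter_congr
        intro p _
        rw [hx_rec p, hy_rec p, hb]
        tauto
      omega
    · -- x-side false at g
      have hyg : psiF (ext y) n g = true := by
        rcases Bool.eq_false_or_eq_true (psiF (ext y) n g) with h2|h2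
        · exact h2
        · exact absurd (hxg.trans h2.symm) hgne
      have hcB := edgeB (psiF (ext x) n) n g hgn hxg (bitP (ext x) n)
      rw [← hyg, ← hupd] at hcB
      have : ((Finset.range n).filter (fun p => ext x p ≠ ext y p)).card
          = ((Finset.range n).filter (fun p => recover (psiF (ext x) n) n (bitP (ext x) n) p
              ≠ recover (psiF (ext y) n) n (bitP (ext x) n) p)).card := by
        congr 1
        apply Finset.filter_congr
        intro p _
        rw [hx_rec p, hy_rec p, hb]
      omega
  · -- bits differ, cores equal
    rw [if_neg hb] at hd
    have hcore : (((Finset.range n).filter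
        (fun p => psiF (ext x) n p ≠ psiF (ext y) n p)).card) = 0 := by omega
    have hcoreq : psiF (ext x) n = psiF (ext y) n := by
      funext p
      by_cases hpn : p < n
      · by_contra hc
        have : p ∈ (Finset.range n).filter
            (fun p => psiF (ext x) n p ≠ psiF (ext y) n p) := by
          rw [Finset.mem_filter, Finset.mem_range]; exact ⟨hpn, hc⟩
        rw [Finset.card_eq_zero.mp hcore] at this
        exact absurd this (Finset.notMem_empty p)
      · rw [psiF_ge x hpn, psiF_ge y hpn]
    have hcB := edgeB0 (psiF (ext x) n) n (bitP (ext x) n) (bitP (ext y) n)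
    have : ((Finset.range n).filter (fun p => ext x p ≠ ext y p)).card
        = ((Finset.range n).filter (fun p => recover (psiF (ext x) n) n (bitP (ext x) n) p
            ≠ recover (psiF (ext x) n) n (bitP (ext y) n) p)).card := by
      congr 1
      apply Finset.filter_congr
      intro p _
      rw [hx_rec p, hy_rec p, ← hcoreq]
    omega
end Bij

/-! ### Section 11: path arguments and the main theorem -/

section Path
variable {n : ℕ}

lemma dist_update_succ (x y : Fin n → Bool) (i : Fin n) (hi : x i ≠ y i) :
    hammingDist (Function.update x i (y i)) y + 1 = hammingDist x y := by
  classical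
  have h1 : (Finset.univ.filter (fun j => Function.update x i (y i) j ≠ y j))
      = (Finset.univ.filter (fun j => x j ≠ y j)).erase i := by
    ext j
    rw [Finset.mem_erase, Finset.mem_filter, Finset.mem_filter]
    by_cases hj : j = i
    · subst hj; simp [Function.update_self]
    · simp [Function.update_of_ne hj, hj]
  have h2 : i ∈ Finset.univ.filter (fun j => x j ≠ y j) := by
    rw [Finset.mem_filter]; exact ⟨Finset.mem_univ _, hi⟩
  have h3 : hammingDist (Function.update x i (y i)) y
      = ((Finset.univ.filter (fun j => x j ≠ y j)).erase i).card := by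
    rw [show hammingDist (Function.update x i (y i)) y
      = (Finset.univ.filter (fun j => Function.update x i (y i) j ≠ y j)).card from rfl, h1]
  have h4 : hammingDist x y = (Finset.univ.filter (fun j => x j ≠ y j)).card := rfl
  have h5 : 1 ≤ (Finset.univ.filter (fun j => x j ≠ y j)).card :=
    Finset.card_pos.mpr ⟨i, h2⟩
  rw [h3, h4, Finset.card_erase_of_mem h2]
  omega

lemma dist_update_one {m : ℕ} (z : Fin m → Bool) (i : Fin m) (v : Bool) (hv : v ≠ z i) :
    hammingDist z (Function.update z i v) = 1 := by
  classical
  have h1 : (Finset.univ.filter (fun j => z j ≠ Function.update z i v j)) = {i} := by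
    ext j
    rw [Finset.mem_filter, Finset.mem_singleton]
    by_cases hj : j = i
    · subst hj; simp [Function.update_self]; exact fun hc => hv hc.symm
    · simp [Function.update_of_ne hj, hj]
  rw [show hammingDist z (Function.update z i v)
    = (Finset.univ.filter (fun j => z j ≠ Function.update z i v j)).card from rfl, h1]
  simp

lemma hWt_mono {m : ℕ} (z w : Fin m → Bool) (h : ∀ j, z j = true → w j = true) :
    hWt z ≤ hWt w := by
  classical
  apply Finset.card_le_card
  intro j hj
  rw [Finset.mem_filter] at hj ⊢
  exact ⟨Finset.mem_univ _, h j hj.2⟩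

lemma upper_all : ∀ (d : ℕ) (x y : Fin n → Bool), hammingDist x y ≤ d →
    hammingDist (Psi x) (Psi y) ≤ 4 * d := by
  intro d
  induction d with
  | zero =>
    intro x y h
    have hxy : x = y := hammingDist_eq_zero.mp (Nat.le_zero.mp h)
    subst hxy
    simp
  | succ d ih =>
    intro x y h
    by_cases hxy : x = y
    · subst hxy; simp
    · have hex : ∃ i, x i ≠ y i := by
        by_contra hc; push_neg at hc; exact hxy (funext hc)
      obtain ⟨i, hi⟩ := hex
      have hstep := edgeA_fin' x i (y i)
      have hd1 : hammingDist (Function.update x i (y i)) y ≤ d := by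
        have := dist_update_succ x y i hi; omega
      have hrec := ih (Function.update x i (y i)) y hd1
      have htri := hammingDist_triangle (Psi x) (Psi (Function.update x i (y i))) (Psi y)
      omega

lemma lower_all (hn : Even n) : ∀ (d : ℕ) (x y : Fin n → Bool),
    hammingDist (Psi x) (Psi y) ≤ d → hammingDist x y ≤ 5 * d := by
  intro d
  induction d with
  | zero =>
    intro x y h
    have : Psi x = Psi y := hammingDist_eq_zero.mp (Nat.le_zero.mp h)
    have hxy := psi_injective this
    subst hxy
    simp
  | succ d ih =>
    intro x y h
    by_cases hxy : x = y
    · subst hxy; simp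
    · have hne : Psi x ≠ Psi y := fun hc => hxy (psi_injective hc)
      -- choose a coordinate where they differ, preferring false→true
      have hmain : ∃ i : Fin (n+1), Psi x i ≠ Psi y i ∧ n / 2 < hWt (Function.update (Psi x) i (Psi y i)) := by
        by_cases hex2 : ∃ i, Psi x i = false ∧ Psi y i = true
        · obtain ⟨i, hxi, hyi⟩ := hex2
          refine ⟨i, by rw [hxi, hyi]; simp, ?_⟩
          have hmono : ∀ j, Psi x j = true → Function.update (Psi x) i (Psi y i) j = true := by
            intro j hj
            by_cases hji : j = i
            · subst hji; rw [hj] at hxi; exact absurd hxi (by simp)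
            · rwa [Function.update_of_ne hji]
          exact lt_of_lt_of_le (psi_in_ball hn x) (hWt_mono _ _ hmono)
        · push_neg at hex2
          have hex : ∃ i, Psi x i ≠ Psi y i := by
            by_contra hc; push_neg at hc; exact hne (funext hc)
          obtain ⟨i, hi⟩ := hex
          have hxi : Psi x i = true := by
            rcases Bool.eq_false_or_eq_true (Psi x i) with h1|h1
            · exact h1
            · exfalso
              rcases Bool.eq_false_or_eq_true (Psi y i) with h2|h2
              · exact absurd h2 (by simpa [h1] using hex2 i h1)
              · exact hi (h1.trans h2.symm)
          have hyi : Psi y i = false := by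
            rcases Bool.eq_false_or_eq_true (Psi y i) with h2|h2
            · exact absurd (hxi.trans h2.symm) hi
            · exact h2
          refine ⟨i, hi, ?_⟩
          have hmono : ∀ j, Psi y j = true → Function.update (Psi x) i (Psi y i) j = true := by
            intro j hj
            by_cases hji : j = i
            · subst hji; rw [hj] at hyi; exact absurd hyi (by simp)
            · rw [Function.update_of_ne hji]
              rcases Bool.eq_false_or_eq_true (Psi x j) with h1|h1
              · exact h1
              · exact absurd hj (by simpa [h1] using hex2 j h1)
          exact lt_of_lt_of_le (psi_in_ball hn y) (hWt_mono _ _ hmono)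
      obtain ⟨i, hi, hball⟩ := hmain
      obtain ⟨x₁, hx₁⟩ := psi_surj hn (Function.update (Psi x) i (Psi y i)) hball
      have hstep : hammingDist x x₁ ≤ 5 := by
        apply edgeB_fin
        rw [hx₁]
        exact dist_update_one (Psi x) i (Psi y i) (Ne.symm hi)
      have hd1 : hammingDist (Psi x₁) (Psi y) ≤ d := by
        rw [hx₁]
        have := dist_update_succ (Psi x) (Psi y) i hi
        omega
      have hrec := ih x₁ y hd1
      have htri := hammingDist_triangle x x₁ y
      omega
end Path

end CB

/-- For every even `n` there is a bijection `ψ` from `{0,1}^n` onto the Hamming ball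
`{z ∈ {0,1}^{n+1} : |z| > n/2}` such that for all distinct `x, y`,
`(1/5)·dist(x,y) ≤ dist(ψ x, ψ y) ≤ 4·dist(x,y)`. -/
theorem cube_to_ball_biLipschitz (n : ℕ) (hn : Even n) :
    ∃ ψ : (Fin n → Bool) → (Fin (n + 1) → Bool),
      Set.BijOn ψ Set.univ {z | n / 2 < hWt z} ∧
      ∀ x y : Fin n → Bool, x ≠ y →
        hammingDist x y ≤ 5 * hammingDist (ψ x) (ψ y) ∧
        hammingDist (ψ x) (ψ y) ≤ 4 * hammingDist x y := by
  refine ⟨CB.Psi, ⟨?_, ?_, ?_⟩, ?_⟩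
  · intro x _
    exact CB.psi_in_ball hn x
  · intro x _ y _ h
    exact CB.psi_injective h
  · intro z hz
    obtain ⟨x, hx⟩ := CB.psi_surj hn z hz
    exact ⟨x, Set.mem_univ _, hx⟩
  · intro x y _
    constructor
    · exact CB.lower_all hn (hammingDist (CB.Psi x) (CB.Psi y)) x y (le_refl _)
    · exact CB.upper_all (hammingDist x y) x y (le_refl _)
end

section
/- Let n be even and define φ : {0,1}^n → {0,1}^{n+1} by: if |x| ≤ n/2 then φ(x) = flip(x) ∘ 1, else φ(x) = x ∘ 0, where flip(x) is the bitwise complement of x and ∘ denotes concatenation. Then φ is a bijection from {0,1}^n onto the Hamming ball {y ∈ {0,1}^{n+1} : |y| > n/2}. -/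
/-- The simple map `φ(x) = flip(x) ∘ 1` if `|x| ≤ n/2` and `φ(x) = x ∘ 0` otherwise. -/
def phi (n : ℕ) (x : Fin n → Bool) : Fin (n + 1) → Bool :=
  if hWt x ≤ n / 2 then Fin.snoc (fun i => !(x i)) true else Fin.snoc x false

lemma hWt_eq_sum {n : ℕ} (x : Fin n → Bool) : hWt x = ∑ i, (x i).toNat := by
  unfold hWt
  rw [Finset.card_filter]
  refine Finset.sum_congr rfl fun i _ => ?_
  cases x i <;> simp

lemma hWt_snoc {n : ℕ} (x : Fin n → Bool) (b : Bool) :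
    hWt (Fin.snoc x b) = hWt x + b.toNat := by
  simp [hWt_eq_sum, Fin.sum_univ_castSucc]

lemma hWt_flip {n : ℕ} (x : Fin n → Bool) :
    hWt (fun i => !(x i)) = n - hWt x := by
  have h : hWt (fun i => !(x i)) + hWt x = n := by
    simp [hWt_eq_sum, ← Finset.sum_add_distrib]
    have : ∀ i, (!x i).toNat + (x i).toNat = 1 := fun i => by cases x i <;> rfl
    simp [this]
  omega

lemma hWt_le {n : ℕ} (x : Fin n → Bool) : hWt x ≤ n := by
  simpa [hWt] using Finset.card_filter_le Finset.univ (fun i => x i = true)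

lemma snoc_init {n : ℕ} (y : Fin (n+1) → Bool) :
    Fin.snoc (fun i => y (Fin.castSucc i)) (y (Fin.last n)) = y := by
  ext j
  refine Fin.lastCases ?_ ?_ j <;> simp

/-- For even `n`, `φ` is a bijection from `{0,1}^n` onto the Hamming ball
`{y ∈ {0,1}^{n+1} : |y| > n/2}`. -/
theorem phi_bijOn_ball (n : ℕ) (hn : Even n) :
    Set.BijOn (phi n) Set.univ {y : Fin (n + 1) → Bool | n / 2 < hWt y} := by
  obtain ⟨m, hm⟩ := hn
  have hn2 : n / 2 = m := by omega
  refine ⟨fun x _ => ?_, fun x _ y _ hxy => ?_, fun y hy => ?_⟩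
  · unfold phi
    split_ifs with h
    · simp only [Set.mem_setOf_eq, hWt_snoc, hWt_flip, Bool.toNat_true]
      have := hWt_le x
      omega
    · simp only [Set.mem_setOf_eq, hWt_snoc]
      omega
  · unfold phi at hxy
    split_ifs at hxy with h1 h2 h2
    · have : ∀ i : Fin n, (!(x i)) = !(y i) := fun i => by
        have := congrFun hxy (Fin.castSucc i); simpa using this
      ext i
      exact Bool.not_inj (this i)
    · have := congrFun hxy (Fin.last n); simp at this
    · have := congrFun hxy (Fin.last n); simp at this
    · ext i; have := congrFun hxy (Fin.castSucc i); simpa using this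
  · simp only [Set.mem_setOf_eq] at hy
    by_cases hb : y (Fin.last n) = true
    · refine ⟨fun i => !(y (Fin.castSucc i)), trivial, ?_⟩
      have hyw : hWt y = hWt (fun i => y (Fin.castSucc i)) + 1 := by
        rw [← snoc_init y, hWt_snoc, hb]
        simp [hWt_snoc]
      set x0 : Fin n → Bool := fun i => y (Fin.castSucc i)
      have hle : hWt (fun i => !(x0 i)) ≤ n / 2 := by
        rw [hWt_flip]
        have := hWt_le x0
        omega
      unfold phi
      rw [if_pos hle]
      have : (fun i => !(!(x0 i))) = x0 := by ext i; simp
      rw [this, ← hb]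
      exact snoc_init y
    · refine ⟨fun i => y (Fin.castSucc i), trivial, ?_⟩
      have hb' : y (Fin.last n) = false := by simpa using hb
      have hyw : hWt y = hWt (fun i => y (Fin.castSucc i)) := by
        rw [← snoc_init y, hWt_snoc, hb']
        simp [hWt_snoc]
      unfold phi
      rw [if_neg (by omega)]
      rw [← hb']
      exact snoc_init y
end

section
/- Let n be even and let φ : {0,1}^n → {0,1}^{n+1} be defined by φ(x) = flip(x) ∘ 1 if |x| ≤ n/2 and φ(x) = x ∘ 0 otherwise. Then the maximum stretch of φ equals n, i.e., max over x ∈ {0,1}^n and i ∈ [n] of distance(φ(x), φ(x + e_i)) equals n, attained at edges crossing the middle layer. -/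
/-- Flip the `i`-th bit of `x` (i.e. `x + e_i`). -/
def bflip {n : ℕ} (x : Fin n → Bool) (i : Fin n) : Fin n → Bool :=
  Function.update x i (!(x i))

lemma dist_snoc {n : ℕ} (a c : Fin n → Bool) (b d : Bool) :
    hammingDist (Fin.snoc a b : Fin (n+1) → Bool) (Fin.snoc c d) =
      hammingDist a c + (if b = d then 0 else 1) := by
  simp only [hammingDist, Finset.card_filter]
  rw [Fin.sum_univ_castSucc]
  simp [Fin.snoc_castSucc, Fin.snoc_last]

lemma dist_one_bool {n : ℕ} (x y : Fin n → Bool) (i : Fin n)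
    (h : ∀ j, j ≠ i → x j = y j) (hi : x i ≠ y i) : hammingDist x y = 1 := by
  have : (Finset.univ.filter fun j => x j ≠ y j) = {i} := by
    ext j
    simp only [Finset.mem_filter, Finset.mem_univ, true_and, Finset.mem_singleton]
    constructor
    · intro hj
      by_contra hji
      exact hj (h j hji)
    · rintro rfl; exact hi
  simp [hammingDist, this]

lemma dist_all_but_one {n : ℕ} (x y : Fin n → Bool) (i : Fin n)
    (h : ∀ j, j ≠ i → x j ≠ y j) (hi : x i = y i) : hammingDist x y = n - 1 := by
  have : (Finset.univ.filter fun j => x j ≠ y j) = {i}ᶜ := by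
    ext j
    simp only [Finset.mem_filter, Finset.mem_univ, true_and, Finset.mem_compl,
      Finset.mem_singleton]
    constructor
    · rintro hj rfl; exact hj hi
    · exact h j
  simp [hammingDist, this, Finset.card_compl]

lemma card_lt {n k : ℕ} (hk : k ≤ n) :
    (Finset.univ.filter fun j : Fin n => (j : ℕ) < k).card = k := by
  have : (Finset.univ.filter fun j : Fin n => (j : ℕ) < k) =
      (Finset.range k).attachFin (fun m hm => lt_of_lt_of_le (Finset.mem_range.mp hm) hk) := by
    ext j
    simp [Finset.mem_attachFin]
  rw [this, Finset.card_attachFin, Finset.card_range]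

/-- For even `n > 0`, the maximum stretch of `φ` equals `n`: every edge is stretched at most
`n`, and stretch `n` is attained at an edge crossing the middle layer. -/
theorem phi_maxStretch_eq (n : ℕ) (hn : Even n) (hpos : 0 < n) :
    (∀ x : Fin n → Bool, ∀ i : Fin n,
      hammingDist (phi n x) (phi n (bflip x i)) ≤ n) ∧
    (∃ x : Fin n → Bool, ∃ i : Fin n,
      hWt x = n / 2 ∧ hWt (bflip x i) = n / 2 + 1 ∧
      hammingDist (phi n x) (phi n (bflip x i)) = n) := by
  have hflip_ne : ∀ (x : Fin n → Bool) (i : Fin n), x i ≠ bflip x i i := by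
    intro x i; simp [bflip]
  have hflip_eq : ∀ (x : Fin n → Bool) (i j : Fin n), j ≠ i → bflip x i j = x j := by
    intro x i j hj; simp [bflip, Function.update_of_ne hj]
  constructor
  · intro x i
    unfold phi
    by_cases h1 : hWt x ≤ n / 2 <;> by_cases h2 : hWt (bflip x i) ≤ n / 2 <;>
      simp only [h1, h2, if_true, if_false, dist_snoc, if_pos rfl] <;>
      [skip; skip; skip; skip]
    · have : hammingDist (fun j => !(x j)) (fun j => !(bflip x i j)) = 1 :=
        dist_one_bool _ _ i (fun j hj => by rw [hflip_eq x i j hj]) (by simpa using hflip_ne x i)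
      omega
    · have : hammingDist (fun j => !(x j)) (bflip x i) = n - 1 :=
        dist_all_but_one _ _ i
          (fun j hj => by rw [hflip_eq x i j hj]; simp)
          (by simp [bflip])
      simp only [this, if_neg (show ¬((true:Bool) = false) by simp)]
      omega
    · have : hammingDist x (fun j => !(bflip x i j)) = n - 1 :=
        dist_all_but_one _ _ i
          (fun j hj => by rw [hflip_eq x i j hj]; simp)
          (by simp [bflip])
      simp only [this, if_neg (show ¬((false:Bool) = true) by simp)]
      omega
    · have : hammingDist x (bflip x i) = 1 :=
        dist_one_bool _ _ i (fun j hj => (hflip_eq x i j hj).symm) (hflip_ne x i)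
      omega
  · have hhalf : n / 2 < n := Nat.div_lt_self hpos one_lt_two
    refine ⟨fun j => decide ((j : ℕ) < n / 2), ⟨n / 2, hhalf⟩, ?_, ?_, ?_⟩
    all_goals {
      have hx : hWt (fun j : Fin n => decide ((j : ℕ) < n / 2)) = n / 2 := by
        unfold hWt
        simpa using card_lt (le_of_lt hhalf)
      have hsucc : n / 2 + 1 ≤ n := by omega
      have hy : hWt (bflip (fun j : Fin n => decide ((j : ℕ) < n / 2)) ⟨n / 2, hhalf⟩)
          = n / 2 + 1 := by
        unfold hWt
        have : (Finset.univ.filter fun j : Fin n =>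
            bflip (fun j : Fin n => decide ((j : ℕ) < n / 2)) ⟨n / 2, hhalf⟩ j = true) =
            (Finset.univ.filter fun j : Fin n => (j : ℕ) < n / 2 + 1) := by
          ext j
          simp only [Finset.mem_filter, Finset.mem_univ, true_and]; simp only [bflip]
          rcases eq_or_ne j ⟨n / 2, hhalf⟩ with rfl | hj
          · simp
          · rw [Function.update_of_ne hj]
            have : (j : ℕ) ≠ n / 2 := fun h => hj (Fin.ext h)
            simp only [decide_eq_true_eq]
            omega
        rw [this, card_lt hsucc]
      first
        | exact hx
        | exact hy
        | { unfold phi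
            rw [if_pos (le_of_eq hx), if_neg (by omega)]
            rw [dist_snoc]
            have hd : hammingDist (fun j : Fin n => !(decide ((j : ℕ) < n / 2)))
                (bflip (fun j : Fin n => decide ((j : ℕ) < n / 2)) ⟨n / 2, hhalf⟩) = n - 1 :=
              dist_all_but_one _ _ ⟨n / 2, hhalf⟩
                (fun j hj => by rw [hflip_eq _ _ j hj]; simp)
                (by simp [bflip])
            rw [hd]
            simp only [if_neg (by simp : ¬ (true = false))]
            omega }
    }
end

section
/- Let n be a natural number and let P be any partition of {0,1}^n into symmetric chains. For 1 ≤ t ≤ n+1, let M_t be the number of chains in P of length (cardinality) t. Then M_t = C(n, (n-t+1)/2) − C(n, (n-t-1)/2) if t ≢ n (mod 2), and M_t = 0 if t ≡ n (mod 2). -/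
/-- A symmetric chain in `{0,1}^n`: a sequence `c_k, c_{k+1}, ..., c_{n-k}` with
`|c_i| = i` and consecutive elements at Hamming distance 1, viewed as the set of its
elements. -/
def IsSymChain (n : ℕ) (C : Finset (Fin n → Bool)) : Prop :=
  ∃ (k : ℕ) (c : ℕ → Fin n → Bool), 2 * k ≤ n ∧
    C = (Finset.Icc k (n - k)).image c ∧
    (∀ i ∈ Finset.Icc k (n - k), hWt (c i) = i) ∧
    (∀ i : ℕ, k ≤ i → i < n - k → hammingDist (c i) (c (i + 1)) = 1)

lemma count_weight (n w : ℕ) :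
    (Finset.univ.filter fun x : Fin n → Bool => hWt x = w).card = n.choose w := by
  have : (Finset.univ.filter fun x : Fin n → Bool => hWt x = w).card =
      (Finset.powersetCard w (Finset.univ : Finset (Fin n))).card := by
    apply Finset.card_bij (fun x _ => Finset.univ.filter fun i => x i = true)
    · intro x hx
      rw [Finset.mem_powersetCard]
      refine ⟨Finset.filter_subset _ _, ?_⟩
      exact (Finset.mem_filter.mp hx).2
    · intro x hx y hy hxy
      funext i
      have : (x i = true) ↔ (y i = true) := by
        constructor <;> intro h
        · have : i ∈ Finset.univ.filter fun j => x j = true := by simp [h]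
          rw [hxy] at this; simpa using this
        · have : i ∈ Finset.univ.filter fun j => y j = true := by simp [h]
          rw [← hxy] at this; simpa using this
      cases hx' : x i <;> cases hy' : y i <;> simp_all
    · intro s hs
      rw [Finset.mem_powersetCard] at hs
      refine ⟨fun i => decide (i ∈ s), ?_, ?_⟩
      · simp only [Finset.mem_filter, Finset.mem_univ, true_and]
        rw [hWt, ← hs.2]
        congr 1
        ext i; simp
      · ext i; simp
  rw [this, Finset.card_powersetCard, Finset.card_univ, Fintype.card_fin]

lemma chain_struct {n : ℕ} {C : Finset (Fin n → Bool)} (h : IsSymChain n C) :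
    ∃ k, 2 * k ≤ n ∧ C.card = n - 2 * k + 1 ∧
      (∀ w, (C.filter fun x => hWt x = w).card = if k ≤ w ∧ w ≤ n - k then 1 else 0) := by
  obtain ⟨k, c, h2k, hC, hw, -⟩ := h
  have hinj : Set.InjOn c (Finset.Icc k (n - k)) := by
    intro i hi j hj hij
    rw [← hw i hi, ← hw j hj, hij]
  refine ⟨k, h2k, ?_, ?_⟩
  · rw [hC, Finset.card_image_of_injOn hinj, Nat.card_Icc]
    omega
  · intro w
    by_cases hmem : k ≤ w ∧ w ≤ n - k
    · rw [if_pos hmem]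
      have hwIcc : w ∈ Finset.Icc k (n - k) := Finset.mem_Icc.mpr hmem
      have : C.filter (fun x => hWt x = w) = {c w} := by
        ext x
        simp only [Finset.mem_filter, hC, Finset.mem_image, Finset.mem_singleton]
        constructor
        · rintro ⟨⟨i, hi, rfl⟩, hx⟩
          rw [hw i hi] at hx; subst hx; rfl
        · rintro rfl
          exact ⟨⟨w, hwIcc, rfl⟩, hw w hwIcc⟩
      rw [this, Finset.card_singleton]
    · rw [if_neg hmem, Finset.card_eq_zero, Finset.filter_eq_empty_iff]
      intro x hx
      rw [hC, Finset.mem_image] at hx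
      obtain ⟨i, hi, rfl⟩ := hx
      rw [hw i hi]
      intro h; subst h; exact hmem (Finset.mem_Icc.mp hi)

lemma touch_count (n : ℕ) (P : Finset (Finset (Fin n → Bool)))
    (hchain : ∀ C ∈ P, IsSymChain n C)
    (hpart : ∀ x : Fin n → Bool, ∃! C, C ∈ P ∧ x ∈ C)
    (w : ℕ) (hw : 2 * w ≤ n) :
    (P.filter fun C => n + 1 ≤ C.card + 2 * w).card = n.choose w := by
  have hdisj : ∀ C ∈ P, ∀ D ∈ P, C ≠ D →
      Disjoint (C.filter fun x => hWt x = w) (D.filter fun x => hWt x = w) := by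
    intro C hC D hD hCD
    rw [Finset.disjoint_left]
    intro x hxC hxD
    exact hCD (((hpart x).unique ⟨hC, (Finset.mem_filter.mp hxC).1⟩
      ⟨hD, (Finset.mem_filter.mp hxD).1⟩))
  have hcover : (Finset.univ.filter fun x : Fin n → Bool => hWt x = w) =
      P.biUnion (fun C => C.filter fun x => hWt x = w) := by
    ext x
    simp only [Finset.mem_filter, Finset.mem_univ, true_and, Finset.mem_biUnion]
    constructor
    · intro hx
      obtain ⟨C, ⟨hCP, hxC⟩, -⟩ := hpart x
      exact ⟨C, hCP, hxC, hx⟩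
    · rintro ⟨C, -, -, hx⟩
      exact hx
  have key : ∀ C ∈ P, (C.filter fun x => hWt x = w).card =
      if n + 1 ≤ C.card + 2 * w then 1 else 0 := by
    intro C hC
    obtain ⟨k, h2k, hcard, hfc⟩ := chain_struct (hchain C hC)
    rw [hfc w]
    congr 1
    rw [hcard]
    simp only [eq_iff_iff]
    omega
  calc (P.filter fun C => n + 1 ≤ C.card + 2 * w).card
      = ∑ C ∈ P, if n + 1 ≤ C.card + 2 * w then 1 else 0 := by
        rw [Finset.card_filter]
    _ = ∑ C ∈ P, (C.filter fun x => hWt x = w).card :=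
        Finset.sum_congr rfl (fun C hC => (key C hC).symm)
    _ = (Finset.univ.filter fun x : Fin n → Bool => hWt x = w).card := by
        rw [hcover, Finset.card_biUnion hdisj]
    _ = n.choose w := count_weight n w

/-- For any partition `P` of `{0,1}^n` into symmetric chains and any `1 ≤ t ≤ n+1`, the
number of chains of length `t` in `P` is `C(n, (n-t+1)/2) − C(n, (n-t-1)/2)` when
`t ≢ n (mod 2)` (with the convention that binomial coefficients with negative lower index
vanish), and `0` when `t ≡ n (mod 2)`. -/
theorem symChain_partition_count (n : ℕ) (P : Finset (Finset (Fin n → Bool)))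
    (hchain : ∀ C ∈ P, IsSymChain n C)
    (hpart : ∀ x : Fin n → Bool, ∃! C, C ∈ P ∧ x ∈ C)
    (t : ℕ) (ht1 : 1 ≤ t) (ht2 : t ≤ n + 1) :
    (t % 2 ≠ n % 2 →
      (P.filter fun C => C.card = t).card =
        Nat.choose n ((n - t + 1) / 2) -
          (if t + 1 ≤ n then Nat.choose n ((n - t - 1) / 2) else 0)) ∧
    (t % 2 = n % 2 → (P.filter fun C => C.card = t).card = 0) := by
  constructor
  · intro hpar
    set w : ℕ := (n + 1 - t) / 2 with hwdef
    have h2w : 2 * w = n + 1 - t := by omega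
    have hw1 : (n - t + 1) / 2 = w := by omega
    by_cases hw0 : w = 0
    · -- t = n + 1
      have htn : t = n + 1 := by omega
      have hif : ¬ (t + 1 ≤ n) := by omega
      rw [if_neg hif, Nat.sub_zero, hw1, hw0, Nat.choose_zero_right]
      have : (P.filter fun C => C.card = t) =
          (P.filter fun C => n + 1 ≤ C.card + 2 * w) := by
        apply Finset.filter_congr
        intro C hC
        obtain ⟨k, h2k, hcard, -⟩ := chain_struct (hchain C hC)
        omega
      rw [this, touch_count n P hchain hpart w (by omega), hw0, Nat.choose_zero_right]
    · -- w ≥ 1, t + 1 ≤ n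
      have hif : t + 1 ≤ n := by omega
      have hw2 : (n - t - 1) / 2 = w - 1 := by omega
      rw [if_pos hif, hw1, hw2]
      have hsub : (P.filter fun C => n + 1 ≤ C.card + 2 * (w - 1)) ⊆
          (P.filter fun C => n + 1 ≤ C.card + 2 * w) := by
        intro C hC
        simp only [Finset.mem_filter] at hC ⊢
        exact ⟨hC.1, by omega⟩
      have hsdiff : (P.filter fun C => C.card = t) =
          (P.filter fun C => n + 1 ≤ C.card + 2 * w) \
          (P.filter fun C => n + 1 ≤ C.card + 2 * (w - 1)) := by
        ext C
        simp only [Finset.mem_sdiff, Finset.mem_filter]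
        constructor
        · rintro ⟨hCP, hct⟩
          exact ⟨⟨hCP, by omega⟩, fun h => by omega⟩
        · rintro ⟨⟨hCP, h1⟩, h2⟩
          push_neg at h2
          obtain ⟨k, h2k, hcard, -⟩ := chain_struct (hchain C hCP)
          refine ⟨hCP, ?_⟩
          have := h2 hCP
          omega
      rw [hsdiff, Finset.card_sdiff_of_subset hsub,
        touch_count n P hchain hpart w (by omega),
        touch_count n P hchain hpart (w - 1) (by omega)]
  · intro hpar
    rw [Finset.card_eq_zero, Finset.filter_eq_empty_iff]
    intro C hC hcard
    obtain ⟨k, h2k, hck, -⟩ := chain_struct (hchain C hC)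
    omega
end

section
/- Let n be even. For x ∈ {0,1}^n, let C = {c_k, ..., c_{n-k}} be the symmetric chain of the De Bruijn–Tengbergen–Kruyswijk partition containing x, with x = c_j. Define ψ(x) = c_{((n-k)+j)/2} ∘ 1 if j ≡ n−k (mod 2), and ψ(x) = c_{((n-k)+j+1)/2} ∘ 0 otherwise. Then ψ is a bijection from {0,1}^n onto the Hamming ball {z ∈ {0,1}^{n+1} : |z| > n/2}. -/
/-- Number of ones of `x` among a set of coordinates. -/
def numTrue {n : ℕ} (s : Finset (Fin n)) (x : Fin n → Bool) : ℕ :=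
  (s.filter fun i => x i = true).card

/-- Number of zeros of `x` among a set of coordinates. -/
def numFalse {n : ℕ} (s : Finset (Fin n)) (x : Fin n → Bool) : ℕ :=
  (s.filter fun i => x i = false).card

/-- Coordinate `i` is marked by the De Bruijn–Tengbergen–Kruyswijk marking procedure on
`x` iff `i` lies in an interval `[s, e]` on which `x` (with `1` read as `(` and `0` as `)`)
is a balanced string of parentheses. -/
def Marked {n : ℕ} (x : Fin n → Bool) (i : Fin n) : Prop :=
  ∃ s e : Fin n, s ≤ i ∧ i ≤ e ∧
    numTrue (Finset.Icc s e) x = numFalse (Finset.Icc s e) x ∧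
    ∀ k : Fin n, s ≤ k → k ≤ e →
      numFalse (Finset.Icc s k) x ≤ numTrue (Finset.Icc s k) x

open Classical in
/-- The number of unmarked zeros of `x`. -/
noncomputable def unmarkedZeros {n : ℕ} (x : Fin n → Bool) : ℕ :=
  (Finset.univ.filter fun i => ¬ Marked x i ∧ x i = false).card

open Classical in
/-- The (1-indexed) rank of coordinate `i` among the unmarked coordinates of `x`. -/
noncomputable def urank {n : ℕ} (x : Fin n → Bool) (i : Fin n) : ℕ :=
  (Finset.univ.filter fun j => ¬ Marked x j ∧ j ≤ i).card

open Classical in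
/-- The chain-based bijection `ψ : {0,1}^n → {0,1}^{n+1}` of Benjamini–Cohen–Shinkar,
defined via the De Bruijn–Tengbergen–Kruyswijk partition: within its chain, `x` climbs
half the distance to the top of the chain, and the last output bit records the parity of
that distance. Concretely, marked bits are kept, the unmarked bits `0^a 1^b` are replaced
by `0^⌊a/2⌋ 1^⌈a/2⌉ 1^b`, and the appended bit is `1` iff `a` is even. -/
noncomputable def psi {n : ℕ} (x : Fin n → Bool) : Fin (n + 1) → Bool :=
  fun i =>
    if h : (i : ℕ) < n then
      let i' : Fin n := ⟨i, h⟩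
      if Marked x i' then x i'
      else if urank x i' ≤ unmarkedZeros x / 2 then false else true
    else decide (unmarkedZeros x % 2 = 0)


namespace BCS
noncomputable section
open Classical Finset

/-- prefix depth -/
def D (y : ℕ → Bool) : ℕ → ℤ
  | 0 => 0
  | k+1 => D y k + (if y k then 1 else -1)

variable {y : ℕ → Bool} {n : ℕ}

lemma D_succ (y : ℕ → Bool) (k : ℕ) : D y (k+1) = D y k + (if y k then 1 else -1) := rfl

lemma D_succ_true (h : y k = true) : D y (k+1) = D y k + 1 := by simp [D_succ, h]
lemma D_succ_false (h : y k = false) : D y (k+1) = D y k - 1 := by simp [D_succ, h]; ring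

lemma D_step (y : ℕ → Bool) (k : ℕ) : D y (k+1) = D y k + 1 ∨ D y (k+1) = D y k - 1 := by
  cases h : y k
  · exact Or.inr (D_succ_false h)
  · exact Or.inl (D_succ_true h)

lemma true_of_D_gt (h : D y k < D y (k+1)) : y k = true := by
  cases hy : y k
  · rw [D_succ_false hy] at h; omega
  · rfl

lemma false_of_D_lt (h : D y (k+1) < D y k) : y k = false := by
  cases hy : y k
  · rfl
  · rw [D_succ_true hy] at h; omega

def Mone (y : ℕ → Bool) (n i : ℕ) : Prop := ∃ j, i < j ∧ j ≤ n ∧ D y j ≤ D y i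
def Mzero (y : ℕ → Bool) (i : ℕ) : Prop := ∃ s, s ≤ i ∧ D y s ≤ D y (i+1)
def M (y : ℕ → Bool) (n i : ℕ) : Prop :=
  i < n ∧ ((y i = true ∧ Mone y n i) ∨ (y i = false ∧ Mzero y i))
def U0 (y : ℕ → Bool) (n i : ℕ) : Prop :=
  i < n ∧ y i = false ∧ ∀ s ≤ i, D y (i+1) < D y s
def U1 (y : ℕ → Bool) (n i : ℕ) : Prop :=
  i < n ∧ y i = true ∧ ∀ j, i < j → j ≤ n → D y i < D y j

lemma U0_iff_not_M (h : i < n) (hy : y i = false) : U0 y n i ↔ ¬ M y n i := by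
  constructor
  · rintro ⟨-, -, hs⟩ ⟨-, h2⟩
    rcases h2 with ⟨ht, -⟩ | ⟨-, s, hsi, hD⟩
    · simp [hy] at ht
    · exact absurd hD (not_le.mpr (hs s hsi))
  · intro hM
    refine ⟨h, hy, fun s hs => ?_⟩
    by_contra hc
    exact hM ⟨h, Or.inr ⟨hy, s, hs, not_lt.mp hc⟩⟩

lemma U1_iff_not_M (h : i < n) (hy : y i = true) : U1 y n i ↔ ¬ M y n i := by
  constructor
  · rintro ⟨-, -, hs⟩ ⟨-, h2⟩
    rcases h2 with ⟨-, j, hij, hjn, hD⟩ | ⟨ht, -⟩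
    · exact absurd hD (not_le.mpr (hs j hij hjn))
    · simp [hy] at ht
  · intro hM
    refine ⟨h, hy, fun j hij hjn => ?_⟩
    by_contra hc
    exact hM ⟨h, Or.inl ⟨hy, j, hij, hjn, not_lt.mp hc⟩⟩

lemma U0_not_M (h : U0 y n i) : ¬ M y n i := (U0_iff_not_M h.1 h.2.1).mp h
lemma U1_not_M (h : U1 y n i) : ¬ M y n i := (U1_iff_not_M h.1 h.2.1).mp h

lemma not_M_iff (h : i < n) : ¬ M y n i ↔ U0 y n i ∨ U1 y n i := by
  cases hy : y i
  · rw [← U0_iff_not_M h hy]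
    constructor
    · exact Or.inl
    · rintro (h0 | h1)
      · exact h0
      · rcases h1 with ⟨-, h1, -⟩; simp [hy] at h1
  · rw [← U1_iff_not_M h hy]
    constructor
    · exact Or.inr
    · rintro (h0 | h1)
      · rcases h0 with ⟨-, h0, -⟩; simp [hy] at h0
      · exact h1

/-- sortedness: an unmarked one never precedes an unmarked zero -/
lemma sorted (h1 : U1 y n i) (h0 : U0 y n j) (hij : i < j) : False := by
  have hA := h1.2.2 (j+1) (by omega) h0.1
  have hB := h0.2.2 i (by omega)
  omega

/-- count of indices below `k` satisfying `q` -/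
def cnt (q : ℕ → Prop) [DecidablePred q] (k : ℕ) : ℕ := ((range k).filter q).card

lemma cnt_succ (q : ℕ → Prop) [DecidablePred q] (k : ℕ) :
    cnt q (k+1) = cnt q k + if q k then 1 else 0 := by
  unfold cnt
  rw [Finset.range_add_one, Finset.filter_insert]
  split
  · rw [Finset.card_insert_of_notMem (by simp)]
  · simp

lemma cnt_mono (q : ℕ → Prop) [DecidablePred q] {k l : ℕ} (h : k ≤ l) : cnt q k ≤ cnt q l :=
  Finset.card_le_card (Finset.filter_subset_filter _ (by simpa using Finset.range_subset_range.mpr h))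

lemma cnt_zero (q : ℕ → Prop) [DecidablePred q] : cnt q 0 = 0 := by simp [cnt]

lemma cnt_split (q r : ℕ → Prop) [DecidablePred q] [DecidablePred r] (k : ℕ) :
    cnt q k = cnt (fun i => q i ∧ r i) k + cnt (fun i => q i ∧ ¬ r i) k := by
  induction k with
  | zero => simp [cnt_zero]
  | succ k ih =>
    rw [cnt_succ, cnt_succ, cnt_succ, ih]
    by_cases hq : q k <;> by_cases hr : r k <;> simp [hq, hr] <;> omega


lemma D_count (y : ℕ → Bool) (k : ℕ) :
    D y k = (cnt (fun i => y i = true) k : ℤ) - (cnt (fun i => y i = false) k : ℤ) := by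
  induction k with
  | zero => simp [D, cnt_zero]
  | succ k ih =>
    show D y k + _ = _
    rw [cnt_succ, cnt_succ, ih]
    cases h : y k <;> simp [h] <;> push_cast <;> ring

lemma cnt_true_add_false (y : ℕ → Bool) (k : ℕ) :
    cnt (fun i => y i = true) k + cnt (fun i => y i = false) k = k := by
  induction k with
  | zero => simp [cnt_zero]
  | succ k ih =>
    rw [cnt_succ, cnt_succ]
    cases h : y k <;> simp [h] <;> omega

lemma two_cnt_true (y : ℕ → Bool) (k : ℕ) :
    2 * (cnt (fun i => y i = true) k : ℤ) = k + D y k := by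
  have h1 := D_count y k
  have h2 := cnt_true_add_false y k
  have h2' : ((cnt (fun i => y i = true) k : ℤ)) + cnt (fun i => y i = false) k = k := by
    exact_mod_cast congrArg (Nat.cast : ℕ → ℤ) h2
  omega

lemma cnt_add_Ico (q : ℕ → Prop) [DecidablePred q] {a b : ℕ} (h : a ≤ b) :
    cnt q a + ((Finset.Ico a b).filter q).card = cnt q b := by
  unfold cnt
  rw [Finset.range_eq_Ico, ← Finset.card_union_of_disjoint
    (Finset.disjoint_filter_filter (Finset.Ico_disjoint_Ico_consecutive 0 a b)),
    ← Finset.filter_union, Finset.Ico_union_Ico_eq_Ico (Nat.zero_le a) h, Finset.range_eq_Ico]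

lemma D_sub_Ico (y : ℕ → Bool) {a b : ℕ} (h : a ≤ b) :
    D y b - D y a = (((Finset.Ico a b).filter fun i => y i = true).card : ℤ)
      - (((Finset.Ico a b).filter fun i => y i = false).card : ℤ) := by
  have h1 := D_count y a
  have h2 := D_count y b
  have h3 := cnt_add_Ico (fun i => y i = true) h
  have h4 := cnt_add_Ico (fun i => y i = false) h
  have h3' := congrArg (Nat.cast : ℕ → ℤ) h3
  have h4' := congrArg (Nat.cast : ℕ → ℤ) h4
  push_cast at h3' h4'
  omega

section
variable {y : ℕ → Bool} {n : ℕ}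

/-- number of unmarked zeros among first `k` coordinates -/
def g (y : ℕ → Bool) (n k : ℕ) : ℕ := cnt (U0 y n) k

lemma g_succ (y : ℕ → Bool) (n k : ℕ) :
    g y n (k+1) = g y n k + if U0 y n k then 1 else 0 := cnt_succ _ _

lemma g_mono {k l : ℕ} (h : k ≤ l) : g y n k ≤ g y n l := cnt_mono _ h

lemma g_zero : g y n 0 = 0 := cnt_zero _

lemma G1 : ∀ k, k ≤ n → -(g y n k : ℤ) ≤ D y k := by
  intro k
  induction k using Nat.strong_induction_on with
  | _ k ih =>
    intro hk
    match k with
    | 0 => simp [D, g_zero]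
    | k + 1 =>
      have hDk := ih k (Nat.lt_succ_self k) (by omega)
      have hg : g y n k ≤ g y n (k+1) := g_mono (by omega)
      have hg' : (g y n k : ℤ) ≤ (g y n (k+1) : ℤ) := by exact_mod_cast hg
      cases hy : y k with
      | true => have := D_succ_true hy; omega
      | false =>
        have hstep := D_succ_false hy
        by_cases hcase : -(g y n k : ℤ) ≤ D y (k+1)
        · omega
        · have hU : U0 y n k := by
            refine ⟨by omega, hy, fun s hs => ?_⟩
            have h1 := ih s (by omega) (by omega)
            have h2 : g y n s ≤ g y n k := g_mono hs
            have h2' : (g y n s : ℤ) ≤ (g y n k : ℤ) := by exact_mod_cast h2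
            omega
          have h3 : g y n (k+1) = g y n k + 1 := by rw [g_succ]; simp [hU]
          rw [h3]; push_cast; omega

lemma exists_max_U0 {k : ℕ} (hZ : ∃ p, U0 y n p ∧ p < k) :
    ∃ p, U0 y n p ∧ p < k ∧ ∀ q, U0 y n q → q < k → q ≤ p := by
  obtain ⟨p0, hp0, hp0k⟩ := hZ
  set Z := (range k).filter (U0 y n) with hZdef
  have hne : Z.Nonempty := ⟨p0, by simp [hZdef, Finset.mem_filter, Finset.mem_range, hp0, hp0k]⟩
  have hmem : Z.max' hne ∈ (range k).filter (U0 y n) := Z.max'_mem hne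
  rw [Finset.mem_filter, Finset.mem_range] at hmem
  exact ⟨Z.max' hne, hmem.2, hmem.1, fun q hq hqk =>
    Z.le_max' q (by simp [hZdef, Finset.mem_filter, Finset.mem_range, hq, hqk])⟩

lemma g_eq_of_max {p k : ℕ} (hp : U0 y n p) (hpk : p < k)
    (hmax : ∀ q, U0 y n q → q < k → q ≤ p) : g y n k = g y n p + 1 := by
  have h1 : g y n (p+1) = g y n p + 1 := by rw [g_succ]; simp [hp]
  have h2 : g y n k = g y n (p+1) := by
    show cnt _ _ = cnt _ _
    unfold cnt
    congr 1
    ext q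
    simp only [Finset.mem_filter, Finset.mem_range]
    constructor
    · rintro ⟨hq1, hq2⟩; exact ⟨by have := hmax q hq2 hq1; omega, hq2⟩
    · rintro ⟨hq1, hq2⟩; exact ⟨by omega, hq2⟩
  omega

lemma G2 : ∀ i, U0 y n i → D y (i+1) = -(g y n i : ℤ) - 1 := by
  intro i
  induction i using Nat.strong_induction_on with
  | _ i ih =>
    intro hU
    have hin : i < n := hU.1
    have hg1 : g y n (i+1) = g y n i + 1 := by rw [g_succ]; simp [hU]
    have hlow : -(g y n (i+1) : ℤ) ≤ D y (i+1) := G1 (i+1) (by omega)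
    rw [hg1] at hlow; push_cast at hlow
    by_cases hZ : ∃ p, U0 y n p ∧ p < i
    · obtain ⟨p, hpU, hpi, hpmax⟩ := exists_max_U0 hZ
      have hgi : g y n i = g y n p + 1 := g_eq_of_max hpU hpi hpmax
      have hDp := ih p hpi hpU
      have hlt := hU.2.2 (p+1) (by omega)
      rw [hgi]; push_cast; push_cast at hDp; omega
    · have hgi : g y n i = 0 := by
        show cnt _ _ = 0
        unfold cnt
        rw [Finset.card_eq_zero, Finset.eq_empty_iff_forall_notMem]
        intro q hq
        rw [Finset.mem_filter, Finset.mem_range] at hq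
        exact hZ ⟨q, hq.2, hq.1⟩
      have hlt := hU.2.2 0 (Nat.zero_le i)
      have hD0 : D y 0 = 0 := rfl
      rw [hgi]; push_cast; omega

/-- number of "flipped" unmarked zeros (rank above `c`) among first `k` coordinates -/
def f (y : ℕ → Bool) (n c k : ℕ) : ℕ := cnt (fun p => U0 y n p ∧ c ≤ g y n p) k

lemma f_succ (y : ℕ → Bool) (n c k : ℕ) :
    f y n c (k+1) = f y n c k + if U0 y n k ∧ c ≤ g y n k then 1 else 0 := cnt_succ _ _

lemma f_mono {c k l : ℕ} (h : k ≤ l) : f y n c k ≤ f y n c l := cnt_mono _ h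

lemma f_add_min (c : ℕ) : ∀ k, f y n c k + min (g y n k) c = g y n k := by
  intro k
  induction k with
  | zero => simp [f, cnt_zero, g_zero]
  | succ k ih =>
    rw [f_succ, g_succ]
    by_cases h1 : U0 y n k <;> by_cases h2 : c ≤ g y n k <;> simp [h1, h2] <;> omega

lemma cnt_congr {q r : ℕ → Prop} [DecidablePred q] [DecidablePred r]
    (h : ∀ i, q i ↔ r i) (k : ℕ) : cnt q k = cnt r k := by
  unfold cnt
  congr 1
  exact Finset.filter_congr fun i _ => by rw [h i]

lemma cnt_lt_add_f (c : ℕ) (k : ℕ) :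
    cnt (fun p => U0 y n p ∧ g y n p < c) k + f y n c k = g y n k := by
  have h := cnt_split (U0 y n) (fun p => c ≤ g y n p) k
  have h2 : cnt (fun i => U0 y n i ∧ ¬ c ≤ g y n i) k
      = cnt (fun p => U0 y n p ∧ g y n p < c) k :=
    cnt_congr (fun i => by rw [not_le]) k
  have hf : f y n c k = cnt (fun i => U0 y n i ∧ c ≤ g y n i) k := rfl
  have hg : g y n k = cnt (U0 y n) k := rfl
  rw [hf, hg, h, ← h2]
  omega

/-- number of unmarked ones with coordinate at least `k` -/
def bcnt (y : ℕ → Bool) (n k : ℕ) : ℕ := ((Finset.Ico k n).filter (U1 y n)).card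

lemma bcnt_succ {k : ℕ} (hk : k < n) :
    bcnt y n k = bcnt y n (k+1) + if U1 y n k then 1 else 0 := by
  unfold bcnt
  rw [← Finset.insert_Ico_add_one_left_eq_Ico hk, Finset.filter_insert]
  split
  · rw [Finset.card_insert_of_notMem (by simp)]
  · simp

lemma claimC : ∀ d k, k ≤ n → n - k = d →
    (∀ t, k ≤ t → t ≤ n → D y n - bcnt y n k ≤ D y t) ∧
    (∃ t, k ≤ t ∧ t ≤ n ∧ D y t = D y n - bcnt y n k) := by
  intro d
  induction d with
  | zero =>
    intro k hk hd
    have hkn : k = n := by omega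
    have hb : bcnt y n k = 0 := by
      unfold bcnt; rw [hkn]; simp
    rw [hb]
    constructor
    · intro t ht1 ht2
      have htn : t = n := by omega
      rw [htn]; simp
    · exact ⟨n, by omega, le_rfl, by simp⟩
  | succ d ihd =>
    intro k hk hd
    have hkn : k < n := by omega
    obtain ⟨hlow, t0, ht0k, ht0n, ht0⟩ := ihd (k+1) (by omega) (by omega)
    have hb := bcnt_succ (y := y) hkn
    by_cases hU : U1 y n k
    · have hyk := hU.2.1
      have hstep := D_succ_true hyk
      have h1 : D y k < D y t0 := hU.2.2 t0 (by omega) ht0n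
      have h2 : D y n - bcnt y n (k+1) ≤ D y (k+1) := hlow (k+1) le_rfl (by omega)
      rw [if_pos hU] at hb
      have hbz : (bcnt y n k : ℤ) = bcnt y n (k+1) + 1 := by exact_mod_cast hb
      constructor
      · intro t ht1 ht2
        rcases eq_or_lt_of_le ht1 with h | h
        · subst h; omega
        · have := hlow t (by omega) ht2; omega
      · exact ⟨k, le_rfl, by omega, by omega⟩
    · rw [if_neg hU] at hb
      have hbz : (bcnt y n k : ℤ) = bcnt y n (k+1) := by exact_mod_cast hb
      have hDk : D y n - bcnt y n (k+1) ≤ D y k := by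
        cases hy : y k with
        | false =>
          have := D_succ_false hy
          have := hlow (k+1) le_rfl (by omega)
          omega
        | true =>
          have hne : ¬ (∀ j, k < j → j ≤ n → D y k < D y j) := fun hall => hU ⟨hkn, hy, hall⟩
          push_neg at hne
          obtain ⟨j, hj1, hj2, hj3⟩ := hne
          have := hlow j (by omega) hj2
          omega
      constructor
      · intro t ht1 ht2
        rcases eq_or_lt_of_le ht1 with h | h
        · subst h; omega
        · have := hlow t (by omega) ht2; omega
      · exact ⟨t0, by omega, ht0n, by omega⟩

lemma b_eq : (bcnt y n 0 : ℤ) = D y n + g y n n := by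
  obtain ⟨hlow, t0, -, ht0n, ht0⟩ := claimC (n := n) (y := y) n 0 (Nat.zero_le n) (by omega)
  have hge : -(g y n n : ℤ) ≤ D y n - bcnt y n 0 := by
    have h1 := G1 (y := y) (n := n) t0 ht0n
    have h2 : g y n t0 ≤ g y n n := g_mono ht0n
    have h2' : (g y n t0 : ℤ) ≤ (g y n n : ℤ) := by exact_mod_cast h2
    omega
  have hle : D y n - bcnt y n 0 ≤ -(g y n n : ℤ) := by
    by_cases hZ : ∃ p, U0 y n p ∧ p < n
    · obtain ⟨p, hpU, hpn, hpmax⟩ := exists_max_U0 hZ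
      have hgn : g y n n = g y n p + 1 := g_eq_of_max hpU hpn hpmax
      have hDp := G2 p hpU
      have := hlow (p+1) (Nat.zero_le _) (by omega)
      rw [hgn]; push_cast; push_cast at hDp; omega
    · have hgn : g y n n = 0 := by
        show cnt _ _ = 0
        unfold cnt
        rw [Finset.card_eq_zero, Finset.eq_empty_iff_forall_notMem]
        intro q hq
        rw [Finset.mem_filter, Finset.mem_range] at hq
        exact hZ ⟨q, hq.2, hq.1⟩
      have := hlow 0 le_rfl (Nat.zero_le n)
      have hD0 : D y 0 = 0 := rfl
      rw [hgn]; push_cast; omega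
  omega


section Witness
variable {y : ℕ → Bool} {n : ℕ}

lemma min_witness {i : ℕ} (hyi : y i = true)
    (hex : ∃ j, i < j ∧ j ≤ n ∧ D y j ≤ D y i) :
    ∃ t, i + 2 ≤ t ∧ t ≤ n ∧ D y t = D y i ∧ ∀ u, i < u → u < t → D y i < D y u := by
  have hkey : ∃ t, (i < t ∧ t ≤ n ∧ D y t ≤ D y i) ∧
      ∀ u, i < u → u < t → D y i < D y u := by
    have hsp := Nat.find_spec hex
    refine ⟨Nat.find hex, hsp, fun u hu1 hu2 => ?_⟩
    have h := Nat.find_min hex hu2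
    push_neg at h
    exact h hu1 (by omega)
  obtain ⟨t, ⟨hti, htn, htD⟩, hmin⟩ := hkey
  have ht2 : i + 2 ≤ t := by
    rcases Nat.lt_or_ge t (i+2) with h | h
    · exfalso
      have ht1 : t = i + 1 := by omega
      rw [ht1, D_succ_true hyi] at htD
      omega
    · exact h
  have htD' : D y t = D y i := by
    obtain ⟨u, rfl⟩ : ∃ u, t = u + 1 := ⟨t - 1, by omega⟩
    have h1 := hmin u (by omega) (by omega)
    rcases D_step y u with h | h <;> omega
  exact ⟨t, ht2, htn, htD', hmin⟩

lemma max_witness {i : ℕ} (hyi : y i = false)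
    (hex : ∃ s, s ≤ i ∧ D y s ≤ D y (i+1)) :
    ∃ s, s < i ∧ D y s = D y (i+1) ∧ ∀ u, s < u → u ≤ i → D y (i+1) < D y u := by
  obtain ⟨s0, hs0i, hs0D⟩ := hex
  have hkey : ∃ s, s ≤ i ∧ D y s ≤ D y (i+1) ∧
      ∀ u, s < u → u ≤ i → D y (i+1) < D y u := by
    refine ⟨Nat.findGreatest (fun u => D y u ≤ D y (i+1)) i, Nat.findGreatest_le _,
      Nat.findGreatest_spec (P := fun u => D y u ≤ D y (i+1)) hs0i hs0D,
      fun u hu1 hu2 => ?_⟩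
    have h := Nat.findGreatest_is_greatest (P := fun u => D y u ≤ D y (i+1)) hu1 hu2
    omega
  obtain ⟨s, hsi, hsspec, hmax⟩ := hkey
  have hstep := D_succ_false hyi
  have hsi' : s < i := by
    rcases Nat.eq_or_lt_of_le hsi with h | h
    · exfalso; rw [h] at hsspec; omega
    · exact h
  have hsD : D y s = D y (i+1) := by
    have h1 := hmax (s+1) (by omega) (by omega)
    rcases D_step y s with h | h <;> omega
  exact ⟨s, hsi', hsD, hmax⟩

/-- the unmarked rank of an unmarked zero -/
lemma rank_U0 {i : ℕ} (h0 : U0 y n i) :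
    cnt (fun j => ¬ M y n j ∧ j ≤ i) n = g y n i + 1 := by
  have h1 : cnt (fun j => ¬ M y n j ∧ j ≤ i) n = cnt (fun j => U0 y n j ∧ j ≤ i) n := by
    unfold cnt
    congr 1
    apply Finset.filter_congr
    intro j hj
    rw [Finset.mem_range] at hj
    constructor
    · rintro ⟨hM, hji⟩
      rcases (not_M_iff hj).mp hM with hu0 | hu1
      · exact ⟨hu0, hji⟩
      · exfalso
        rcases Nat.eq_or_lt_of_le hji with h | h
        · subst h
          have ht := hu1.2.1
          have hf := h0.2.1
          rw [ht] at hf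
          exact absurd hf (by simp)
        · exact sorted hu1 h0 h
    · rintro ⟨hu0, hji⟩
      exact ⟨U0_not_M hu0, hji⟩
  have h2 : cnt (fun j => U0 y n j ∧ j ≤ i) n = g y n (i+1) := by
    unfold cnt g cnt
    congr 1
    ext j
    simp only [Finset.mem_filter, Finset.mem_range]
    constructor
    · rintro ⟨hj, hu, hji⟩; exact ⟨by omega, hu⟩
    · rintro ⟨hj, hu⟩; exact ⟨hu.1, hu, by omega⟩
  have h3 : g y n (i+1) = g y n i + 1 := by rw [g_succ]; simp [h0]
  omega

/-- the unmarked rank of an unmarked one exceeds the number of unmarked zeros -/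
lemma rank_U1 {i : ℕ} (h1 : U1 y n i) :
    g y n n + 1 ≤ cnt (fun j => ¬ M y n j ∧ j ≤ i) n := by
  have hsub : insert i ((Finset.range n).filter (U0 y n)) ⊆
      (Finset.range n).filter (fun j => ¬ M y n j ∧ j ≤ i) := by
    intro j hj
    rw [Finset.mem_insert] at hj
    rcases hj with rfl | hj
    · rw [Finset.mem_filter, Finset.mem_range]
      exact ⟨h1.1, U1_not_M h1, le_rfl⟩
    · rw [Finset.mem_filter, Finset.mem_range] at hj ⊢
      refine ⟨hj.1, U0_not_M hj.2, ?_⟩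
      by_contra hc
      exact sorted h1 hj.2 (by omega)
  have hni : i ∉ (Finset.range n).filter (U0 y n) := by
    rw [Finset.mem_filter]
    rintro ⟨-, hu⟩
    have hf := hu.2.1
    rw [h1.2.1] at hf
    exact absurd hf (by simp)
  have := Finset.card_le_card hsub
  rw [Finset.card_insert_of_notMem hni] at this
  exact this

/-- an unmarked coordinate is a zero iff its rank is at most the number of unmarked zeros -/
lemma false_iff_rank {i : ℕ} (hin : i < n) (hM : ¬ M y n i) :
    y i = false ↔ cnt (fun j => ¬ M y n j ∧ j ≤ i) n ≤ g y n n := by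
  constructor
  · intro hyi
    have h0 : U0 y n i := (U0_iff_not_M hin hyi).mpr hM
    rw [rank_U0 h0]
    have : g y n (i+1) = g y n i + 1 := by rw [g_succ]; simp [h0]
    have h2 : g y n (i+1) ≤ g y n n := g_mono (by omega)
    omega
  · intro hr
    cases hyi : y i with
    | false => rfl
    | true =>
      exfalso
      have h1 : U1 y n i := (U1_iff_not_M hin hyi).mpr hM
      have := rank_U1 h1
      omega

end Witness

section Invariance
variable {w v : ℕ → Bool} {n c : ℕ}
variable (hv : ∀ i, i < n → v i = if U0 w n i ∧ c ≤ g w n i then true else w i)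

include hv

lemma v_eq_of_not_flip {i : ℕ} (hi : i < n) (h : ¬ (U0 w n i ∧ c ≤ g w n i)) : v i = w i := by
  rw [hv i hi, if_neg h]

lemma v_eq_of_M {i : ℕ} (hM : M w n i) : v i = w i :=
  v_eq_of_not_flip hv hM.1 (fun h => U0_not_M h.1 hM)

lemma Dv : ∀ k, k ≤ n → D v k = D w k + 2 * f w n c k := by
  intro k
  induction k with
  | zero => simp [D, f, cnt_zero]
  | succ k ih =>
    intro hk
    have ihk := ih (by omega)
    have hfk := f_succ w n c k
    rw [D_succ, D_succ, hv k (by omega), hfk]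
    by_cases h : U0 w n k ∧ c ≤ g w n k
    · rw [if_pos h, if_pos h]
      have hwk : w k = false := h.1.2.1
      rw [hwk]
      push_cast
      simp only [if_true, Bool.false_eq_true, if_false]
      omega
    · rw [if_neg h, if_neg h]
      split <;> omega

lemma claim2 {p : ℕ} (hp : U0 w n p) (hc : g w n p + 1 ≤ c) : U0 v n p := by
  have hpn := hp.1
  have hvp : v p = false := by
    rw [v_eq_of_not_flip hv hpn (by omega), hp.2.1]
  refine ⟨hpn, hvp, fun s hs => ?_⟩
  have hf1 : f w n c (p+1) = 0 := by
    have h1 := f_add_min (y := w) (n := n) c (p+1)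
    have h2 : g w n (p+1) = g w n p + 1 := by rw [g_succ]; simp [hp]
    omega
  have hD1 : D v (p+1) = D w (p+1) := by
    rw [Dv hv (p+1) (by omega), hf1]; push_cast; ring
  have hDs : D v s = D w s + 2 * f w n c s := Dv hv s (by omega)
  have := hp.2.2 s hs
  have hfs : (0:ℤ) ≤ f w n c s := by positivity
  omega

lemma claim3 {p : ℕ} (hp : U0 w n p) (hc : c ≤ g w n p) : U1 v n p := by
  have hpn := hp.1
  have hvp : v p = true := by rw [hv p hpn, if_pos ⟨hp, hc⟩]
  refine ⟨hpn, hvp, fun k hk1 hk2 => ?_⟩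
  have hg2 := G2 p hp
  have hDp : D w p = -(g w n p : ℤ) := by
    have := D_succ_false hp.2.1
    omega
  have hfp : f w n c p + c = g w n p := by
    have := f_add_min (y := w) (n := n) c p
    omega
  have hgk : g w n p + 1 ≤ g w n k := by
    have h1 : g w n (p+1) = g w n p + 1 := by rw [g_succ]; simp [hp]
    have h2 : g w n (p+1) ≤ g w n k := g_mono hk1
    omega
  have hfk : f w n c k + c = g w n k := by
    have := f_add_min (y := w) (n := n) c k
    omega
  have hG1 := G1 (y := w) (n := n) k (by omega)
  have h1 : D v p = D w p + 2 * f w n c p := Dv hv p (by omega)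
  have h2 : D v k = D w k + 2 * f w n c k := Dv hv k (by omega)
  -- D v p = g p - 2c < g k - 2c ≤ D v k
  have e1 : (f w n c p : ℤ) + c = g w n p := by exact_mod_cast hfp
  have e2 : (f w n c k : ℤ) + c = g w n k := by exact_mod_cast hfk
  have e3 : (g w n p : ℤ) + 1 ≤ g w n k := by exact_mod_cast hgk
  omega

lemma claim4 {q : ℕ} (hq : U1 w n q) : U1 v n q := by
  have hqn := hq.1
  have hnf : ¬ (U0 w n q ∧ c ≤ g w n q) := by
    rintro ⟨h0, -⟩
    have h1 := h0.2.1
    rw [hq.2.1] at h1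
    exact absurd h1 (by simp)
  have hvq : v q = true := by rw [v_eq_of_not_flip hv hqn hnf, hq.2.1]
  refine ⟨hqn, hvq, fun k hk1 hk2 => ?_⟩
  have h1 : D v q = D w q + 2 * f w n c q := Dv hv q (by omega)
  have h2 : D v k = D w k + 2 * f w n c k := Dv hv k hk2
  have h3 := hq.2.2 k hk1 hk2
  have h4 : f w n c q ≤ f w n c k := f_mono (by omega)
  have h4' : (f w n c q : ℤ) ≤ f w n c k := by exact_mod_cast h4
  omega

omit hv in
lemma f_eq_of_all_M {a b : ℕ} (hab : a ≤ b) (hM : ∀ u, a ≤ u → u < b → M w n u) :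
    f w n c b = f w n c a := by
  have h := cnt_add_Ico (fun p => U0 w n p ∧ c ≤ g w n p) hab
  have h0 : ((Finset.Ico a b).filter fun p => U0 w n p ∧ c ≤ g w n p).card = 0 := by
    rw [Finset.card_eq_zero, Finset.eq_empty_iff_forall_notMem]
    intro u hu
    rw [Finset.mem_filter, Finset.mem_Ico] at hu
    exact U0_not_M hu.2.1 (hM u hu.1.1 hu.1.2)
  show cnt _ _ = cnt _ _
  omega

lemma claim1 {i : ℕ} (hM : M w n i) : M v n i := by
  obtain ⟨hin, hcase⟩ := hM
  rcases hcase with ⟨hyi, j0, hj0i, hj0n, hj0D⟩ | ⟨hyi, s0, hs0i, hs0D⟩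
  · -- i is a marked one
    have hex : ∃ j, i < j ∧ j ≤ n ∧ D w j ≤ D w i := ⟨j0, hj0i, hj0n, hj0D⟩
    have hkey : ∃ t, (i < t ∧ t ≤ n ∧ D w t ≤ D w i) ∧
        ∀ u, i < u → u < t → D w i < D w u := by
      have hsp := Nat.find_spec hex
      refine ⟨Nat.find hex, hsp, fun u hu1 hu2 => ?_⟩
      have h := Nat.find_min hex hu2
      push_neg at h
      exact h hu1 (by omega)
    obtain ⟨t, ⟨hti, htn, htD⟩, hmin⟩ := hkey
    have ht2 : i + 2 ≤ t := by
      rcases Nat.lt_or_ge t (i+2) with h | h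
      · exfalso
        have ht1 : t = i + 1 := by omega
        rw [ht1, D_succ_true hyi] at htD
        omega
      · exact h
    have htD' : D w t = D w i := by
      obtain ⟨u, rfl⟩ : ∃ u, t = u + 1 := ⟨t - 1, by omega⟩
      have h1 := hmin u (by omega) (by omega)
      rcases D_step w u with h | h <;> omega
    have hint : ∀ k, i < k → k < t → M w n k := by
      intro k hk1 hk2
      refine ⟨by omega, ?_⟩
      cases hwk : w k with
      | true =>
        exact Or.inl ⟨rfl, t, by omega, htn, by have := hmin k hk1 hk2; omega⟩
      | false =>
        refine Or.inr ⟨rfl, i, by omega, ?_⟩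
        rcases Nat.lt_or_ge (k+1) t with h | h
        · have := hmin (k+1) (by omega) h; omega
        · have : k + 1 = t := by omega
          rw [this]; omega
    have hf : f w n c t = f w n c i := by
      refine f_eq_of_all_M (by omega) ?_
      intro u hu1 hu2
      rcases Nat.eq_or_lt_of_le hu1 with h | h
      · rw [← h]; exact ⟨hin, Or.inl ⟨hyi, j0, hj0i, hj0n, hj0D⟩⟩
      · exact hint u h hu2
    refine ⟨hin, Or.inl ⟨by rw [v_eq_of_M hv ⟨hin, Or.inl ⟨hyi, j0, hj0i, hj0n, hj0D⟩⟩]; exact hyi,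
      t, hti, htn, ?_⟩⟩
    rw [Dv hv t htn, Dv hv i (by omega), hf, htD']
  · -- i is a marked zero
    have hkey : ∃ s, s ≤ i ∧ D w s ≤ D w (i+1) ∧
        ∀ u, s < u → u ≤ i → D w (i+1) < D w u := by
      refine ⟨Nat.findGreatest (fun u => D w u ≤ D w (i+1)) i, Nat.findGreatest_le _,
        Nat.findGreatest_spec (P := fun u => D w u ≤ D w (i+1)) hs0i hs0D,
        fun u hu1 hu2 => ?_⟩
      have h := Nat.findGreatest_is_greatest (P := fun u => D w u ≤ D w (i+1)) hu1 hu2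
      omega
    obtain ⟨s, hsi, hsspec, hmax⟩ := hkey
    have hstep := D_succ_false hyi
    have hsi' : s < i := by
      rcases Nat.eq_or_lt_of_le hsi with h | h
      · exfalso; rw [h] at hsspec; omega
      · exact h
    have hsD : D w s = D w (i+1) := by
      have h1 := hmax (s+1) (by omega) (by omega)
      rcases D_step w s with h | h <;> omega
    have hws : w s = true := by
      apply true_of_D_gt
      have := hmax (s+1) (by omega) (by omega)
      omega
    have hMs : M w n s := ⟨by omega, Or.inl ⟨hws, i+1, by omega, by omega, by omega⟩⟩
    have hint : ∀ k, s < k → k < i → M w n k := by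
      intro k hk1 hk2
      refine ⟨by omega, ?_⟩
      cases hwk : w k with
      | true =>
        refine Or.inl ⟨rfl, i+1, by omega, by omega, ?_⟩
        have := hmax k hk1 (by omega); omega
      | false =>
        refine Or.inr ⟨rfl, s, by omega, ?_⟩
        have := hmax (k+1) (by omega) (by omega)
        omega
    have hMi : M w n i := ⟨hin, Or.inr ⟨hyi, s0, hs0i, hs0D⟩⟩
    have hf : f w n c (i+1) = f w n c s := by
      refine f_eq_of_all_M (by omega) ?_
      intro u hu1 hu2
      rcases Nat.eq_or_lt_of_le hu1 with h | h
      · rw [← h]; exact hMs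
      · rcases Nat.lt_or_ge u i with h2 | h2
        · exact hint u h h2
        · have : u = i := by omega
          rw [this]; exact hMi
    refine ⟨hin, Or.inr ⟨by rw [v_eq_of_M hv hMi]; exact hyi, s, by omega, ?_⟩⟩
    rw [Dv hv s (by omega), Dv hv (i+1) (by omega), hf, hsD]

lemma M_iff_M : ∀ i, M v n i ↔ M w n i := by
  intro i
  by_cases hin : i < n
  · constructor
    · intro hMv
      by_contra hMw
      rcases (not_M_iff hin).mp hMw with h0 | h1
      · rcases Nat.lt_or_ge (g w n i) c with hc | hc
        · exact U0_not_M (claim2 hv h0 (by omega)) hMv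
        · exact U1_not_M (claim3 hv h0 hc) hMv
      · exact U1_not_M (claim4 hv h1) hMv
    · exact claim1 hv
  · constructor <;> (intro h; exact absurd h.1 hin)

lemma U0_v_iff : ∀ i, U0 v n i ↔ (U0 w n i ∧ g w n i < c) := by
  intro i
  constructor
  · intro h0v
    have hin := h0v.1
    have hMw : ¬ M w n i := fun h => (by
      have := claim1 hv h
      exact U0_not_M h0v this)
    rcases (not_M_iff hin).mp hMw with h0 | h1
    · refine ⟨h0, ?_⟩
      by_contra hc
      have := claim3 hv h0 (by omega)
      have h1 := this.2.1
      have h2 := h0v.2.1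
      rw [h1] at h2; exact absurd h2 (by simp)
    · exfalso
      have := (claim4 hv h1).2.1
      have h2 := h0v.2.1
      rw [this] at h2; exact absurd h2 (by simp)
  · rintro ⟨h0, hc⟩
    exact claim2 hv h0 (by omega)

lemma g_v_eq : g v n n = min (g w n n) c := by
  have h1 : g v n n = cnt (fun p => U0 w n p ∧ g w n p < c) n := by
    unfold g
    exact cnt_congr (U0_v_iff hv) n
  have h2 := cnt_lt_add_f (y := w) (n := n) c n
  have h3 := f_add_min (y := w) (n := n) c n
  omega

lemma cnt_v_true : ∀ k, k ≤ n →
    cnt (fun i => v i = true) k = cnt (fun i => w i = true) k + f w n c k := by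
  intro k
  induction k with
  | zero => simp [cnt_zero, f, cnt_zero]
  | succ k ih =>
    intro hk
    have ihk := ih (by omega)
    rw [cnt_succ, cnt_succ, f_succ, hv k (by omega)]
    by_cases h : U0 w n k ∧ c ≤ g w n k
    · rw [if_pos h, if_pos h]
      have hwk : w k = false := h.1.2.1
      rw [hwk]
      simp only [if_true]
      norm_num
      omega
    · rw [if_neg h, if_neg h]
      omega

end Invariance

section FinLand
variable {n : ℕ}

/-- extension of a finite binary string to ℕ -/
def ex (x : Fin n → Bool) : ℕ → Bool := fun i => if h : i < n then x ⟨i, h⟩ else false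

lemma ex_val (x : Fin n → Bool) (i : Fin n) : ex x i.val = x i := by
  unfold ex
  rw [dif_pos i.isLt]

lemma card_univ_filter {p : Fin n → Prop} [DecidablePred p] {q : ℕ → Prop} [DecidablePred q]
    (h : ∀ i : Fin n, p i ↔ q i.val) :
    (Finset.univ.filter p).card = ((Finset.range n).filter q).card := by
  refine Finset.card_bij' (fun i _ => i.val)
    (fun j hj => ⟨j, Finset.mem_range.mp (Finset.mem_filter.mp hj).1⟩) ?_ ?_ ?_ ?_
  · intro a ha
    rw [Finset.mem_filter] at ha ⊢
    exact ⟨Finset.mem_range.mpr a.isLt, (h a).mp ha.2⟩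
  · intro j hj
    simp only [Finset.mem_filter, Finset.mem_range] at hj ⊢
    exact ⟨Finset.mem_univ _, (h _).mpr hj.2⟩
  · intro a _; rfl
  · intro j _; rfl

lemma card_Icc_filter {s e : Fin n} {p : Fin n → Prop} [DecidablePred p]
    {q : ℕ → Prop} [DecidablePred q] (h : ∀ i : Fin n, p i ↔ q i.val) :
    ((Finset.Icc s e).filter p).card
      = ((Finset.Ico s.val (e.val+1)).filter q).card := by
  have hb : ∀ j, j ∈ (Finset.Ico s.val (e.val+1)).filter q → j < n := by
    intro j hj
    rw [Finset.mem_filter, Finset.mem_Ico] at hj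
    have := e.isLt
    omega
  refine Finset.card_bij' (fun i _ => i.val) (fun j hj => ⟨j, hb j hj⟩) ?_ ?_ ?_ ?_
  · intro a ha
    simp only [Finset.mem_filter, Finset.mem_Icc] at ha
    simp only [Finset.mem_filter, Finset.mem_Ico]
    have h1 : s.val ≤ a.val := ha.1.1
    have h2 : a.val ≤ e.val := ha.1.2
    exact ⟨⟨h1, by omega⟩, (h a).mp ha.2⟩
  · intro j hj
    have hj' := hj
    simp only [Finset.mem_filter, Finset.mem_Ico] at hj'
    simp only [Finset.mem_filter, Finset.mem_Icc]
    refine ⟨⟨?_, ?_⟩, (h _).mpr hj'.2⟩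
    · show s.val ≤ j; omega
    · show j ≤ e.val; omega
  · intro a _; rfl
  · intro j _; rfl

lemma numTrue_sub (x : Fin n → Bool) (s e : Fin n) (hse : s ≤ e) :
    (numTrue (Finset.Icc s e) x : ℤ) - (numFalse (Finset.Icc s e) x : ℤ)
      = D (ex x) (e.val+1) - D (ex x) s.val := by
  have ht : numTrue (Finset.Icc s e) x
      = ((Finset.Ico s.val (e.val+1)).filter fun j => ex x j = true).card :=
    card_Icc_filter (fun i => by rw [ex_val])
  have hf : numFalse (Finset.Icc s e) x
      = ((Finset.Ico s.val (e.val+1)).filter fun j => ex x j = false).card :=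
    card_Icc_filter (fun i => by rw [ex_val])
  have hD := D_sub_Ico (ex x) (a := s.val) (b := e.val+1)
    (by have : s.val ≤ e.val := hse; omega)
  rw [ht, hf]
  omega

lemma marked_iff (x : Fin n → Bool) (i : Fin n) : Marked x i ↔ M (ex x) n i.val := by
  constructor
  · rintro ⟨s, e, hsi, hie, hbal, hpre⟩
    have hse : s ≤ e := le_trans hsi hie
    have hsival : s.val ≤ i.val := hsi
    have hieval : i.val ≤ e.val := hie
    have hbal' : D (ex x) (e.val+1) = D (ex x) s.val := by
      have h1 := numTrue_sub x s e hse
      rw [hbal] at h1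
      omega
    have hpre' : ∀ k : Fin n, s ≤ k → k ≤ e → D (ex x) s.val ≤ D (ex x) (k.val+1) := by
      intro k h1 h2
      have h3 := numTrue_sub x s k h1
      have h4 := hpre k h1 h2
      have h4' : (numFalse (Finset.Icc s k) x : ℤ) ≤ (numTrue (Finset.Icc s k) x : ℤ) := by
        exact_mod_cast h4
      omega
    refine ⟨i.isLt, ?_⟩
    cases hyi : x i with
    | true =>
      refine Or.inl ⟨by rw [ex_val, hyi], e.val+1, by omega, by have := e.isLt; omega, ?_⟩
      rcases Nat.eq_or_lt_of_le hsival with h | h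
      · rw [hbal', h]
      · have hk := hpre' ⟨i.val - 1, by have := i.isLt; omega⟩
          (show s.val ≤ i.val - 1 by omega) (show i.val - 1 ≤ e.val by omega)
        have he : (i.val - 1) + 1 = i.val := by omega
        rw [he] at hk
        omega
    | false =>
      exact Or.inr ⟨by rw [ex_val, hyi], s.val, hsival, hpre' i hsi hie⟩
  · rintro ⟨hin, hcase⟩
    rcases hcase with ⟨hyi, hex⟩ | ⟨hyi, hex⟩
    · obtain ⟨t, ht2, htn, htD, hmin⟩ := min_witness hyi hex
      have htn1 : t - 1 < n := by omega
      refine ⟨i, ⟨t-1, htn1⟩, le_rfl, show i.val ≤ t - 1 by omega, ?_, ?_⟩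
      · have h1 := numTrue_sub x i ⟨t-1, htn1⟩ (show i.val ≤ t - 1 by omega)
        have he : (t - 1) + 1 = t := by omega
        simp only [he] at h1
        rw [htD] at h1
        omega
      · intro k hk1 hk2
        have h1 := numTrue_sub x i k hk1
        have hk1' : i.val ≤ k.val := hk1
        have hk2' : k.val ≤ t - 1 := hk2
        rcases Nat.lt_or_ge (k.val + 1) t with h | h
        · have := hmin (k.val+1) (by omega) h
          omega
        · have he : k.val + 1 = t := by omega
          rw [he, htD] at h1
          omega
    · obtain ⟨s, hsi, hsD, hmax⟩ := max_witness hyi hex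
      refine ⟨⟨s, by omega⟩, i, show s ≤ i.val by omega, le_rfl, ?_, ?_⟩
      · have h1 := numTrue_sub x ⟨s, by omega⟩ i (show s ≤ i.val by omega)
        simp only [Fin.val_mk] at h1
        rw [hsD] at h1
        omega
      · intro k hk1 hk2
        have h1 := numTrue_sub x ⟨s, by omega⟩ k hk1
        simp only [Fin.val_mk] at h1
        have hk1' : s ≤ k.val := hk1
        have hk2' : k.val ≤ i.val := hk2
        rcases Nat.lt_or_ge k.val i.val with h | h
        · have := hmax (k.val+1) (by omega) (by omega)
          omega
        · have he : k.val = i.val := by omega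
          rw [he, ← hsD] at h1
          omega

lemma unmarkedZeros_eq (x : Fin n → Bool) : unmarkedZeros x = g (ex x) n n := by
  unfold unmarkedZeros
  have h : ∀ i : Fin n, (¬ Marked x i ∧ x i = false) ↔ U0 (ex x) n i.val := by
    intro i
    rw [marked_iff]
    constructor
    · rintro ⟨hM, hxi⟩
      exact (U0_iff_not_M i.isLt (by rw [ex_val, hxi])).mpr hM
    · intro h0
      have := h0.2.1
      rw [ex_val] at this
      exact ⟨(U0_iff_not_M i.isLt h0.2.1).mp h0, this⟩
  rw [card_univ_filter (q := U0 (ex x) n) h]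
  rfl

lemma urank_eq (x : Fin n → Bool) (i : Fin n) :
    urank x i = cnt (fun j => ¬ M (ex x) n j ∧ j ≤ i.val) n := by
  unfold urank
  have h : ∀ j : Fin n, (¬ Marked x j ∧ j ≤ i) ↔ (¬ M (ex x) n j.val ∧ j.val ≤ i.val) := by
    intro j
    rw [marked_iff]
    exact Iff.rfl
  rw [card_univ_filter (q := fun j => ¬ M (ex x) n j ∧ j ≤ i.val) h]
  rfl

end FinLand

section Main
variable {n : ℕ}

lemma hv_psi (x : Fin n → Bool) : ∀ i, i < n →
    ex (psi x) i = if U0 (ex x) n i ∧ (g (ex x) n n) / 2 ≤ g (ex x) n i then true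
      else (ex x) i := by
  intro i hi
  have hvi : ex (psi x) i = psi x ⟨i, by omega⟩ := by
    unfold ex
    rw [dif_pos (show i < n + 1 by omega)]
  rw [hvi]
  have hpsi : psi x ⟨i, by omega⟩
      = (if Marked x ⟨i, hi⟩ then x ⟨i, hi⟩
        else if urank x ⟨i, hi⟩ ≤ unmarkedZeros x / 2 then false else true) := by
    simp only [psi]
    rw [dif_pos (show ((⟨i, by omega⟩ : Fin (n+1)) : ℕ) < n from hi)]
  rw [hpsi]
  by_cases hM : M (ex x) n i
  · rw [if_pos ((marked_iff x ⟨i, hi⟩).mpr hM),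
      if_neg (fun h => U0_not_M h.1 hM), ← ex_val x ⟨i, hi⟩]
  · rw [if_neg (fun h => hM ((marked_iff x ⟨i, hi⟩).mp h))]
    rw [urank_eq, unmarkedZeros_eq]
    simp only [Fin.val_mk]
    cases hxi : ex x i with
    | false =>
      have h0 : U0 (ex x) n i := (U0_iff_not_M hi hxi).mpr hM
      have hr : cnt (fun j => ¬ M (ex x) n j ∧ j ≤ i) n
          = g (ex x) n i + 1 := rank_U0 h0
      rw [hr]
      by_cases hc : (g (ex x) n n) / 2 ≤ g (ex x) n i
      · rw [if_neg (by omega), if_pos ⟨h0, hc⟩]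
      · rw [if_pos (by omega), if_neg (fun h => hc h.2)]
    | true =>
      have h1 : U1 (ex x) n i := (U1_iff_not_M hi hxi).mpr hM
      have hr := rank_U1 h1
      have hd : g (ex x) n n / 2 ≤ g (ex x) n n := Nat.div_le_self _ _
      rw [if_neg (by omega), if_neg (by
        rintro ⟨h0, -⟩
        have hf := h0.2.1
        rw [hxi] at hf
        exact absurd hf (by simp))]

lemma psi_last (x : Fin n → Bool) :
    ex (psi x) n = decide (g (ex x) n n % 2 = 0) := by
  have hvi : ex (psi x) n = psi x ⟨n, by omega⟩ := by
    unfold ex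
    rw [dif_pos (show n < n + 1 by omega)]
  rw [hvi]
  simp only [psi]
  rw [dif_neg (show ¬ ((⟨n, by omega⟩ : Fin (n+1)) : ℕ) < n from by simp)]
  rw [unmarkedZeros_eq]

lemma hWt_eq_cnt {m : ℕ} (z : Fin m → Bool) :
    hWt z = cnt (fun j => ex z j = true) m :=
  card_univ_filter (fun i => by rw [ex_val])

lemma hWt_psi_lb (x : Fin n → Bool) : n + 1 ≤ 2 * hWt (psi x) := by
  have hv := hv_psi x
  set w := ex x with hw
  set a := g w n n with ha
  set c := a / 2 with hc
  have h1 : hWt (psi x) = cnt (fun j => ex (psi x) j = true) (n+1) := hWt_eq_cnt _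
  have h2 := cnt_succ (fun j => ex (psi x) j = true) n
  have h3 := cnt_v_true hv n le_rfl
  have h4 := f_add_min (y := w) (n := n) c n
  have h5 := two_cnt_true w n
  have h6 := b_eq (y := w) (n := n)
  have h7 := psi_last x
  have hca : c ≤ a := Nat.div_le_self _ _
  have hmm : min a c = c := by omega
  rw [← ha] at h4 h6
  rw [hmm] at h4
  rcases Nat.mod_two_eq_zero_or_one a with hpar | hpar
  · have he : ex (psi x) n = true := by rw [h7, ← ha, hpar]; simp
    have h2' : cnt (fun j => ex (psi x) j = true) (n+1)
        = cnt (fun j => ex (psi x) j = true) n + 1 := by rw [h2, he]; simp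
    omega
  · have he : ex (psi x) n = false := by rw [h7, ← ha, hpar]; simp
    have h2' : cnt (fun j => ex (psi x) j = true) (n+1)
        = cnt (fun j => ex (psi x) j = true) n := by rw [h2, he]; simp
    omega

lemma psi_inj : Function.Injective (psi (n := n)) := by
  intro x1 x2 heq
  have hv1 := hv_psi x1
  have hv2 : ∀ i, i < n → ex (psi x1) i
      = if U0 (ex x2) n i ∧ (g (ex x2) n n) / 2 ≤ g (ex x2) n i then true
        else (ex x2) i := by
    intro i hi
    show ex (psi x1) i = _
    rw [heq]
    exact hv_psi x2 i hi
  have hMiff : ∀ j, M (ex x1) n j ↔ M (ex x2) n j := fun j =>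
    ((M_iff_M hv1 j).symm.trans (M_iff_M hv2 j))
  set a1 := g (ex x1) n n with ha1
  set a2 := g (ex x2) n n with ha2
  have hg1 : g (ex (psi x1)) n n = min a1 (a1 / 2) := g_v_eq hv1
  have hg2 : g (ex (psi x1)) n n = min a2 (a2 / 2) := g_v_eq hv2
  have hc1 : a1 / 2 ≤ a1 := Nat.div_le_self _ _
  have hc2 : a2 / 2 ≤ a2 := Nat.div_le_self _ _
  have hlast : ex (psi x1) n = ex (psi x2) n := by rw [heq]
  rw [psi_last x1, psi_last x2] at hlast
  have hpar : (a1 % 2 = 0) ↔ (a2 % 2 = 0) := by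
    rw [← ha1, ← ha2] at hlast
    exact decide_eq_decide.mp hlast
  have haa : a1 = a2 := by
    rcases Nat.mod_two_eq_zero_or_one a1 with h | h <;>
      rcases Nat.mod_two_eq_zero_or_one a2 with h' | h' <;> omega
  funext i
  by_cases hM : M (ex x1) n i.val
  · have e1 : ex (psi x1) i.val = ex x1 i.val := by
      rw [hv1 i.val i.isLt, if_neg (fun h => U0_not_M h.1 hM)]
    have e2 : ex (psi x1) i.val = ex x2 i.val := by
      rw [hv2 i.val i.isLt, if_neg (fun h => U0_not_M h.1 ((hMiff i.val).mp hM))]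
    rw [← ex_val x1 i, ← ex_val x2 i, ← e1, ← e2]
  · have hM2 : ¬ M (ex x2) n i.val := fun h => hM ((hMiff i.val).mpr h)
    have f1 := false_iff_rank (y := ex x1) i.isLt hM
    have f2 := false_iff_rank (y := ex x2) i.isLt hM2
    have hr : cnt (fun j => ¬ M (ex x1) n j ∧ j ≤ i.val) n
        = cnt (fun j => ¬ M (ex x2) n j ∧ j ≤ i.val) n :=
      cnt_congr (fun j => by rw [hMiff j]) n
    rw [hr, ← ha1, haa] at f1
    rw [← ha2] at f2
    have hiff : ex x1 i.val = false ↔ ex x2 i.val = false := f1.trans f2.symm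
    rw [ex_val, ex_val] at hiff
    cases hb1 : x1 i <;> cases hb2 : x2 i
    · rfl
    · exact absurd (hiff.mp hb1) (by rw [hb2]; simp)
    · exact absurd (hiff.mpr hb2) (by rw [hb1]; simp)
    · rfl

lemma hWt_compl {m : ℕ} (z : Fin m → Bool) :
    hWt z + hWt (fun j => ! z j) = m := by
  unfold hWt
  have h := Finset.card_filter_add_card_filter_not
    (s := (Finset.univ : Finset (Fin m))) (p := fun i => z i = true)
  rw [Finset.card_univ, Fintype.card_fin] at h
  have he : (Finset.univ.filter fun i => (! z i) = true)
      = (Finset.univ.filter fun i => ¬ (z i = true)) := by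
    apply Finset.filter_congr
    intro i _
    cases hz : z i <;> simp
  rw [he]
  exact h

end Main

end
end
end BCS

/-- For even `n`, `ψ` is a bijection from `{0,1}^n` onto the Hamming ball
`{z ∈ {0,1}^{n+1} : |z| > n/2}`. -/
theorem psi_bijOn_ball (n : ℕ) (hn : Even n) :
    Set.BijOn (psi (n := n)) Set.univ {z : Fin (n + 1) → Bool | n / 2 < hWt z} := by
  classical
  have hmod : n % 2 = 0 := by
    obtain ⟨m, hm⟩ := hn; omega
  have hmem : ∀ x : Fin n → Bool, n / 2 < hWt (psi x) := by
    intro x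
    have := BCS.hWt_psi_lb x
    omega
  have hinj : Function.Injective (psi (n := n)) := BCS.psi_inj
  set S : Finset (Fin (n+1) → Bool) := Finset.univ.filter (fun z => n / 2 < hWt z) with hS
  have hle : ∀ z : Fin (n+1) → Bool, hWt z ≤ n + 1 := by
    intro z
    unfold hWt
    calc (Finset.univ.filter fun i => z i = true).card
        ≤ (Finset.univ : Finset (Fin (n+1))).card := Finset.card_filter_le _ _
      _ = n + 1 := by rw [Finset.card_univ, Fintype.card_fin]
  have hcard2 : Fintype.card (Fin (n+1) → Bool) = 2 ^ (n+1) := by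
    rw [Fintype.card_fun, Fintype.card_bool, Fintype.card_fin]
  have h1 : S.card + (Finset.univ.filter (fun z : Fin (n+1) → Bool => ¬ n / 2 < hWt z)).card
      = 2 ^ (n+1) := by
    rw [hS, Finset.card_filter_add_card_filter_not, Finset.card_univ, hcard2]
  have h2 : S.card
      = (Finset.univ.filter (fun z : Fin (n+1) → Bool => ¬ n / 2 < hWt z)).card := by
    refine Finset.card_bij' (fun z _ => fun j => ! z j) (fun z _ => fun j => ! z j)
      ?_ ?_ ?_ ?_
    · intro z hz
      simp only [hS, Finset.mem_filter] at hz ⊢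
      have hc := BCS.hWt_compl z
      have hz' := hle z
      exact ⟨Finset.mem_univ _, by omega⟩
    · intro z hz
      simp only [hS, Finset.mem_filter] at hz ⊢
      have hc := BCS.hWt_compl z
      have hz' := hle z
      exact ⟨Finset.mem_univ _, by omega⟩
    · intro z _; funext j; simp
    · intro z _; funext j; simp
  have hSc : S.card = 2 ^ n := by
    have hp : 2 ^ (n+1) = 2 ^ n * 2 := pow_succ 2 n
    omega
  have himg : (Finset.univ.image (psi (n := n))) = S := by
    apply Finset.eq_of_subset_of_card_le
    · intro z hz
      rw [Finset.mem_image] at hz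
      obtain ⟨x, -, rfl⟩ := hz
      rw [hS, Finset.mem_filter]
      exact ⟨Finset.mem_univ _, hmem x⟩
    · rw [Finset.card_image_of_injective _ hinj, hSc, Finset.card_univ]
      rw [Fintype.card_fun, Fintype.card_bool, Fintype.card_fin]
  refine ⟨fun x _ => hmem x, fun x _ x' _ h => hinj h, fun z hz => ?_⟩
  have hzS : z ∈ S := by
    rw [hS, Finset.mem_filter]
    exact ⟨Finset.mem_univ _, hz⟩
  rw [← himg, Finset.mem_image] at hzS
  obtain ⟨x, -, hxz⟩ := hzS
  exact ⟨x, Set.mem_univ x, hxz⟩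
end

section
/- Let x ∈ {0,1}^n and let M ⊆ [n] be the set of coordinates that get marked when the De Bruijn–Tengbergen–Kruyswijk marking procedure is applied to x. Then the marking M and the resulting chain encoding are independent of the order in which consecutive '10' pairs are chosen during the marking procedure. -/
/-- One step of the De Bruijn–Tengbergen–Kruyswijk marking procedure on `x` with current
marked set `M`: choose unmarked coordinates `i < j` with `x i = 1`, `x j = 0`, all
coordinates strictly between them already marked (so `10` is consecutive among the
unmarked-and-undeleted symbols), and mark both. -/
def MarkStep {n : ℕ} (x : Fin n → Bool) (M M' : Finset (Fin n)) : Prop :=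
  ∃ i j : Fin n, i < j ∧ i ∉ M ∧ j ∉ M ∧ x i = true ∧ x j = false ∧
    (∀ k : Fin n, i < k → k < j → k ∈ M) ∧ M' = insert i (insert j M)

lemma markStep_diamond {n : ℕ} (x : Fin n → Bool) {M A B : Finset (Fin n)}
    (hA : MarkStep x M A) (hB : MarkStep x M B) :
    A = B ∨ ∃ D, MarkStep x A D ∧ MarkStep x B D := by
  obtain ⟨i, j, hij, hiM, hjM, hxi, hxj, hbet, rfl⟩ := hA
  obtain ⟨i', j', hij', hiM', hjM', hxi', hxj', hbet', rfl⟩ := hB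
  by_cases hsame : i = i' ∧ j = j'
  · left; rw [hsame.1, hsame.2]
  -- show the two pairs are disjoint
  have hii : i ≠ i' := by
    rintro rfl
    rcases lt_trichotomy j j' with h | h | h
    · exact hjM (hbet' j hij h)
    · exact hsame ⟨rfl, h⟩
    · exact hjM' (hbet j' hij' h)
  have hjj : j ≠ j' := by
    rintro rfl
    rcases lt_trichotomy i i' with h | h | h
    · exact hiM' (hbet i' h hij')
    · exact hsame ⟨h, rfl⟩
    · exact hiM (hbet' i h hij)
  have hij2 : i ≠ j' := fun h => by rw [h, hxj'] at hxi; simp at hxi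
  have hji : j ≠ i' := fun h => by rw [h, hxi'] at hxj; simp at hxj
  right
  refine ⟨insert i' (insert j' (insert i (insert j M))), ?_, ?_⟩
  · exact ⟨i', j', hij', by simp [hii.symm, hji.symm, hiM'],
      by simp [hij2.symm, hjj.symm, hjM'], hxi', hxj',
      fun k h1 h2 => by simp [hbet' k h1 h2], rfl⟩
  · refine ⟨i, j, hij, by simp [hii, hij2, hiM], by simp [hji, hjj, hjM], hxi, hxj,
      fun k h1 h2 => by simp [hbet k h1 h2], ?_⟩
    ext a
    simp only [Finset.mem_insert]
    tauto

/-- The marking procedure is confluent: any two maximal runs of the marking procedure on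
`x`, starting from the empty marking, produce the same set of marked coordinates
(and hence the same chain encoding). -/
theorem markStep_confluent {n : ℕ} (x : Fin n → Bool) (M₁ M₂ : Finset (Fin n))
    (h₁ : Relation.ReflTransGen (MarkStep x) ∅ M₁)
    (h₂ : Relation.ReflTransGen (MarkStep x) ∅ M₂)
    (t₁ : ∀ M', ¬ MarkStep x M₁ M') (t₂ : ∀ M', ¬ MarkStep x M₂ M') :
    M₁ = M₂ := by
  have cr := Relation.church_rosser (r := MarkStep x)
    (fun a b c hab hac => by
      rcases markStep_diamond x hab hac with h | ⟨d, hbd, hcd⟩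
      · exact ⟨b, Relation.ReflGen.refl, h ▸ Relation.ReflTransGen.refl⟩
      · exact ⟨d, Relation.ReflGen.single hbd, Relation.ReflTransGen.single hcd⟩)
    h₁ h₂
  obtain ⟨d, hd1, hd2⟩ := cr
  have e1 : M₁ = d := by
    cases hd1.cases_head with
    | inl h => exact h
    | inr h => obtain ⟨c, hc, _⟩ := h; exact absurd hc (t₁ c)
  have e2 : M₂ = d := by
    cases hd2.cases_head with
    | inl h => exact h
    | inr h => obtain ⟨c, hc, _⟩ := h; exact absurd hc (t₂ c)
  rw [e1, e2]
end

section
/- For all natural numbers a, b, c, d, the Hamming distance between ψ(0^a 1^b ∘ 0 ∘ 0^c 1^d) and ψ(0^a 1^b ∘ 1 ∘ 0^c 1^d) is at most 4, where ψ is the chain-based bijection from the Boolean cube to the Hamming ball (applied to strings of length a+b+c+d+1). -/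
/-- The string `0^a 1^b ∘ mid ∘ 0^c 1^d` of length `a+b+1+c+d`. -/
def str (a b c d : ℕ) (mid : Bool) : Fin (a + b + 1 + c + d) → Bool :=
  fun i =>
    if (i : ℕ) < a then false
    else if (i : ℕ) < a + b then true
    else if (i : ℕ) < a + b + 1 then mid
    else if (i : ℕ) < a + b + 1 + c then false
    else true


section Aux

private lemma filter_val_card_Icc {n : ℕ} (s e : Fin n) (p : ℕ → Prop) [DecidablePred p] :
    ((Finset.Icc s e).filter (fun i => p i.val)).card
      = ((Finset.Icc (s : ℕ) (e : ℕ)).filter p).card := by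
  rw [← Fin.map_valEmbedding_Icc, Finset.filter_map, Finset.card_map]
  rfl

private lemma filter_val_card_univ {n : ℕ} (p : ℕ → Prop) [DecidablePred p] :
    ((Finset.univ : Finset (Fin n)).filter (fun i => p i.val)).card
      = ((Finset.Iio n).filter p).card := by
  rw [← Fin.map_valEmbedding_univ, Finset.filter_map, Finset.card_map]
  rfl

private lemma arith_step1 (A B C S : ℕ)
    (hk1 : (min (S+1) A - S) + (min (S+1) (A+B+C) - max S (A+B))
         ≤ (min (S+1) (A+B) - max S A) + ((S+1) - max S (A+B+C))) :
    (A ≤ S ∧ S < A+B) ∨ A+B+C ≤ S := by omega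

private lemma arith_step2 (A B C S E : ℕ) (hse : S ≤ E) (hS : A+B+C ≤ S)
    (hbal : (min (E+1) (A+B) - max S A) + ((E+1) - max S (A+B+C))
          = (min (E+1) A - S) + (min (E+1) (A+B+C) - max S (A+B))) : False := by omega

private lemma arith_step3 (A B C S E : ℕ) (h1 : A ≤ S) (h2 : S < A+B) (hcase : A+B+C ≤ E)
    (hk2 : (min (A+B+C-1+1) A - S) + (min (A+B+C-1+1) (A+B+C) - max S (A+B))
         ≤ (min (A+B+C-1+1) (A+B) - max S A) + ((A+B+C-1+1) - max S (A+B+C)))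
    (hbal : (min (E+1) (A+B) - max S A) + ((E+1) - max S (A+B+C))
          = (min (E+1) A - S) + (min (E+1) (A+B+C) - max S (A+B))) : False := by omega

private lemma arith_step4 (A B C m S E : ℕ) (h1 : A ≤ S) (h2 : S < A+B) (hE : E < A+B+C)
    (hse : S ≤ E) (hmB : m ≤ B) (hmC : m ≤ C) (hm : B = m ∨ C = m)
    (hbal : (min (E+1) (A+B) - max S A) + ((E+1) - max S (A+B+C))
          = (min (E+1) A - S) + (min (E+1) (A+B+C) - max S (A+B))) :
    A+B-m ≤ S ∧ E < A+B+m := by omega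

private lemma arith_bal (A B C m : ℕ) (hmB : m ≤ B) (hmC : m ≤ C) (hm1 : 1 ≤ m) :
    (min (A+B+m-1+1) (A+B) - max (A+B-m) A) + ((A+B+m-1+1) - max (A+B-m) (A+B+C))
      = (min (A+B+m-1+1) A - (A+B-m))
        + (min (A+B+m-1+1) (A+B+C) - max (A+B-m) (A+B)) := by omega

private lemma arith_pre (A B C m K : ℕ) (hmB : m ≤ B) (hmC : m ≤ C) (hm1 : 1 ≤ m)
    (hk1 : A+B-m ≤ K) (hk2 : K ≤ A+B+m-1) :
    (min (K+1) A - (A+B-m)) + (min (K+1) (A+B+C) - max (A+B-m) (A+B))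
      ≤ (min (K+1) (A+B) - max (A+B-m) A) + ((K+1) - max (A+B-m) (A+B+C)) := by omega

variable {n A B C m : ℕ} {x : Fin n → Bool}

private lemma numTrue_Icc
    (hx : ∀ i : Fin n, x i = true ↔ (A ≤ (i:ℕ) ∧ (i:ℕ) < A+B) ∨ A+B+C ≤ (i:ℕ))
    (s e : Fin n) :
    numTrue (Finset.Icc s e) x =
      (min ((e:ℕ)+1) (A+B) - max (s:ℕ) A) + (((e:ℕ)+1) - max (s:ℕ) (A+B+C)) := by
  classical
  unfold numTrue
  rw [Finset.filter_congr (fun i _ => hx i)]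
  rw [filter_val_card_Icc s e (fun v => (A ≤ v ∧ v < A+B) ∨ A+B+C ≤ v)]
  have e1 : (Finset.Icc (s:ℕ) (e:ℕ)).filter (fun v => A ≤ v ∧ v < A+B)
      = Finset.Ico (max (s:ℕ) A) (min ((e:ℕ)+1) (A+B)) := by
    ext v; simp only [Finset.mem_filter, Finset.mem_Icc, Finset.mem_Ico]; omega
  have e2 : (Finset.Icc (s:ℕ) (e:ℕ)).filter (fun v => A+B+C ≤ v)
      = Finset.Ico (max (s:ℕ) (A+B+C)) ((e:ℕ)+1) := by
    ext v; simp only [Finset.mem_filter, Finset.mem_Icc, Finset.mem_Ico]; omega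
  rw [Finset.filter_or, Finset.card_union_of_disjoint (by
      rw [Finset.disjoint_left]; intro v hv hw
      simp only [Finset.mem_filter] at hv hw; omega), e1, e2, Nat.card_Ico, Nat.card_Ico]

private lemma x_false_iff
    (hx : ∀ i : Fin n, x i = true ↔ (A ≤ (i:ℕ) ∧ (i:ℕ) < A+B) ∨ A+B+C ≤ (i:ℕ))
    (i : Fin n) :
    x i = false ↔ ((i:ℕ) < A ∨ (A+B ≤ (i:ℕ) ∧ (i:ℕ) < A+B+C)) := by
  rw [Bool.eq_false_iff, Ne, hx i]; omega

private lemma numFalse_Icc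
    (hx : ∀ i : Fin n, x i = true ↔ (A ≤ (i:ℕ) ∧ (i:ℕ) < A+B) ∨ A+B+C ≤ (i:ℕ))
    (s e : Fin n) :
    numFalse (Finset.Icc s e) x =
      (min ((e:ℕ)+1) A - (s:ℕ)) + (min ((e:ℕ)+1) (A+B+C) - max (s:ℕ) (A+B)) := by
  classical
  unfold numFalse
  rw [Finset.filter_congr (fun i _ => x_false_iff hx i)]
  rw [filter_val_card_Icc s e (fun v => v < A ∨ (A+B ≤ v ∧ v < A+B+C))]
  have e1 : (Finset.Icc (s:ℕ) (e:ℕ)).filter (fun v => v < A)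
      = Finset.Ico (s:ℕ) (min ((e:ℕ)+1) A) := by
    ext v; simp only [Finset.mem_filter, Finset.mem_Icc, Finset.mem_Ico]; omega
  have e2 : (Finset.Icc (s:ℕ) (e:ℕ)).filter (fun v => A+B ≤ v ∧ v < A+B+C)
      = Finset.Ico (max (s:ℕ) (A+B)) (min ((e:ℕ)+1) (A+B+C)) := by
    ext v; simp only [Finset.mem_filter, Finset.mem_Icc, Finset.mem_Ico]; omega
  rw [Finset.filter_or, Finset.card_union_of_disjoint (by
      rw [Finset.disjoint_left]; intro v hv hw
      simp only [Finset.mem_filter] at hv hw; omega), e1, e2, Nat.card_Ico, Nat.card_Ico]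

private lemma marked_iff (hn : A+B+C ≤ n) (hmB : m ≤ B) (hmC : m ≤ C) (hm : B = m ∨ C = m)
    (hx : ∀ i : Fin n, x i = true ↔ (A ≤ (i:ℕ) ∧ (i:ℕ) < A+B) ∨ A+B+C ≤ (i:ℕ))
    (i : Fin n) :
    Marked x i ↔ (A+B-m ≤ (i:ℕ) ∧ (i:ℕ) < A+B+m) := by
  constructor
  · rintro ⟨s, e, hsi, hie, hbal, hpre⟩
    rw [numTrue_Icc hx, numFalse_Icc hx] at hbal
    have hse : s ≤ e := le_trans hsi hie
    have hk1 := hpre s le_rfl hse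
    rw [numTrue_Icc hx, numFalse_Icc hx] at hk1
    rw [Fin.le_def] at hsi hie hse
    have hE := e.isLt
    have hS : (A ≤ (s:ℕ) ∧ (s:ℕ) < A+B) ∨ A+B+C ≤ (s:ℕ) := arith_step1 A B C (s:ℕ) hk1
    rcases hS with ⟨hS1, hS2⟩ | hS
    · by_cases hcase : A+B+C ≤ (e:ℕ)
      · exfalso
        have hABC1 : A+B+C-1 < n := by omega
        have hs1 : s ≤ (⟨A+B+C-1, hABC1⟩ : Fin n) :=
          Fin.le_def.mpr (show (s:ℕ) ≤ A+B+C-1 by omega)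
        have hs2 : (⟨A+B+C-1, hABC1⟩ : Fin n) ≤ e :=
          Fin.le_def.mpr (show A+B+C-1 ≤ (e:ℕ) by omega)
        have hk2 := hpre ⟨A+B+C-1, hABC1⟩ hs1 hs2
        rw [numTrue_Icc hx, numFalse_Icc hx] at hk2
        simp only [Fin.val_mk] at hk2
        exact arith_step3 A B C (s:ℕ) (e:ℕ) hS1 hS2 hcase hk2 hbal
      · have := arith_step4 A B C m (s:ℕ) (e:ℕ) hS1 hS2 (by omega) hse hmB hmC hm hbal
        omega
    · exact absurd hbal (fun hb => arith_step2 A B C (s:ℕ) (e:ℕ) hse hS hb)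
  · rintro ⟨h1, h2⟩
    have hm1 : 1 ≤ m := by omega
    have hI := i.isLt
    have hb1 : A+B-m < n := by omega
    have hb2 : A+B+m-1 < n := by omega
    refine ⟨⟨A+B-m, hb1⟩, ⟨A+B+m-1, hb2⟩,
      Fin.le_def.mpr (show A+B-m ≤ (i:ℕ) by omega),
      Fin.le_def.mpr (show (i:ℕ) ≤ A+B+m-1 by omega), ?_, ?_⟩
    · rw [numTrue_Icc hx, numFalse_Icc hx]
      simp only [Fin.val_mk]
      exact arith_bal A B C m hmB hmC hm1
    · intro k hsk hke
      rw [numTrue_Icc hx, numFalse_Icc hx]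
      rw [Fin.le_def] at hsk hke
      simp only [Fin.val_mk] at hsk hke ⊢
      exact arith_pre A B C m (k:ℕ) hmB hmC hm1 hsk hke

private lemma unmarkedZeros_eq (hn : A+B+C ≤ n) (hmB : m ≤ B) (hmC : m ≤ C)
    (hm : B = m ∨ C = m)
    (hx : ∀ i : Fin n, x i = true ↔ (A ≤ (i:ℕ) ∧ (i:ℕ) < A+B) ∨ A+B+C ≤ (i:ℕ)) :
    unmarkedZeros x = A + (C - m) := by
  classical
  unfold unmarkedZeros
  rw [Finset.filter_congr (q := fun i : Fin n =>
      (¬ (A+B-m ≤ (i:ℕ) ∧ (i:ℕ) < A+B+m)) ∧ ((i:ℕ) < A ∨ (A+B ≤ (i:ℕ) ∧ (i:ℕ) < A+B+C)))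
      (fun i _ => by rw [marked_iff hn hmB hmC hm hx i, x_false_iff hx i])]
  rw [filter_val_card_univ (fun v => (¬ (A+B-m ≤ v ∧ v < A+B+m)) ∧ (v < A ∨ (A+B ≤ v ∧ v < A+B+C)))]
  have e1 : (Finset.Iio n).filter
      (fun v => (¬ (A+B-m ≤ v ∧ v < A+B+m)) ∧ (v < A ∨ (A+B ≤ v ∧ v < A+B+C)))
      = Finset.Ico 0 A ∪ Finset.Ico (A+B+m) (A+B+C) := by
    ext v
    simp only [Finset.mem_filter, Finset.mem_Iio, Finset.mem_union, Finset.mem_Ico]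
    omega
  rw [e1, Finset.card_union_of_disjoint (by
      rw [Finset.disjoint_left]; intro v hv hw
      simp only [Finset.mem_Ico] at hv hw; omega), Nat.card_Ico, Nat.card_Ico]
  omega

private lemma urank_lo (hn : A+B+C ≤ n) (hmB : m ≤ B) (hmC : m ≤ C) (hm : B = m ∨ C = m)
    (hx : ∀ i : Fin n, x i = true ↔ (A ≤ (i:ℕ) ∧ (i:ℕ) < A+B) ∨ A+B+C ≤ (i:ℕ))
    (i : Fin n) (hi : (i:ℕ) < A+B-m) :
    urank x i = (i:ℕ) + 1 := by
  classical
  unfold urank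
  rw [Finset.filter_congr (q := fun j : Fin n =>
      (¬ (A+B-m ≤ (j:ℕ) ∧ (j:ℕ) < A+B+m)) ∧ (j:ℕ) ≤ (i:ℕ))
      (fun j _ => by rw [marked_iff hn hmB hmC hm hx j, Fin.le_def])]
  rw [filter_val_card_univ (fun v => (¬ (A+B-m ≤ v ∧ v < A+B+m)) ∧ v ≤ (i:ℕ))]
  have hI := i.isLt
  have e1 : (Finset.Iio n).filter (fun v => (¬ (A+B-m ≤ v ∧ v < A+B+m)) ∧ v ≤ (i:ℕ))
      = Finset.Ico 0 ((i:ℕ)+1) := by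
    ext v
    simp only [Finset.mem_filter, Finset.mem_Iio, Finset.mem_Ico]
    omega
  rw [e1, Nat.card_Ico]
  omega

private lemma urank_hi (hn : A+B+C ≤ n) (hmB : m ≤ B) (hmC : m ≤ C) (hm : B = m ∨ C = m)
    (hx : ∀ i : Fin n, x i = true ↔ (A ≤ (i:ℕ) ∧ (i:ℕ) < A+B) ∨ A+B+C ≤ (i:ℕ))
    (i : Fin n) (hi : A+B+m ≤ (i:ℕ)) :
    urank x i = (i:ℕ) + 1 - 2*m := by
  classical
  unfold urank
  rw [Finset.filter_congr (q := fun j : Fin n =>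
      (¬ (A+B-m ≤ (j:ℕ) ∧ (j:ℕ) < A+B+m)) ∧ (j:ℕ) ≤ (i:ℕ))
      (fun j _ => by rw [marked_iff hn hmB hmC hm hx j, Fin.le_def])]
  rw [filter_val_card_univ (fun v => (¬ (A+B-m ≤ v ∧ v < A+B+m)) ∧ v ≤ (i:ℕ))]
  have hI := i.isLt
  have e1 : (Finset.Iio n).filter (fun v => (¬ (A+B-m ≤ v ∧ v < A+B+m)) ∧ v ≤ (i:ℕ))
      = Finset.Ico 0 (A+B-m) ∪ Finset.Ico (A+B+m) ((i:ℕ)+1) := by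
    ext v
    simp only [Finset.mem_filter, Finset.mem_Iio, Finset.mem_union, Finset.mem_Ico]
    omega
  rw [e1, Finset.card_union_of_disjoint (by
      rw [Finset.disjoint_left]; intro v hv hw
      simp only [Finset.mem_Ico] at hv hw; omega), Nat.card_Ico, Nat.card_Ico]
  omega

private lemma bool_ne_iff {b1 b2 : Bool} {P Q : Prop}
    (h1 : b1 = false ↔ P) (h2 : b2 = false ↔ Q) (hne : b1 ≠ b2) : ¬ (P ↔ Q) := by
  intro hpq
  apply hne
  rcases b1 <;> rcases b2 <;> simp_all

/-- The explicit arithmetic description of when `psi x i = false`. -/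
def PF (A B C m N v : ℕ) : Prop :=
  (v < N ∧ ((A+B ≤ v ∧ v < A+B+m)
      ∨ (v < A+B-m ∧ v+1 ≤ (A+(C-m))/2)
      ∨ (A+B+m ≤ v ∧ v+1-2*m ≤ (A+(C-m))/2)))
  ∨ (v = N ∧ (A+(C-m)) % 2 = 1)

private lemma psi_false_iff (hn : A+B+C ≤ n) (hmB : m ≤ B) (hmC : m ≤ C) (hm : B = m ∨ C = m)
    (hx : ∀ i : Fin n, x i = true ↔ (A ≤ (i:ℕ) ∧ (i:ℕ) < A+B) ∨ A+B+C ≤ (i:ℕ))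
    (i : Fin (n+1)) :
    psi x i = false ↔ PF A B C m n (i:ℕ) := by
  classical
  unfold PF
  have hI := i.isLt
  by_cases h : (i:ℕ) < n
  · have hval : psi x i = (if Marked x ⟨(i:ℕ), h⟩ then x ⟨(i:ℕ), h⟩
        else if urank x ⟨(i:ℕ), h⟩ ≤ unmarkedZeros x / 2 then false else true) := by
      simp only [psi]
      rw [dif_pos h]
    rw [hval]
    by_cases hM : Marked x ⟨(i:ℕ), h⟩
    · rw [if_pos hM]
      have hr : A+B-m ≤ (i:ℕ) ∧ (i:ℕ) < A+B+m := (marked_iff hn hmB hmC hm hx _).mp hM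
      have hz : x ⟨(i:ℕ), h⟩ = false ↔ ((i:ℕ) < A ∨ (A+B ≤ (i:ℕ) ∧ (i:ℕ) < A+B+C)) :=
        x_false_iff hx ⟨(i:ℕ), h⟩
      rw [hz]
      omega
    · rw [if_neg hM]
      have hr : (i:ℕ) < A+B-m ∨ A+B+m ≤ (i:ℕ) := by
        have h2 : ¬ (A+B-m ≤ (i:ℕ) ∧ (i:ℕ) < A+B+m) := fun hc => hM
          ((marked_iff hn hmB hmC hm hx ⟨(i:ℕ), h⟩).mpr hc)
        omega
      rcases hr with hr | hr
      · have hu : urank x ⟨(i:ℕ), h⟩ = (i:ℕ) + 1 := urank_lo hn hmB hmC hm hx _ hr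
        rw [hu, unmarkedZeros_eq hn hmB hmC hm hx]
        split_ifs with hc <;> simp <;> omega
      · have hu : urank x ⟨(i:ℕ), h⟩ = (i:ℕ) + 1 - 2*m := urank_hi hn hmB hmC hm hx _ hr
        rw [hu, unmarkedZeros_eq hn hmB hmC hm hx]
        split_ifs with hc <;> simp <;> omega
  · have hval : psi x i = decide (unmarkedZeros x % 2 = 0) := by
      simp only [psi]
      rw [dif_neg h]
    rw [hval, unmarkedZeros_eq hn hmB hmC hm hx, decide_eq_false_iff_not]
    omega

end Aux

/-- For all `a, b, c, d`, the images under `ψ` of `0^a 1^b ∘ 0 ∘ 0^c 1^d` and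
`0^a 1^b ∘ 1 ∘ 0^c 1^d` are at Hamming distance at most 4. -/
theorem psi_dist_le_four (a b c d : ℕ) :
    hammingDist (psi (str a b c d false)) (psi (str a b c d true)) ≤ 4 := by
  classical
  have hx0 : ∀ i : Fin (a+b+1+c+d), str a b c d false i = true ↔
      (a ≤ (i:ℕ) ∧ (i:ℕ) < a+b) ∨ a+b+(c+1) ≤ (i:ℕ) := by
    intro i; have hI := i.isLt; unfold str; split_ifs <;> simp <;> omega
  have hx1 : ∀ i : Fin (a+b+1+c+d), str a b c d true i = true ↔
      (a ≤ (i:ℕ) ∧ (i:ℕ) < a+(b+1)) ∨ a+(b+1)+c ≤ (i:ℕ) := by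
    intro i; have hI := i.isLt; unfold str; split_ifs <;> simp <;> omega
  have hn0 : a + b + (c+1) ≤ a+b+1+c+d := by omega
  have hn1 : a + (b+1) + c ≤ a+b+1+c+d := by omega
  suffices h : ∃ p1 p2 p3 p4 : ℕ, ∀ i : Fin (a+b+1+c+d+1),
      psi (str a b c d false) i ≠ psi (str a b c d true) i →
      ((i:ℕ) = p1 ∨ (i:ℕ) = p2 ∨ (i:ℕ) = p3 ∨ (i:ℕ) = p4) by
    obtain ⟨p1, p2, p3, p4, hp⟩ := h
    have heq : hammingDist (psi (str a b c d false)) (psi (str a b c d true))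
        = (Finset.univ.filter fun i =>
            psi (str a b c d false) i ≠ psi (str a b c d true) i).card := rfl
    rw [heq]
    refine le_trans (Finset.card_le_card_of_injOn (fun i => (i:ℕ))
      (t := {p1, p2, p3, p4}) ?_ ?_) ?_
    · intro i hi
      simp only [Finset.coe_filter, Finset.mem_coe, Set.mem_setOf_eq, Finset.mem_filter] at hi
      simp only [Finset.mem_coe, Finset.mem_insert, Finset.mem_singleton]
      exact hp i hi.2
    · exact fun i _ j _ hij => Fin.val_injective hij
    · refine le_trans (Finset.card_insert_le _ _) ?_
      refine le_trans (Nat.add_le_add_right (Finset.card_insert_le _ _) 1) ?_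
      refine le_trans (Nat.add_le_add_right (Nat.add_le_add_right (Finset.card_insert_le _ _) 1) 1) ?_
      simp
  by_cases hA : c + 1 ≤ b
  · refine ⟨a+b, a+b, a+b, a+b, ?_⟩
    intro i hi
    have h0 := psi_false_iff (A := a) (B := b) (C := c+1) (m := c+1)
      hn0 hA le_rfl (Or.inr rfl) hx0 i
    have h1 := psi_false_iff (A := a) (B := b+1) (C := c) (m := c)
      hn1 (by omega) le_rfl (Or.inr rfl) hx1 i
    have key : ¬ (PF a b (c+1) (c+1) (a+b+1+c+d) (i:ℕ) ↔ PF a (b+1) c c (a+b+1+c+d) (i:ℕ)) := bool_ne_iff h0 h1 hi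
    simp only [PF] at key
    have hlt := i.isLt
    omega
  · by_cases hB : b + 1 ≤ c
    · by_cases hB2 : (a + ((c+1) - b))/2 ≤ a
      · refine ⟨(a + ((c+1) - b))/2 - 1, a+b, a+2*b, a+2*b+1, ?_⟩
        intro i hi
        have h0 := psi_false_iff (A := a) (B := b) (C := c+1) (m := b)
          hn0 le_rfl (by omega) (Or.inl rfl) hx0 i
        have h1 := psi_false_iff (A := a) (B := b+1) (C := c) (m := b+1)
          hn1 le_rfl (by omega) (Or.inl rfl) hx1 i
        have key : ¬ (PF a b (c+1) b (a+b+1+c+d) (i:ℕ) ↔ PF a (b+1) c (b+1) (a+b+1+c+d) (i:ℕ)) := bool_ne_iff h0 h1 hi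
        simp only [PF] at key
        have hlt := i.isLt
        omega
      · refine ⟨a+b, a+2*b+1, 2*b + (a + ((c+1) - b))/2, a+b, ?_⟩
        intro i hi
        have h0 := psi_false_iff (A := a) (B := b) (C := c+1) (m := b)
          hn0 le_rfl (by omega) (Or.inl rfl) hx0 i
        have h1 := psi_false_iff (A := a) (B := b+1) (C := c) (m := b+1)
          hn1 le_rfl (by omega) (Or.inl rfl) hx1 i
        have key : ¬ (PF a b (c+1) b (a+b+1+c+d) (i:ℕ) ↔ PF a (b+1) c (b+1) (a+b+1+c+d) (i:ℕ)) := bool_ne_iff h0 h1 hi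
        simp only [PF] at key
        have hlt := i.isLt
        omega
    · -- b = c
      refine ⟨(a+1)/2 - 1, a+b, a+2*b, a+b+1+c+d, ?_⟩
      intro i hi
      have h0 := psi_false_iff (A := a) (B := b) (C := c+1) (m := b)
        hn0 le_rfl (by omega) (Or.inl rfl) hx0 i
      have h1 := psi_false_iff (A := a) (B := b+1) (C := c) (m := c)
        hn1 (by omega) le_rfl (Or.inr rfl) hx1 i
      have key : ¬ (PF a b (c+1) b (a+b+1+c+d) (i:ℕ) ↔ PF a (b+1) c c (a+b+1+c+d) (i:ℕ)) := by
        intro hpq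
        apply hi
        cases hb0 : psi (str a b c d false) i <;> cases hb1 : psi (str a b c d true) i <;>
          simp_all
      simp only [PF] at key
      have hlt := i.isLt
      omega
end
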